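/- arXiv:2410.15167 — 8 statements merged into one kernel-verified Lean document; each statement's English description precedes it below -/
import Mathlib

section
/- The multiplication map Γ ⊗ Λ^{[2]} → Λ is an algebra isomorphism, where Γ is the subalgebra of symmetric functions generated by the odd q-functions q_1, q_3, q_5, … and Λ^{[2]} is the subalgebra generated by the e_r^{[2]}. In particular the elements e_r^{[2]} (r ≥ 1) are algebraically independent. -/
open MvPolynomial

/-- The ring of symmetric functions over `k`, modelled as the polynomial ring on the
(algebraically independent) elementary symmetric functions: `symE k r` is `e_r`,
with `e_0 = 1` and `e_r = X (r-1)` for `r ≥ 1`. -/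
noncomputable def symE (k : Type*) [Field k] : ℕ → MvPolynomial ℕ k :=
  fun r => if r = 0 then 1 else X (r - 1)

/-!
Modulo polynomials in `e_1, …, e_{n-1}`, the complete function `h_n` is `±e_n`, so
`q_{2r+1} ≡ 2 e_{2r+1}` and `e^{[2]}_{r+1} ≡ ±2 e_{2r+2}`. Since `2` is invertible, the
substitution sending `e_{2r+1} ↦ q_{2r+1}` and `e_{2r+2} ↦ e^{[2]}_{r+1}` is triangular with
unit diagonal, hence an automorphism of `Λ = k[e_1, e_2, …]`. Its source splits as the
tensor product of the polynomial rings on the odd and on the even generators.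
-/

namespace MvPolynomial

variable {R : Type*} [CommRing R]

theorem aeval_eq_of_mem_supported {S σ : Type*} [CommRing S] [Algebra R S] {s : Set σ}
    {p : MvPolynomial σ R} (hp : p ∈ supported R s) {f g : σ → S}
    (hfg : ∀ i ∈ s, f i = g i) : aeval f p = aeval g p := by
  rw [supported_eq_range_rename] at hp
  obtain ⟨p, rfl⟩ := (AlgHom.mem_range _).mp hp
  rw [aeval_rename, aeval_rename]
  congr 2
  funext i
  exact hfg i i.2

/-- Inverse of a triangular substitution `X n ↦ G n = c n • X n + (terms in X m, m < n)`. -/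
noncomputable def triangularInv (G : ℕ → MvPolynomial ℕ R) (c : ℕ → R) :
    ℕ → MvPolynomial ℕ R
  | n => C (Ring.inverse (c n)) *
      (X n - aeval (fun m => if _ : m < n then triangularInv G c m else 0) (G n - C (c n) * X n))

theorem aeval_triangularInv {G : ℕ → MvPolynomial ℕ R} {c : ℕ → R} (hc : ∀ n, IsUnit (c n))
    (hG : ∀ n, G n - C (c n) * X n ∈ supported R (Set.Iio n)) (n : ℕ) :
    aeval (triangularInv G c) (G n) = X n := by
  have hlow : aeval (fun m => if _ : m < n then triangularInv G c m else 0)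
      (G n - C (c n) * X n) = aeval (triangularInv G c) (G n - C (c n) * X n) :=
    aeval_eq_of_mem_supported (hG n) fun m hm => dif_pos hm
  rw [← sub_add_cancel (G n) (C (c n) * X n), map_add, ← hlow, map_mul, aeval_C, aeval_X,
    triangularInv, algebraMap_eq, ← mul_assoc, ← C_mul, Ring.mul_inverse_cancel _ (hc n), C_1,
    one_mul, add_sub_cancel]

theorem X_mem_range_aeval_of_triangular {G : ℕ → MvPolynomial ℕ R} {c : ℕ → R}
    (hc : ∀ n, IsUnit (c n)) (hG : ∀ n, G n - C (c n) * X n ∈ supported R (Set.Iio n))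
    (n : ℕ) : X n ∈ (aeval G : MvPolynomial ℕ R →ₐ[R] MvPolynomial ℕ R).range := by
  set φ : MvPolynomial ℕ R →ₐ[R] MvPolynomial ℕ R := aeval G
  induction n using Nat.strong_induction_on with
  | _ n ih =>
    have hlow : supported R (Set.Iio n) ≤ φ.range :=
      Algebra.adjoin_le (by rintro _ ⟨m, hm, rfl⟩; exact ih m hm)
    have hlead : C (c n) * X n ∈ φ.range := by
      rw [← sub_sub_cancel (G n) (C (c n) * X n)]
      exact sub_mem ⟨X n, aeval_X G n⟩ (hlow (hG n))
    have := mul_mem (algebraMap_mem φ.range (Ring.inverse (c n))) hlead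
    rwa [algebraMap_eq, ← mul_assoc, ← C_mul, Ring.inverse_mul_cancel _ (hc n), C_1,
      one_mul] at this

theorem bijective_aeval_of_triangular {G : ℕ → MvPolynomial ℕ R} {c : ℕ → R}
    (hc : ∀ n, IsUnit (c n)) (hG : ∀ n, G n - C (c n) * X n ∈ supported R (Set.Iio n)) :
    Function.Bijective (aeval G : MvPolynomial ℕ R →ₐ[R] MvPolynomial ℕ R) := by
  have hinv : (aeval (triangularInv G c)).comp (aeval G) = AlgHom.id R (MvPolynomial ℕ R) :=
    algHom_ext fun n => by
      rw [AlgHom.comp_apply, aeval_X, aeval_triangularInv hc hG, AlgHom.id_apply]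
  refine ⟨fun p q hpq => ?_, ?_⟩
  · simpa only [← AlgHom.comp_apply, hinv, AlgHom.id_apply]
      using congrArg (aeval (triangularInv G c)) hpq
  · rw [← AlgHom.range_eq_top, eq_top_iff, ← adjoin_range_X]
    exact Algebra.adjoin_le (by rintro _ ⟨n, rfl⟩; exact X_mem_range_aeval_of_triangular hc hG n)

theorem bijective_aeval_of_triangular_equiv {ι : Type*} (e : ι ≃ ℕ)
    {F : ι → MvPolynomial ℕ R}
    (hF : ∀ i, ∃ c, IsUnit c ∧ F i - C c * X (e i) ∈ supported R (Set.Iio (e i))) :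
    Function.Bijective (aeval F : MvPolynomial ι R →ₐ[R] MvPolynomial ℕ R) := by
  choose c hc hcF using hF
  have hG : ∀ n, F (e.symm n) - C (c (e.symm n)) * X n ∈ supported R (Set.Iio n) :=
    fun n => by simpa using hcF (e.symm n)
  have hFe : (aeval F : MvPolynomial ι R →ₐ[R] MvPolynomial ℕ R)
      = (aeval (F ∘ e.symm)).comp (rename e) := by
    ext i; simp
  rw [hFe, AlgHom.coe_comp]
  exact (bijective_aeval_of_triangular (fun n => hc _) hG).comp (renameEquiv R e).bijective

theorem sum_mul_sub_ends_mem_supported {a b : ℕ → MvPolynomial ℕ R} {m : ℕ}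
    (ha0 : a 0 = 1) (hb0 : b 0 = 1) (ha : ∀ i ≤ m, a i ∈ supported R (Set.Iio i))
    (hb : ∀ j ≤ m, b j ∈ supported R (Set.Iio j)) :
    ∑ i ∈ Finset.range (m + 2), a i * b (m + 1 - i) - (a (m + 1) + b (m + 1))
      ∈ supported R (Set.Iio m) := by
  rw [Finset.sum_range_succ, Finset.sum_range_succ', Nat.sub_self, Nat.sub_zero, ha0, hb0,
    one_mul, mul_one, add_comm (a (m + 1)), add_sub_add_right_eq_sub, add_sub_cancel_right]
  refine Subalgebra.sum_mem _ fun i hi => mul_mem ?_ ?_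
  · have hi : i + 1 ≤ m := Finset.mem_range.mp hi
    exact supported_mono (Set.Iio_subset_Iio hi) (ha _ hi)
  · have hi : m + 1 - (i + 1) ≤ m := by omega
    exact supported_mono (Set.Iio_subset_Iio hi) (hb _ hi)

end MvPolynomial

open Algebra.TensorProduct in
theorem Algebra.TensorProduct.bijective_productMap_adjoin_of_bijective_aeval_sumElim
    {R S ι κ : Type*} [CommRing R] [CommRing S] [Algebra R S] {A : ι → S} {B : κ → S}
    (h : Function.Bijective (aeval (Sum.elim A B) : MvPolynomial (ι ⊕ κ) R →ₐ[R] S)) :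
    Function.Bijective
      (productMap (Algebra.adjoin R (Set.range A)).val (Algebra.adjoin R (Set.range B)).val) := by
  have hAB : AlgebraicIndependent R (Sum.elim A B) :=
    algebraicIndependent_iff_injective_aeval.2 h.1
  have hA : AlgebraicIndependent R A := hAB.comp Sum.inl Sum.inl_injective
  have hB : AlgebraicIndependent R B := hAB.comp Sum.inr Sum.inr_injective
  have hcomm :
      (productMap (Algebra.adjoin R (Set.range A)).val (Algebra.adjoin R (Set.range B)).val).comp
        (congr hA.aevalEquiv hB.aevalEquiv).toAlgHom
      = (aeval (Sum.elim A B)).comp (tensorEquivSum R ι κ R).toAlgHom := by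
    ext i <;> simp
  rw [← Function.Bijective.of_comp_iff _ (congr hA.aevalEquiv hB.aevalEquiv).bijective]
  convert h.comp (tensorEquivSum R ι κ R).bijective using 1
  exact funext (AlgHom.congr_fun hcomm)

section SymmetricFunctions

variable {k : Type*} [Field k]

theorem symE_zero : symE k 0 = 1 := if_pos rfl

theorem symE_succ (i : ℕ) : symE k (i + 1) = X i := by simp [symE]

theorem symE_mem_supported (i : ℕ) : symE k i ∈ supported k (Set.Iio i) := by
  cases i with
  | zero => exact symE_zero (k := k) ▸ one_mem _
  | succ i => exact symE_succ (k := k) i ▸ X_mem_supported.mpr i.lt_succ_self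

theorem neg_one_pow_mul_symE_mem_supported (i : ℕ) :
    (-1) ^ i * symE k i ∈ supported k (Set.Iio i) :=
  mul_mem (pow_mem (neg_mem (one_mem _)) i) (symE_mem_supported i)

theorem esq_succ_sub_mem_supported {esq : ℕ → MvPolynomial ℕ k}
    (hesq : ∀ r : ℕ,
      (PowerSeries.coeff (R := MvPolynomial ℕ k) (2 * r))
          (PowerSeries.mk (symE k) *
            PowerSeries.mk fun s => (-1 : MvPolynomial ℕ k) ^ s * symE k s) =
        (-1 : MvPolynomial ℕ k) ^ r * esq r) (r : ℕ) :
    esq (r + 1) - C ((-1) ^ (r + 1) * 2) * X (2 * r + 1)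
      ∈ supported k (Set.Iio (2 * r + 1)) := by
  have hsum := sum_mul_sub_ends_mem_supported (m := 2 * r + 1) (symE_zero (k := k))
    (by simp [symE_zero]) (fun i _ => symE_mem_supported i)
    fun j _ => neg_one_pow_mul_symE_mem_supported j
  have hcoeff : ∑ i ∈ Finset.range (2 * r + 1 + 2),
      symE k i * ((-1) ^ (2 * r + 1 + 1 - i) * symE k (2 * r + 1 + 1 - i))
      = (-1) ^ (r + 1) * esq (r + 1) := by
    rw [← hesq, PowerSeries.coeff_mul]
    simp only [PowerSeries.coeff_mk]
    exact (Finset.Nat.sum_antidiagonal_eq_sum_range_succ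
      (fun i j => symE k i * ((-1) ^ j * symE k j)) _).symm
  have heven : (-1 : MvPolynomial ℕ k) ^ (2 * r + 1 + 1) = 1 :=
    Even.neg_one_pow ⟨r + 1, by ring⟩
  convert mul_mem (pow_mem (neg_mem (one_mem _)) (r + 1)) hsum using 1
  rw [hcoeff, symE_succ, map_mul, map_pow, map_neg, map_one, map_ofNat]
  linear_combination ((-1) ^ (r + 1) * X (2 * r + 1) - esq (r + 1)) * heven

variable {h : ℕ → MvPolynomial ℕ k} (hh0 : h 0 = 1)
  (hhe : ∀ m : ℕ, ∑ i ∈ Finset.range (m + 2),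
    (-1 : MvPolynomial ℕ k) ^ i * symE k i * h (m + 1 - i) = 0)
include hh0 hhe

theorem complete_succ_sub_mem_supported_of_forall_le {m : ℕ}
    (hlow : ∀ j ≤ m, h j ∈ supported k (Set.Iio j)) :
    h (m + 1) - C ((-1) ^ m) * X m ∈ supported k (Set.Iio m) := by
  have hsum := sum_mul_sub_ends_mem_supported (a := fun i => (-1) ^ i * symE k i) (m := m)
    (by simp [symE_zero]) hh0 (fun i _ => neg_one_pow_mul_symE_mem_supported i) hlow
  convert neg_mem hsum using 1
  simp only [hhe m, symE_succ, map_pow, map_neg, map_one, pow_succ]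
  ring

theorem complete_mem_supported (n : ℕ) : h n ∈ supported k (Set.Iio n) := by
  induction n using Nat.strong_induction_on with
  | _ n ih =>
    cases n with
    | zero => exact hh0 ▸ one_mem _
    | succ m =>
      have hlead := complete_succ_sub_mem_supported_of_forall_le hh0 hhe
        fun j hj => ih j (Nat.lt_succ_of_le hj)
      rw [← sub_add_cancel (h (m + 1)) (C ((-1) ^ m) * X m)]
      exact add_mem (supported_mono (Set.Iio_subset_Iio m.le_succ) hlead)
        (mul_mem (algebraMap_mem _ _) (X_mem_supported.mpr m.lt_succ_self))

theorem schurQ_odd_sub_mem_supported {q : ℕ → MvPolynomial ℕ k}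
    (hq : ∀ r, q r = ∑ s ∈ Finset.range (r + 1), h s * symE k (r - s)) (r : ℕ) :
    q (2 * r + 1) - C 2 * X (2 * r) ∈ supported k (Set.Iio (2 * r)) := by
  have hlow : ∀ j ≤ 2 * r, h j ∈ supported k (Set.Iio j) :=
    fun j _ => complete_mem_supported hh0 hhe j
  have hsum := sum_mul_sub_ends_mem_supported hh0 symE_zero hlow fun j _ => symE_mem_supported j
  have hlead := complete_succ_sub_mem_supported_of_forall_le hh0 hhe hlow
  convert add_mem hsum hlead using 1
  rw [hq, (even_two_mul r).neg_one_pow, symE_succ, map_one, one_mul, map_ofNat]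
  ring

end SymmetricFunctions

/-- Let `k` be a field with `char k ≠ 2`, `Λ` the ring of symmetric functions,
`h` the complete symmetric functions (characterized by `e(-u)h(u)=1`),
`q r = Σ_{s=0}^r h_s e_{r-s}` Schur's q-functions, and `e_r^{[2]}` defined by
`e(u)e(-u) = Σ (-1)^r e_r^{[2]} u^{-2r}`.  Then the elements `e_r^{[2]}` (r ≥ 1) are
algebraically independent, and multiplication `Γ ⊗ Λ^{[2]} → Λ` is an algebra isomorphism,
where `Γ` is the subalgebra generated by the odd q-functions `q_1, q_3, …` and `Λ^{[2]}` is
the subalgebra generated by the `e_r^{[2]}` (r ≥ 1). -/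
theorem stmt4 (k : Type*) [Field k] (hk : ringChar k ≠ 2)
    (h q esq : ℕ → MvPolynomial ℕ k)
    (hh0 : h 0 = 1)
    (hhe : ∀ m : ℕ, ∑ i ∈ Finset.range (m + 2),
      (-1 : MvPolynomial ℕ k) ^ i * symE k i * h (m + 1 - i) = 0)
    (hq : ∀ r, q r = ∑ s ∈ Finset.range (r + 1), h s * symE k (r - s))
    (hesq : ∀ r : ℕ,
      (PowerSeries.coeff (R := MvPolynomial ℕ k) (2 * r))
          (PowerSeries.mk (symE k) *
            PowerSeries.mk fun s => (-1 : MvPolynomial ℕ k) ^ s * symE k s) =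
        (-1 : MvPolynomial ℕ k) ^ r * esq r) :
    AlgebraicIndependent k (fun r : ℕ => esq (r + 1)) ∧
      Function.Bijective
        (Algebra.TensorProduct.productMap
          (Algebra.adjoin k (Set.range fun r : ℕ => q (2 * r + 1))).val
          (Algebra.adjoin k (Set.range fun r : ℕ => esq (r + 1))).val) := by
  have h2 : IsUnit (2 : k) := (Ring.two_ne_zero hk).isUnit
  have htri : Function.Bijective (aeval (Sum.elim (fun r => q (2 * r + 1)) fun r => esq (r + 1)) :
      MvPolynomial (ℕ ⊕ ℕ) k →ₐ[k] MvPolynomial ℕ k) := by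
    refine bijective_aeval_of_triangular_equiv Equiv.natSumNatEquivNat ?_
    rintro (r | r) <;> simp only [Equiv.natSumNatEquivNat_apply, Sum.elim_inl, Sum.elim_inr]
    · exact ⟨2, h2, schurQ_odd_sub_mem_supported hh0 hhe hq r⟩
    · exact ⟨(-1) ^ (r + 1) * 2, (isUnit_neg_one.pow _).mul h2,
        esq_succ_sub_mem_supported hesq r⟩
  exact ⟨(algebraicIndependent_iff_injective_aeval.2 htri.1).comp Sum.inr Sum.inr_injective,
    Algebra.TensorProduct.bijective_productMap_adjoin_of_bijective_aeval_sumElim htri⟩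
end

section
/- For the Demazure operators ∂_i(f) = (f - s_i(f))/(x_{i+1} - x_i) on k[x_1,…,x_l] (where s_i swaps x_i and x_{i+1}), one has ∂_{l-1}···∂_2∂_1((-x_1)^r) = (-1)^{r-l+1} h_{r-l+1}(x_1,…,x_l), interpreted as 0 when r < l-1, where h_m denotes the complete homogeneous symmetric polynomial of degree m. -/
open MvPolynomial

/-- The `r`-th elementary symmetric polynomial in the variables `x_1, …, x_l`
(variables indexed `1, …, l` inside `k[x_i : i ∈ ℕ]`). -/
noncomputable def esymPoly (k : Type*) [Field k] (l r : ℕ) : MvPolynomial ℕ k :=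
  ∑ S ∈ (Finset.Icc 1 l).powersetCard r, ∏ i ∈ S, X i

section AuxSTMT5

open Finset

variable {k : Type*} [Field k]

/-- elementary symmetric polynomials of a list of variables -/
noncomputable def EE (k : Type*) [Field k] : List ℕ → ℕ → MvPolynomial ℕ k
  | _, 0 => 1
  | [], _ + 1 => 0
  | a :: L, r + 1 => EE k L (r + 1) + X a * EE k L r

/-- complete homogeneous symmetric polynomials of a list of variables -/
noncomputable def HH (k : Type*) [Field k] : List ℕ → ℕ → MvPolynomial ℕ k
  | _, 0 => 1
  | [], _ + 1 => 0
  | a :: L, m + 1 => HH k L (m + 1) + X a * HH k (a :: L) m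
termination_by L m => (L.length, m)

lemma EE_zero (L : List ℕ) : EE k L 0 = 1 := by cases L <;> rfl
lemma HH_zero (L : List ℕ) : HH k L 0 = 1 := by cases L <;> simp [HH]
lemma EE_nil (m : ℕ) : EE k [] (m + 1) = 0 := rfl
lemma HH_nil (m : ℕ) : HH k [] (m + 1) = 0 := by simp [HH]
lemma EE_cons (a : ℕ) (L : List ℕ) (r : ℕ) :
    EE k (a :: L) (r + 1) = EE k L (r + 1) + X a * EE k L r := rfl
lemma HH_cons (a : ℕ) (L : List ℕ) (m : ℕ) :
    HH k (a :: L) (m + 1) = HH k L (m + 1) + X a * HH k (a :: L) m := by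
  rw [HH]

lemma HH_single (a : ℕ) : ∀ m : ℕ, HH k [a] m = X a ^ m := by
  intro m; induction m with
  | zero => simp [HH_zero]
  | succ m ih => rw [HH_cons, HH_nil, ih, pow_succ]; ring

lemma HH_rename (f : ℕ → ℕ) : ∀ (L : List ℕ) (m : ℕ),
    rename f (HH k L m) = HH k (L.map f) m := by
  intro L
  induction L with
  | nil => intro m; cases m <;> simp [HH_zero, HH_nil]
  | cons a L ih =>
    intro m
    induction m with
    | zero => simp [HH_zero]
    | succ m ihm =>
      rw [HH_cons, map_add, map_mul, rename_X, ih, ihm, List.map_cons, HH_cons]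

lemma HH_swap (a b : ℕ) (L : List ℕ) : ∀ m : ℕ,
    HH k (a :: L) (m + 1) - HH k (b :: L) (m + 1)
      = (X a - X b) * HH k (a :: b :: L) m := by
  intro m; induction m with
  | zero => simp [HH_cons, HH_zero]
  | succ m ih =>
    rw [HH_cons a L, HH_cons b L]
    have h1 : X (R := k) a * HH k (a :: L) (m + 1) - X b * HH k (b :: L) (m + 1)
        = X a * (HH k (a :: L) (m + 1) - HH k (b :: L) (m + 1))
          + (X a - X b) * HH k (b :: L) (m + 1) := by ring
    have h2 : HH k (a :: b :: L) (m + 1)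
        = HH k (b :: L) (m + 1) + X a * HH k (a :: b :: L) m := HH_cons a (b :: L) m
    rw [show HH k L (m + 1 + 1) + X a * HH k (a :: L) (m + 1)
          - (HH k L (m + 1 + 1) + X b * HH k (b :: L) (m + 1))
        = X a * HH k (a :: L) (m + 1) - X b * HH k (b :: L) (m + 1) by ring, h1, ih, h2]
    ring

lemma HH_cons_sum (a : ℕ) (L : List ℕ) : ∀ m : ℕ,
    HH k (a :: L) m = ∑ j ∈ range (m + 1), X a ^ j * HH k L (m - j) := by
  intro m; induction m with
  | zero => simp [HH_zero]
  | succ m ih =>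
    rw [HH_cons, ih, Finset.sum_range_succ' (fun j => X (R := k) a ^ j * HH k L (m + 1 - j))]
    simp only [pow_zero, one_mul, Nat.sub_zero, Finset.mul_sum]
    rw [add_comm]
    congr 1
    apply Finset.sum_congr rfl
    intro j hj
    rw [pow_succ]
    have : m - j = m + 1 - (j + 1) := by omega
    rw [this]; ring

lemma sum_range_sub_eq (n j : ℕ) (hj : j ≤ n) (f : ℕ → MvPolynomial ℕ k) :
    ∑ i ∈ range (n + 1 - j), f i
      = ∑ i ∈ range (n + 1), if j + i ≤ n then f i else 0 := by
  rw [Finset.sum_ite, Finset.sum_const_zero, add_zero]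
  apply Finset.sum_congr
  · ext i; simp only [Finset.mem_filter, Finset.mem_range]; omega
  · intros; rfl

lemma HH_comm (a b : ℕ) (L : List ℕ) (m : ℕ) :
    HH k (a :: b :: L) m = HH k (b :: a :: L) m := by
  have key : ∀ x y : ℕ, HH k (x :: y :: L) m
      = ∑ i ∈ range (m + 1), ∑ j ∈ range (m + 1),
          if i + j ≤ m then X x ^ i * X y ^ j * HH k L (m - i - j) else 0 := by
    intro x y
    rw [HH_cons_sum]
    apply Finset.sum_congr rfl
    intro i hi
    have hi' : i ≤ m := Nat.lt_succ_iff.mp (Finset.mem_range.mp hi)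
    have hmi : m - i + 1 = m + 1 - i := by omega
    rw [HH_cons_sum, Finset.mul_sum, hmi,
      sum_range_sub_eq m i hi' (fun j => X x ^ i * (X y ^ j * HH k L (m - i - j)))]
    apply Finset.sum_congr rfl
    intro j hj
    split <;> [ring; simp]
  rw [key, key, Finset.sum_comm]
  apply Finset.sum_congr rfl; intro j _
  apply Finset.sum_congr rfl; intro i _
  have h1 : i + j ≤ m ↔ j + i ≤ m := by omega
  have h2 : m - i - j = m - j - i := by omega
  simp only [h1, h2]
  split <;> [ring; rfl]

lemma G_succ (a : ℕ) (L : List ℕ) (n : ℕ) :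
    ∑ i ∈ range (n + 2), (-1 : MvPolynomial ℕ k) ^ i * EE k L i * HH k (a :: L) (n + 1 - i)
      = (∑ i ∈ range (n + 2), (-1 : MvPolynomial ℕ k) ^ i * EE k L i * HH k L (n + 1 - i))
        + X a * ∑ i ∈ range (n + 1), (-1 : MvPolynomial ℕ k) ^ i * EE k L i * HH k (a :: L) (n - i) := by
  have key : ∑ i ∈ range (n + 1), (-1 : MvPolynomial ℕ k) ^ i * EE k L i * HH k (a :: L) (n + 1 - i)
      = (∑ i ∈ range (n + 1), (-1 : MvPolynomial ℕ k) ^ i * EE k L i * HH k L (n + 1 - i))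
        + X a * ∑ i ∈ range (n + 1), (-1) ^ i * EE k L i * HH k (a :: L) (n - i) := by
    rw [Finset.mul_sum, ← Finset.sum_add_distrib]
    apply Finset.sum_congr rfl
    intro i hi
    have h1 : n + 1 - i = (n - i) + 1 := by
      have := Finset.mem_range.mp hi; omega
    rw [h1, HH_cons]; ring
  rw [Finset.sum_range_succ, Finset.sum_range_succ
    (fun i => (-1 : MvPolynomial ℕ k) ^ i * EE k L i * HH k L (n + 1 - i)), key]
  simp only [Nat.sub_self, HH_zero]
  ring

lemma F_cons (a : ℕ) (L : List ℕ) (m : ℕ) :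
    ∑ i ∈ range (m + 2), (-1 : MvPolynomial ℕ k) ^ i * EE k (a :: L) i * HH k (a :: L) (m + 1 - i)
      = (∑ i ∈ range (m + 2), (-1 : MvPolynomial ℕ k) ^ i * EE k L i * HH k (a :: L) (m + 1 - i))
        - X a * ∑ i ∈ range (m + 1), (-1 : MvPolynomial ℕ k) ^ i * EE k L i * HH k (a :: L) (m - i) := by
  rw [Finset.sum_range_succ'
        (fun i => (-1 : MvPolynomial ℕ k) ^ i * EE k (a :: L) i * HH k (a :: L) (m + 1 - i)),
      Finset.sum_range_succ'
        (fun i => (-1 : MvPolynomial ℕ k) ^ i * EE k L i * HH k (a :: L) (m + 1 - i))]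
  have key : ∑ i ∈ range (m + 1),
        (-1 : MvPolynomial ℕ k) ^ (i + 1) * EE k (a :: L) (i + 1) * HH k (a :: L) (m + 1 - (i + 1))
      = (∑ i ∈ range (m + 1),
          (-1 : MvPolynomial ℕ k) ^ (i + 1) * EE k L (i + 1) * HH k (a :: L) (m + 1 - (i + 1)))
        - X a * ∑ i ∈ range (m + 1), (-1) ^ i * EE k L i * HH k (a :: L) (m - i) := by
    rw [Finset.mul_sum, ← Finset.sum_sub_distrib]
    apply Finset.sum_congr rfl
    intro i hi
    have h1 : m + 1 - (i + 1) = m - i := by omega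
    rw [h1, EE_cons]; ring
  rw [key, EE_zero, EE_zero]
  ring

lemma newton (L : List ℕ) : ∀ m : ℕ,
    ∑ i ∈ range (m + 1), (-1 : MvPolynomial ℕ k) ^ i * EE k L i * HH k L (m - i)
      = if m = 0 then 1 else 0 := by
  induction L with
  | nil =>
    intro m
    cases m with
    | zero => simp [EE_zero, HH_zero]
    | succ m =>
      rw [if_neg (Nat.succ_ne_zero m)]
      apply Finset.sum_eq_zero
      intro i hi
      cases i with
      | zero => simp [HH_nil, EE_zero]
      | succ i => simp [EE_nil]
  | cons a L ih =>
    intro m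
    cases m with
    | zero => simp [EE_zero, HH_zero]
    | succ m =>
      rw [if_neg (Nat.succ_ne_zero m)]
      rw [show m + 1 + 1 = m + 2 from rfl, F_cons, G_succ, ih (m + 1),
        if_neg (Nat.succ_ne_zero m)]
      ring

/-- descending list of variables `[n, n-1, …, 1]`. -/
def Lvar (n : ℕ) : List ℕ := ((List.range n).reverse).map (· + 1)

lemma Lvar_succ (n : ℕ) : Lvar (n + 1) = (n + 1) :: Lvar n := by
  simp [Lvar, List.range_succ]

lemma mem_Lvar {x n : ℕ} (hx : x ∈ Lvar n) : 1 ≤ x ∧ x ≤ n := by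
  simp only [Lvar, List.mem_map, List.mem_reverse, List.mem_range] at hx
  omega

lemma esymPoly_eq (n : ℕ) : ∀ r : ℕ, esymPoly k n r = EE k (Lvar n) r := by
  induction n with
  | zero =>
    intro r
    cases r with
    | zero => simp [esymPoly, EE_zero, Finset.powersetCard_zero]
    | succ r =>
      have : (∅ : Finset ℕ).powersetCard (r + 1) = ∅ := by
        rw [Finset.powersetCard_eq_empty]; simp
      simp [esymPoly, Lvar, this, EE_nil]
  | succ n ih =>
    intro r
    cases r with
    | zero => simp [esymPoly, EE_zero, Finset.powersetCard_zero]
    | succ r =>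
      have hins : Finset.Icc 1 (n + 1) = insert (n + 1) (Finset.Icc 1 n) := by
        ext x; simp [Finset.mem_Icc]; omega
      have hnm : (n + 1) ∉ Finset.Icc 1 n := by simp
      have hdisj : Disjoint ((Finset.Icc 1 n).powersetCard (r + 1))
          (((Finset.Icc 1 n).powersetCard r).image (insert (n + 1))) := by
        rw [Finset.disjoint_left]
        intro A hA hA'
        rw [Finset.mem_powersetCard] at hA
        rw [Finset.mem_image] at hA'
        obtain ⟨B, _, hB⟩ := hA'
        have : (n + 1) ∈ A := by rw [← hB]; exact Finset.mem_insert_self _ _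
        have := hA.1 this
        simp at this
      rw [esymPoly, hins, Finset.powersetCard_succ_insert hnm, Finset.sum_union hdisj,
        Finset.sum_image ?hinj]
      case hinj =>
        intro B hB B' hB' hBB
        rw [Finset.mem_coe, Finset.mem_powersetCard] at hB hB'
        have h1 : (n + 1) ∉ B := fun hc => by have := hB.1 hc; simp at this
        have h2 : (n + 1) ∉ B' := fun hc => by have := hB'.1 hc; simp at this
        rw [← Finset.erase_insert h1, ← Finset.erase_insert h2, hBB]
      have hprod : ∀ B ∈ (Finset.Icc 1 n).powersetCard r,
          ∏ i ∈ insert (n + 1) B, (X i : MvPolynomial ℕ k) = X (n + 1) * ∏ i ∈ B, X i := by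
        intro B hB
        rw [Finset.mem_powersetCard] at hB
        exact Finset.prod_insert (fun hc => by have := hB.1 hc; simp at this)
      rw [Finset.sum_congr rfl hprod, ← Finset.mul_sum, Lvar_succ, EE_cons,
        ← esymPoly, ← esymPoly, ih, ih]


end AuxSTMT5

/-- For the Demazure operators `∂_i f = (f - s_i f)/(x_{i+1} - x_i)` on
`k[x_1,…,x_l]` (here characterized by `(x_{i+1} - x_i)·∂_i f = f - s_i f`, where `s_i`
swaps `x_i` and `x_{i+1}`), one has
`∂_{l-1}···∂_2∂_1((-x_1)^r) = (-1)^{r-l+1} h_{r-l+1}(x_1,…,x_l)`,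
interpreted as `0` when `r < l-1`, where `h_m` is the complete homogeneous symmetric
polynomial (characterized by `h_0 = 1` and `Σ_{i=0}^m (-1)^i e_i h_{m-i} = 0` for `m ≥ 1`). -/
theorem stmt5 (k : Type*) [Field k] (l : ℕ) (hl : 1 ≤ l)
    (D : ℕ → MvPolynomial ℕ k → MvPolynomial ℕ k)
    (hD : ∀ (i : ℕ) (f : MvPolynomial ℕ k),
      (X (i + 1) - X i) * D i f = f - rename (Equiv.swap i (i + 1)) f)
    (h : ℕ → MvPolynomial ℕ k) (hh0 : h 0 = 1)
    (hh : ∀ m : ℕ, ∑ i ∈ Finset.range (m + 2),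
      (-1 : MvPolynomial ℕ k) ^ i * esymPoly k l i * h (m + 1 - i) = 0) :
    ∀ r : ℕ,
      (((List.range (l - 1)).map (· + 1)).reverse).foldr D ((-(X 1 : MvPolynomial ℕ k)) ^ r) =
        if r + 1 < l then 0
        else (-1 : MvPolynomial ℕ k) ^ (r + 1 - l) * h (r + 1 - l) := by

  -- Step 1: h agrees with the concrete complete homogeneous polynomials
  have h_eq : ∀ m, h m = HH k (Lvar l) m := by
    intro m
    induction m using Nat.strong_induction_on with
    | _ n ih =>
      match n, ih with
      | 0, _ => rw [hh0, HH_zero]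
      | Nat.succ m, ih =>
        have h1 := hh m
        have h2 := newton (k := k) (Lvar l) (m + 1)
        rw [if_neg (Nat.succ_ne_zero m)] at h2
        simp only [esymPoly_eq] at h1
        rw [Finset.sum_range_succ'
          (fun i => (-1 : MvPolynomial ℕ k) ^ i * EE k (Lvar l) i * h (m + 1 - i)) (m + 1)] at h1
        rw [Finset.sum_range_succ'
          (fun i => (-1 : MvPolynomial ℕ k) ^ i * EE k (Lvar l) i * HH k (Lvar l) (m + 1 - i))
          (m + 1)] at h2
        simp only [pow_zero, one_mul, Nat.sub_zero, EE_zero] at h1 h2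
        have tail_eq : ∑ i ∈ Finset.range (m + 1),
              (-1 : MvPolynomial ℕ k) ^ (i + 1) * EE k (Lvar l) (i + 1) * h (m + 1 - (i + 1))
            = ∑ i ∈ Finset.range (m + 1),
              (-1 : MvPolynomial ℕ k) ^ (i + 1) * EE k (Lvar l) (i + 1)
                * HH k (Lvar l) (m + 1 - (i + 1)) := by
          apply Finset.sum_congr rfl
          intro i hi
          rw [ih (m + 1 - (i + 1)) (by omega)]
        linear_combination h1 - h2 - tail_eq
  -- Step 2: Demazure operators are determined by the defining equation
  have hXne : ∀ i : ℕ, (X (i + 1) - X i : MvPolynomial ℕ k) ≠ 0 := fun i =>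
    sub_ne_zero.mpr fun hc => Nat.succ_ne_self i (X_injective hc)
  have hDet : ∀ (i : ℕ) (f g : MvPolynomial ℕ k),
      (X (i + 1) - X i) * g = f - rename (Equiv.swap i (i + 1)) f → D i f = g :=
    fun i f g hg => mul_left_cancel₀ (hXne i) ((hD i f).trans hg.symm)
  -- Step 3: main induction
  have key : ∀ j r : ℕ, (Lvar j).foldr D ((-(X 1 : MvPolynomial ℕ k)) ^ r)
      = if r < j then 0 else (-1) ^ (r - j) * HH k (Lvar (j + 1)) (r - j) := by
    intro j
    induction j with
    | zero =>
      intro r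
      rw [if_neg (Nat.not_lt_zero r)]
      show (-(X 1 : MvPolynomial ℕ k)) ^ r = _
      rw [show Lvar 1 = [1] from rfl, Nat.sub_zero, HH_single, neg_pow]
    | succ j ih =>
      intro r
      rw [Lvar_succ, List.foldr_cons, ih r]
      apply hDet
      by_cases hc1 : r < j
      · rw [if_pos hc1, if_pos (by omega)]
        simp
      by_cases hc2 : r = j
      · subst hc2
        rw [if_neg hc1, if_pos (by omega), Nat.sub_self]
        simp [HH_zero]
      · rw [if_neg hc1, if_neg (by omega)]
        have hrn : rename (Equiv.swap (j + 1) (j + 1 + 1))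
              ((-1 : MvPolynomial ℕ k) ^ (r - j) * HH k (Lvar (j + 1)) (r - j))
            = (-1) ^ (r - j) * HH k ((j + 2) :: Lvar j) (r - j) := by
          rw [map_mul, map_pow, map_neg, map_one, HH_rename]
          congr 2
          rw [Lvar_succ, List.map_cons]
          congr 1
          · exact Equiv.swap_apply_left _ _
          · refine (List.map_congr_left fun x hx => ?_).trans (List.map_id _)
            have := mem_Lvar hx
            exact Equiv.swap_apply_of_ne_of_ne (by omega) (by omega)
        rw [hrn]
        have hr : r - j = (r - (j + 1)) + 1 := by omega
        set m := r - (j + 1) with hm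
        rw [hr, Lvar_succ (j + 1), Lvar_succ j]
        have hs := HH_swap (k := k) (j + 1) (j + 2) (Lvar j) m
        have hcm := HH_comm (k := k) (j + 1) (j + 2) (Lvar j) m
        rw [show j + 1 + 1 = j + 2 from rfl]
        linear_combination ((-1 : MvPolynomial ℕ k)) ^ m * hs
          + (-1 : MvPolynomial ℕ k) ^ m * (X (j + 1) - X (j + 2)) * hcm
  -- Step 4: assemble
  intro r
  have hlist : ((List.range (l - 1)).map (· + 1)).reverse = Lvar (l - 1) := by
    rw [Lvar, List.map_reverse]
  rw [hlist, key (l - 1) r]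
  by_cases hc : r + 1 < l
  · rw [if_pos (by omega : r < l - 1), if_pos hc]
  · rw [if_neg (by omega : ¬ r < l - 1), if_neg hc,
      show l - 1 + 1 = l by omega, show r - (l - 1) = r + 1 - l by omega, h_eq]
end

section
/- In the polynomial ring k[x_1,…,x_l], the composite Demazure operator ∂_{l-1}···∂_2∂_1 applied to the product x_2·x_3···x_l equals 1. -/
open MvPolynomial

lemma stmt6_key (k : Type*) [Field k] (l : ℕ)
    (D : ℕ → MvPolynomial ℕ k → MvPolynomial ℕ k)
    (hD : ∀ (i : ℕ) (f : MvPolynomial ℕ k),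
      (X (i + 1) - X i) * D i f = f - rename (Equiv.swap i (i + 1)) f)
    (j : ℕ) (hjl : j + 1 ≤ l) :
    D j (∏ i ∈ Finset.Icc (j+1) l, (X i : MvPolynomial ℕ k))
      = ∏ i ∈ Finset.Icc (j+2) l, (X i : MvPolynomial ℕ k) := by
  have hx : (X (j+1) - X j : MvPolynomial ℕ k) ≠ 0 := by
    intro h
    have := sub_eq_zero.mp h
    have := MvPolynomial.X_injective (R := k) this
    omega
  apply mul_left_cancel₀ hx
  rw [hD]
  have hins : Finset.Icc (j+1) l = insert (j+1) (Finset.Icc (j+2) l) := by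
    ext i
    simp only [Finset.mem_Icc, Finset.mem_insert]
    omega
  have hnotmem : (j+1) ∉ Finset.Icc (j+2) l := by simp
  rw [hins, Finset.prod_insert hnotmem, map_mul, rename_X, Equiv.swap_apply_right]
  have hren : rename (Equiv.swap j (j+1)) (∏ i ∈ Finset.Icc (j+2) l, (X i : MvPolynomial ℕ k))
      = ∏ i ∈ Finset.Icc (j+2) l, (X i : MvPolynomial ℕ k) := by
    rw [map_prod]
    apply Finset.prod_congr rfl
    intro i hi
    simp only [Finset.mem_Icc] at hi
    rw [rename_X, Equiv.swap_apply_of_ne_of_ne (by omega) (by omega)]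
  rw [hren]
  ring

/-- In `k[x_1,…,x_l]`, the composite Demazure operator `∂_{l-1}···∂_2∂_1`
(where `∂_i f = (f - s_i f)/(x_{i+1} - x_i)`, `s_i` swapping `x_i, x_{i+1}`, here
characterized by `(x_{i+1} - x_i)·∂_i f = f - s_i f`) applied to `x_2·x_3···x_l`
equals `1`. -/
theorem stmt6 (k : Type*) [Field k] (l : ℕ)
    (D : ℕ → MvPolynomial ℕ k → MvPolynomial ℕ k)
    (hD : ∀ (i : ℕ) (f : MvPolynomial ℕ k),
      (X (i + 1) - X i) * D i f = f - rename (Equiv.swap i (i + 1)) f) :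
    (((List.range (l - 1)).map (· + 1)).reverse).foldr D
        (∏ i ∈ Finset.Icc 2 l, (X i : MvPolynomial ℕ k)) = 1 := by
  have main : ∀ n, n + 1 ≤ l →
      ((List.range n).map (· + 1)).foldl (fun b a => D a b)
        (∏ i ∈ Finset.Icc 2 l, (X i : MvPolynomial ℕ k))
      = ∏ i ∈ Finset.Icc (n+2) l, (X i : MvPolynomial ℕ k) := by
    intro n
    induction n with
    | zero => intro _; simp
    | succ m ih =>
      intro h
      rw [List.range_succ, List.map_append, List.foldl_append]
      simp only [List.map_cons, List.map_nil, List.foldl_cons, List.foldl_nil]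
      rw [ih (by omega)]
      have := stmt6_key k l D hD (m+1) (by omega)
      convert this using 2 <;> omega
  rw [List.foldr_reverse]
  rcases Nat.eq_zero_or_pos l with hl | hl
  · subst hl
    simp
  · rw [show ((List.range (l-1)).map (· + 1)).foldl (fun b a => D a b)
        (∏ i ∈ Finset.Icc 2 l, (X i : MvPolynomial ℕ k))
      = ∏ i ∈ Finset.Icc (l-1+2) l, (X i : MvPolynomial ℕ k) from main (l-1) (by omega)]
    rw [Finset.Icc_eq_empty (by omega)]
    simp
end

section
/- The trace of the Frobenius extension k[x_1,…,x_l]^{S_l} ⊂ k[x_1,…,x_l]^{S_1×S_{l-1}} evaluated on (x_2+x_1)(x_3+x_1)···(x_l+x_1)·x_1^n equals ((−1)^{l−1}+1)/2 if n = 0, and equals −(−1)^l·(1/2)·q_n(x_1,…,x_l) if n > 0, where q_n is the evaluation of Schur's q-function. -/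
open MvPolynomial Finset

namespace Stmt7Aux

variable (k : Type*) [Field k]

/-- complete homogeneous polynomial in variables `x_1, …, x_j`. -/
noncomputable def Hp : ℕ → ℕ → MvPolynomial ℕ k
  | 0, m => if m = 0 then 1 else 0
  | (j+1), m => ∑ a ∈ range (m+1), X (j+1) ^ a * Hp j (m - a)

/-- `h_m(x_1,…,x_j,x_y)` -/
noncomputable def G (j m y : ℕ) : MvPolynomial ℕ k :=
  ∑ a ∈ range (m+1), X y ^ a * Hp k j (m - a)

/-- `h_m(x_1,…,x_j,x_y,x_z)` -/
noncomputable def G2 (j m y z : ℕ) : MvPolynomial ℕ k :=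
  ∑ a ∈ range (m+1), X z ^ a * G k j (m - a) y

lemma Hp_succ (j m : ℕ) : Hp k (j+1) m = G k j m (j+1) := by
  rw [Hp, G]

lemma Hp_zero : ∀ j, Hp k j 0 = 1
  | 0 => by simp [Hp]
  | (j+1) => by simp [Hp, Hp_zero j]

lemma G_zero (j y : ℕ) : G k j 0 y = 1 := by simp [G, Hp_zero]

lemma G2_zero (j y z : ℕ) : G2 k j 0 y z = 1 := by simp [G2, G_zero]

lemma G_succ (j m y : ℕ) : G k j (m+1) y = Hp k j (m+1) + X y * G k j m y := by
  rw [G, Finset.sum_range_succ' (fun a => X y ^ a * Hp k j (m + 1 - a)) (m+1)]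
  simp only [pow_zero, one_mul, Nat.sub_zero, Nat.succ_sub_succ]
  rw [add_comm, G, Finset.mul_sum]
  congr 1
  refine Finset.sum_congr rfl fun a _ => by ring

lemma G2_succ (j m y z : ℕ) : G2 k j (m+1) y z = G k j (m+1) y + X z * G2 k j m y z := by
  rw [G2, Finset.sum_range_succ' (fun a => X z ^ a * G k j (m + 1 - a) y) (m+1)]
  simp only [pow_zero, one_mul, Nat.sub_zero, Nat.succ_sub_succ]
  rw [add_comm, G2, Finset.mul_sum]
  congr 1
  refine Finset.sum_congr rfl fun a _ => by ring

lemma G2_succ' (j m y z : ℕ) : G2 k j (m+1) y z = G k j (m+1) z + X y * G2 k j m y z := by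
  rw [G2, Finset.sum_range_succ]
  have h1 : ∀ b ∈ range (m+1), X z ^ b * G k j (m + 1 - b) y
      = X z ^ b * Hp k j (m+1-b) + X y * (X z ^ b * G k j (m - b) y) := by
    intro b hb
    rw [Finset.mem_range] at hb
    have e1 : m + 1 - b = (m - b) + 1 := by omega
    rw [e1, G_succ]
    ring
  rw [Finset.sum_congr rfl h1, Finset.sum_add_distrib]
  have h2 : G k j (m+1) z = (∑ b ∈ range (m+1), X z ^ b * Hp k j (m + 1 - b)) + X z ^ (m+1) := by
    rw [G, Finset.sum_range_succ]
    simp [Hp_zero]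
  rw [h2, G2, Finset.mul_sum]
  simp [G_zero]
  ring

lemma G_sub (j : ℕ) : ∀ m y z, G k j (m+1) y - G k j (m+1) z
    = (X y - X z) * G2 k j m y z := by
  intro m
  induction m with
  | zero =>
    intro y z
    rw [G_succ, G_succ, G2_zero, G_zero, G_zero]
    ring
  | succ m ih =>
    intro y z
    rw [G_succ k j (m+1) y, G_succ k j (m+1) z, G2_succ' k j m y z]
    linear_combination (X y : MvPolynomial ℕ k) * ih y z

lemma Hp_G2 (j m : ℕ) : Hp k (j+2) m = G2 k j m (j+1) (j+2) := by
  rw [Hp, G2]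
  exact Finset.sum_congr rfl fun a _ => by rw [Hp_succ]

lemma rename_Hp (σ : ℕ → ℕ) : ∀ j m, (∀ i, 1 ≤ i → i ≤ j → σ i = i) →
    rename σ (Hp k j m) = Hp k j m := by
  intro j
  induction j with
  | zero =>
    intro m _
    rw [Hp]
    split_ifs <;> simp
  | succ j ih =>
    intro m hσ
    rw [Hp, map_sum]
    refine Finset.sum_congr rfl fun a _ => ?_
    rw [map_mul, map_pow, rename_X, hσ (j+1) (by omega) le_rfl,
      ih _ (fun i h1 h2 => hσ i h1 (by omega))]

lemma rename_swap_Hp (j m : ℕ) :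
    rename (⇑(Equiv.swap (j+1) (j+2))) (Hp k (j+1) m) = G k j m (j+2) := by
  rw [Hp_succ, G, map_sum]
  refine Finset.sum_congr rfl fun a _ => ?_
  rw [map_mul, map_pow, rename_X, Equiv.swap_apply_left,
    rename_Hp k _ j _ (fun i h1 h2 => Equiv.swap_apply_of_ne_of_ne (by omega) (by omega))]

/-- elementary symmetric polynomial over a finite variable set. -/
noncomputable def Es (s : Finset ℕ) (r : ℕ) : MvPolynomial ℕ k :=
  ∑ S ∈ s.powersetCard r, ∏ i ∈ S, X i

lemma Es_zero (s : Finset ℕ) : Es k s 0 = 1 := by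
  simp [Es, Finset.powersetCard_zero]

lemma Es_of_lt {s : Finset ℕ} {r : ℕ} (h : s.card < r) : Es k s r = 0 := by
  rw [Es, Finset.powersetCard_eq_empty.mpr h, Finset.sum_empty]

lemma Es_insert {a : ℕ} {s : Finset ℕ} (ha : a ∉ s) (r : ℕ) :
    Es k (insert a s) (r+1) = Es k s (r+1) + X a * Es k s r := by
  rw [Es, Finset.powersetCard_succ_insert ha, Finset.sum_union, Finset.sum_image, Es, Es,
    Finset.mul_sum]
  · congr 1
    refine Finset.sum_congr rfl fun S hS => ?_
    have haS : a ∉ S := fun hmem => ha ((Finset.mem_powersetCard.mp hS).1 hmem)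
    rw [Finset.prod_insert haS]
  · intro u hu v hv huv
    have hau : a ∉ u := fun hmem => ha ((Finset.mem_powersetCard.mp hu).1 hmem)
    have hav : a ∉ v := fun hmem => ha ((Finset.mem_powersetCard.mp hv).1 hmem)
    have := congrArg (Finset.erase · a) huv
    simpa [Finset.erase_insert, hau, hav] using this
  · rw [Finset.disjoint_right]
    intro t htimg ht
    obtain ⟨u, hu, rfl⟩ := Finset.mem_image.mp htimg
    exact ha ((Finset.mem_powersetCard.mp ht).1 (Finset.mem_insert_self a u))

lemma rename_Es (σ : ℕ ≃ ℕ) (s : Finset ℕ) (hσ : ∀ a ∈ s, σ a ∈ s) (r : ℕ) :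
    rename ⇑σ (Es k s r) = Es k s r := by
  have himg : s.image ⇑σ = s := by
    apply Finset.eq_of_subset_of_card_le
    · intro x hx
      obtain ⟨a, ha, rfl⟩ := Finset.mem_image.mp hx
      exact hσ a ha
    · rw [Finset.card_image_of_injective _ σ.injective]
  rw [Es, map_sum]
  refine Finset.sum_nbij' (fun S => S.image ⇑σ) (fun S => S.image ⇑σ.symm) ?_ ?_ ?_ ?_ ?_
  · intro S hS
    rw [Finset.mem_powersetCard] at hS ⊢
    constructor
    · intro x hx
      obtain ⟨a, ha, rfl⟩ := Finset.mem_image.mp hx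
      exact hσ a (hS.1 ha)
    · rw [Finset.card_image_of_injective _ σ.injective, hS.2]
  · intro S hS
    rw [Finset.mem_powersetCard] at hS ⊢
    constructor
    · intro x hx
      obtain ⟨a, ha, rfl⟩ := Finset.mem_image.mp hx
      have : σ (σ.symm a) ∈ s := by
        rw [Equiv.apply_symm_apply]; exact hS.1 ha
      have ha' : a ∈ s.image ⇑σ := by rw [himg]; exact hS.1 ha
      obtain ⟨b, hb, rfl⟩ := Finset.mem_image.mp ha'
      simpa using hb
    · rw [Finset.card_image_of_injective _ σ.symm.injective, hS.2]
  · intro S _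
    simp [Finset.image_image]
  · intro S _
    simp [Finset.image_image]
  · intro S _
    rw [map_prod, Finset.prod_image (fun a _ b _ hab => σ.injective hab)]
    refine Finset.prod_congr rfl fun a _ => by rw [rename_X]

lemma Hprec (j c : ℕ) : Hp k (j+1) (c+1) = Hp k j (c+1) + X (j+1) * Hp k (j+1) c := by
  rw [Hp_succ, G_succ, Hp_succ]

lemma newton : ∀ (j m : ℕ),
    ∑ i ∈ range (m+2), (-1 : MvPolynomial ℕ k)^i * Es k (Icc 1 j) i * Hp k j (m+1-i) = 0 := by
  intro j
  induction j with
  | zero =>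
    intro m
    refine Finset.sum_eq_zero fun i hi => ?_
    match i with
    | 0 => simp [Hp]
    | (i+1) =>
      rw [Es_of_lt]
      · ring
      · simp
  | succ j ih =>
    intro m
    have eIcc : Icc 1 (j+1) = insert (j+1) (Icc 1 j) := by
      ext x
      simp only [Finset.mem_Icc, Finset.mem_insert]
      omega
    have hnm : (j+1) ∉ Icc 1 j := by
      simp [Finset.mem_Icc]
    have step1 : (∑ i ∈ range (m+2), (-1 : MvPolynomial ℕ k)^i * Es k (Icc 1 (j+1)) i * Hp k (j+1) (m+1-i))
        = (∑ i ∈ range (m+2), (-1 : MvPolynomial ℕ k)^i * Es k (Icc 1 j) i * Hp k (j+1) (m+1-i))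
          - X (j+1) * ∑ i ∈ range (m+1), (-1 : MvPolynomial ℕ k)^i * Es k (Icc 1 j) i * Hp k (j+1) (m-i) := by
      rw [Finset.sum_range_succ' (fun i => (-1 : MvPolynomial ℕ k)^i * Es k (Icc 1 (j+1)) i * Hp k (j+1) (m+1-i)) (m+1),
          Finset.sum_range_succ' (fun i => (-1 : MvPolynomial ℕ k)^i * Es k (Icc 1 j) i * Hp k (j+1) (m+1-i)) (m+1)]
      have hterm : ∀ i ∈ range (m+1),
          (-1 : MvPolynomial ℕ k)^(i+1) * Es k (Icc 1 (j+1)) (i+1) * Hp k (j+1) (m+1-(i+1))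
          = (-1 : MvPolynomial ℕ k)^(i+1) * Es k (Icc 1 j) (i+1) * Hp k (j+1) (m+1-(i+1))
            - X (j+1) * ((-1 : MvPolynomial ℕ k)^i * Es k (Icc 1 j) i * Hp k (j+1) (m-i)) := by
        intro i hi
        rw [eIcc, Es_insert k hnm]
        have hmi : m+1-(i+1) = m - i := by omega
        rw [hmi]
        ring
      rw [Finset.sum_congr rfl hterm, Finset.sum_sub_distrib, ← Finset.mul_sum]
      rw [eIcc, Es_zero, Es_zero]
      ring
    have step2 : (∑ i ∈ range (m+2), (-1 : MvPolynomial ℕ k)^i * Es k (Icc 1 j) i * Hp k (j+1) (m+1-i))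
        = X (j+1) * ∑ i ∈ range (m+1), (-1 : MvPolynomial ℕ k)^i * Es k (Icc 1 j) i * Hp k (j+1) (m-i) := by
      rw [Finset.sum_range_succ (fun i => (-1 : MvPolynomial ℕ k)^i * Es k (Icc 1 j) i * Hp k (j+1) (m+1-i)) (m+1)]
      have hterm2 : ∀ i ∈ range (m+1),
          (-1 : MvPolynomial ℕ k)^i * Es k (Icc 1 j) i * Hp k (j+1) (m+1-i)
          = (-1 : MvPolynomial ℕ k)^i * Es k (Icc 1 j) i * Hp k j (m+1-i)
            + X (j+1) * ((-1 : MvPolynomial ℕ k)^i * Es k (Icc 1 j) i * Hp k (j+1) (m-i)) := by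
        intro i hi
        rw [Finset.mem_range] at hi
        have h1 : m+1-i = (m-i)+1 := by omega
        rw [h1, Hprec k j (m-i)]
        ring
      rw [Finset.sum_congr rfl hterm2, Finset.sum_add_distrib, ← Finset.mul_sum]
      have hz : (∑ i ∈ range (m+1), (-1 : MvPolynomial ℕ k)^i * Es k (Icc 1 j) i * Hp k j (m+1-i))
          + (-1 : MvPolynomial ℕ k)^(m+1) * Es k (Icc 1 j) (m+1) * Hp k (j+1) (m+1-(m+1)) = 0 := by
        have : (-1 : MvPolynomial ℕ k)^(m+1) * Es k (Icc 1 j) (m+1) * Hp k (j+1) (m+1-(m+1))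
            = (-1 : MvPolynomial ℕ k)^(m+1) * Es k (Icc 1 j) (m+1) * Hp k j (m+1-(m+1)) := by
          simp [Hp_zero]
        rw [this, ← Finset.sum_range_succ (fun i => (-1 : MvPolynomial ℕ k)^i * Es k (Icc 1 j) i * Hp k j (m+1-i)) (m+1)]
        exact ih m
      linear_combination hz
    rw [step1, step2]
    ring

lemma Hp_one (m : ℕ) : Hp k 1 m = X 1 ^ m := by
  rw [Hp, Finset.sum_eq_single_of_mem m (Finset.self_mem_range_succ m)]
  · simp [Hp]
  · intro b hb hbm
    rw [Finset.mem_range] at hb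
    have hmb : ¬ (m - b = 0) := by omega
    rw [Hp, if_neg hmb, mul_zero]

end Stmt7Aux


open Stmt7Aux in
/-- The Frobenius trace `∂_{l-1}···∂_2∂_1` of the extension
`k[x_1,…,x_l]^{S_l} ⊂ k[x_1,…,x_l]^{S_1×S_{l-1}}` evaluated on
`(x_2+x_1)(x_3+x_1)···(x_l+x_1)·x_1^n` equals `((-1)^{l-1}+1)/2` if `n = 0`, and
`-(-1)^l·(1/2)·q_n(x_1,…,x_l)` if `n > 0`, where `q_n = Σ_{s=0}^n h_s e_{n-s}` is
(the evaluation of) Schur's q-function.  Here `∂_i` is characterized by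
`(x_{i+1}-x_i)·∂_i f = f - s_i f` and `h` by `h_0 = 1`, `Σ_{i=0}^m (-1)^i e_i h_{m-i} = 0`
for `m ≥ 1`. -/
theorem stmt7 (k : Type*) [Field k] (hk : ringChar k ≠ 2) (l : ℕ) (hl : 1 ≤ l)
    (D : ℕ → MvPolynomial ℕ k → MvPolynomial ℕ k)
    (hD : ∀ (i : ℕ) (f : MvPolynomial ℕ k),
      (X (i + 1) - X i) * D i f = f - rename (Equiv.swap i (i + 1)) f)
    (h : ℕ → MvPolynomial ℕ k) (hh0 : h 0 = 1)
    (hh : ∀ m : ℕ, ∑ i ∈ Finset.range (m + 2),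
      (-1 : MvPolynomial ℕ k) ^ i * esymPoly k l i * h (m + 1 - i) = 0) :
    ∀ n : ℕ,
      (((List.range (l - 1)).map (· + 1)).reverse).foldr D
          ((∏ i ∈ Finset.Icc 2 l, ((X i : MvPolynomial ℕ k) + X 1)) * X 1 ^ n) =
        if n = 0 then C (((-1 : k) ^ (l - 1) + 1) / 2)
        else -(C ((-1 : k) ^ l / 2)) *
          ∑ s ∈ Finset.range (n + 1), h s * esymPoly k l (n - s) := by
  classical
  have two_ne : (2 : k) ≠ 0 := Ring.two_ne_zero hk
  have subne : ∀ i : ℕ, (X (i+1) - X i : MvPolynomial ℕ k) ≠ 0 := by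
    intro i
    refine sub_ne_zero_of_ne fun hXX => ?_
    have := MvPolynomial.X_injective (R := k) hXX
    omega
  have Duniq : ∀ (i : ℕ) (f g : MvPolynomial ℕ k),
      (X (i+1) - X i) * g = f - rename (⇑(Equiv.swap i (i+1))) f → D i f = g := by
    intro i f g hg
    exact mul_left_cancel₀ (subne i) ((hD i f).trans hg.symm)
  have Dadd : ∀ (i : ℕ) (f g : MvPolynomial ℕ k), D i (f + g) = D i f + D i g := by
    intro i f g
    refine Duniq i _ _ ?_
    rw [mul_add, hD i f, hD i g, map_add]
    ring
  have Dzero : ∀ i : ℕ, D i 0 = 0 := fun i => Duniq i 0 0 (by simp)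
  have Dmul : ∀ (i : ℕ) (p f : MvPolynomial ℕ k),
      rename (⇑(Equiv.swap i (i+1))) p = p → D i (p * f) = p * D i f := by
    intro i p f hp
    refine Duniq i _ _ ?_
    rw [map_mul, hp]
    calc (X (i+1) - X i) * (p * D i f) = p * ((X (i+1) - X i) * D i f) := by ring
      _ = p * (f - rename (⇑(Equiv.swap i (i+1))) f) := by rw [hD]
      _ = p * f - p * rename (⇑(Equiv.swap i (i+1))) f := by ring
  intro n
  set T : ℕ → MvPolynomial ℕ k → MvPolynomial ℕ k :=
    fun j f => ((List.range j).map (· + 1)).foldl (fun x y => D y x) f with hT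
  have hfold : ∀ f : MvPolynomial ℕ k,
      (((List.range (l - 1)).map (· + 1)).reverse).foldr D f = T (l-1) f := by
    intro f
    rw [List.foldr_reverse]
  have Tsucc : ∀ (j : ℕ) (f : MvPolynomial ℕ k), T (j+1) f = D (j+1) (T j f) := by
    intro j f
    simp only [hT, List.range_succ, List.map_append, List.foldl_append, List.map_cons,
      List.map_nil, List.foldl_cons, List.foldl_nil]
  have Tzero : ∀ f : MvPolynomial ℕ k, T 0 f = f := fun f => rfl
  have Tadd : ∀ (j : ℕ) (f g : MvPolynomial ℕ k), T j (f + g) = T j f + T j g := by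
    intro j
    induction j with
    | zero => intro f g; rfl
    | succ j ih => intro f g; rw [Tsucc, Tsucc, Tsucc, ih, Dadd]
  have Tsum : ∀ (j : ℕ) (s : Finset ℕ) (F : ℕ → MvPolynomial ℕ k),
      T j (∑ x ∈ s, F x) = ∑ x ∈ s, T j (F x) :=
    fun j s F => map_sum (AddMonoidHom.mk' (T j) (Tadd j)) F s
  have Tmul : ∀ (j : ℕ) (p : MvPolynomial ℕ k),
      (∀ i : ℕ, 1 ≤ i → i ≤ j → rename (⇑(Equiv.swap i (i+1))) p = p) →
      ∀ f, T j (p * f) = p * T j f := by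
    intro j p hp
    induction j with
    | zero => intro f; rfl
    | succ j ih =>
      intro f
      rw [Tsucc, Tsucc, ih (fun i h1 h2 => hp i h1 (by omega)),
        Dmul (j+1) p _ (hp (j+1) (by omega) le_rfl)]
  have Tpow : ∀ (j r : ℕ), T j (X 1 ^ r) =
      if j ≤ r then (-1 : MvPolynomial ℕ k)^j * Hp k (j+1) (r-j) else 0 := by
    intro j
    induction j with
    | zero =>
      intro r
      rw [Tzero, if_pos (Nat.zero_le r), Hp_one]
      simp
    | succ j ih =>
      intro r
      rw [Tsucc, ih r]
      by_cases h1 : j ≤ r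
      · rw [if_pos h1]
        have hrenc : rename (⇑(Equiv.swap (j+1) (j+1+1))) ((-1 : MvPolynomial ℕ k)^j)
            = (-1 : MvPolynomial ℕ k)^j := by
          rw [map_pow, map_neg, map_one]
        by_cases h2 : j + 1 ≤ r
        · rw [if_pos h2]
          have hr : r - j = (r - (j+1)) + 1 := by omega
          rw [hr, Dmul (j+1) _ _ hrenc]
          have hkey : D (j+1) (Hp k (j+1) ((r-(j+1))+1)) = -(Hp k (j+2) (r-(j+1))) := by
            refine Duniq _ _ _ ?_
            rw [show j+1+1 = j+2 from rfl, rename_swap_Hp, Hp_G2 k j (r-(j+1)),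
              Hp_succ k j (r-(j+1)+1), G_sub k j (r-(j+1)) (j+1) (j+2)]
            ring
          rw [hkey, pow_succ]
          ring
        · rw [if_neg h2]
          have h0 : r - j = 0 := by omega
          rw [h0, Hp_zero, mul_one]
          refine Duniq _ _ _ ?_
          rw [hrenc]
          ring
      · rw [if_neg h1, if_neg (by omega), Dzero]
  have hcardIcc : (Finset.Icc 1 l).card = l := by rw [Nat.card_Icc]; omega
  have hEinv : ∀ (r i : ℕ), 1 ≤ i → i + 1 ≤ l →
      rename (⇑(Equiv.swap i (i+1))) (Es k (Finset.Icc 1 l) r) = Es k (Finset.Icc 1 l) r := by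
    intro r i h1 h2
    refine rename_Es k (Equiv.swap i (i+1)) _ ?_ r
    intro a ha
    rw [Finset.mem_Icc] at ha
    rcases eq_or_ne a i with rfl|hai
    · rw [Equiv.swap_apply_left, Finset.mem_Icc]; omega
    rcases eq_or_ne a (i+1) with rfl|hai1
    · rw [Equiv.swap_apply_right, Finset.mem_Icc]; omega
    · rw [Equiv.swap_apply_of_ne_of_ne hai hai1, Finset.mem_Icc]; omega
  have hesym : ∀ r : ℕ, esymPoly k l r = Es k (Finset.Icc 1 l) r := fun r => rfl
  have hHp : ∀ m : ℕ, h m = Hp k l m := by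
    intro m
    induction m using Nat.strong_induction_on with
    | _ m ih =>
      match m with
      | 0 => rw [hh0, Hp_zero]
      | (m+1) =>
        have h1 := hh m
        have h2 := newton k l m
        rw [Finset.sum_range_succ'
          (fun i => (-1 : MvPolynomial ℕ k)^i * esymPoly k l i * h (m+1-i)) (m+1)] at h1
        rw [Finset.sum_range_succ'
          (fun i => (-1 : MvPolynomial ℕ k)^i * Es k (Finset.Icc 1 l) i * Hp k l (m+1-i)) (m+1)] at h2
        rw [hesym 0, Es_zero] at h1
        rw [Es_zero] at h2
        have hsum : (∑ i ∈ Finset.range (m+1),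
            (-1 : MvPolynomial ℕ k)^(i+1) * esymPoly k l (i+1) * h (m+1-(i+1)))
            = ∑ i ∈ Finset.range (m+1),
            (-1 : MvPolynomial ℕ k)^(i+1) * Es k (Finset.Icc 1 l) (i+1) * Hp k l (m+1-(i+1)) := by
          refine Finset.sum_congr rfl fun i hi => ?_
          rw [Finset.mem_range] at hi
          rw [ih (m+1-(i+1)) (by omega), hesym]
        rw [hsum] at h1
        simp only [pow_zero, one_mul, Nat.sub_zero] at h1 h2
        linear_combination h1 - h2
  -- expansion of the product
  have hcard2 : (Finset.Icc 2 l).card = l - 1 := by rw [Nat.card_Icc]; omega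
  have hP : (∏ i ∈ Finset.Icc 2 l, ((X i : MvPolynomial ℕ k) + X 1))
      = ∑ r ∈ Finset.range l, Es k (Finset.Icc 2 l) r * X 1 ^ (l-1-r) := by
    rw [Finset.prod_add, Finset.powerset_card_disjiUnion]
    erw [Finset.sum_disjiUnion]
    rw [hcard2,
      show l - 1 + 1 = l by omega]
    refine Finset.sum_congr rfl fun r hr => ?_
    rw [Es, Finset.sum_mul]
    refine Finset.sum_congr rfl fun t ht => ?_
    rw [Finset.mem_powersetCard] at ht
    rw [Finset.prod_const]
    congr 1
    rw [Finset.card_sdiff_of_subset ht.1, hcard2, ht.2]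
  have h1nm : (1 : ℕ) ∉ Finset.Icc 2 l := by simp
  have hIcc1 : Finset.Icc 1 l = insert 1 (Finset.Icc 2 l) := by
    ext x
    simp only [Finset.mem_Icc, Finset.mem_insert]
    omega
  have hF : ∀ r : ℕ, Es k (Finset.Icc 2 l) r
      = ∑ t ∈ Finset.range (r+1),
          (-1 : MvPolynomial ℕ k)^t * X 1 ^ t * Es k (Finset.Icc 1 l) (r-t) := by
    intro r
    induction r with
    | zero => simp [Es_zero]
    | succ r ih =>
      have hins := Es_insert k h1nm r
      rw [← hIcc1] at hins
      rw [Finset.sum_range_succ'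
        (fun t => (-1 : MvPolynomial ℕ k)^t * X 1 ^ t * Es k (Finset.Icc 1 l) (r+1-t)) (r+1)]
      have hterm : ∀ t ∈ Finset.range (r+1),
          (-1 : MvPolynomial ℕ k)^(t+1) * X 1^(t+1) * Es k (Finset.Icc 1 l) (r+1-(t+1))
          = -(X 1 * ((-1 : MvPolynomial ℕ k)^t * X 1^t * Es k (Finset.Icc 1 l) (r-t))) := by
        intro t ht
        have hrt : r+1-(t+1) = r - t := by omega
        rw [hrt]
        ring
      rw [Finset.sum_congr rfl hterm, Finset.sum_neg_distrib, ← Finset.mul_sum, ← ih]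
      simp only [pow_zero, one_mul, Nat.sub_zero]
      linear_combination (-1 : MvPolynomial ℕ k) * hins
  have hg : (∏ i ∈ Finset.Icc 2 l, ((X i : MvPolynomial ℕ k) + X 1)) * X 1 ^ n
      = ∑ r ∈ Finset.range l, ∑ t ∈ Finset.range (r+1),
          ((-1 : MvPolynomial ℕ k)^t * Es k (Finset.Icc 1 l) (r-t)) * X 1 ^ (l-1-r+t+n) := by
    rw [hP, Finset.sum_mul]
    refine Finset.sum_congr rfl fun r hr => ?_
    rw [hF r, Finset.sum_mul, Finset.sum_mul]
    refine Finset.sum_congr rfl fun t ht => ?_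
    rw [Finset.mem_range] at hr ht
    rw [show l-1-r+t+n = t + ((l-1-r) + n) by omega, pow_add, pow_add]
    ring
  have hTg : T (l-1) ((∏ i ∈ Finset.Icc 2 l, ((X i : MvPolynomial ℕ k) + X 1)) * X 1 ^ n)
      = ∑ r ∈ Finset.range l, ∑ t ∈ Finset.range (r+1),
          ((-1 : MvPolynomial ℕ k)^t * Es k (Finset.Icc 1 l) (r-t)) *
          (if r - t ≤ n then (-1 : MvPolynomial ℕ k)^(l-1) * Hp k l (n-(r-t)) else 0) := by
    rw [hg, Tsum]
    refine Finset.sum_congr rfl fun r hr => ?_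
    rw [Tsum]
    refine Finset.sum_congr rfl fun t ht => ?_
    rw [Finset.mem_range] at hr ht
    have hinv : ∀ i : ℕ, 1 ≤ i → i ≤ l-1 →
        rename (⇑(Equiv.swap i (i+1)))
          ((-1 : MvPolynomial ℕ k)^t * Es k (Finset.Icc 1 l) (r-t))
        = (-1 : MvPolynomial ℕ k)^t * Es k (Finset.Icc 1 l) (r-t) := by
      intro i hi1 hi2
      rw [map_mul, map_pow, map_neg, map_one, hEinv (r-t) i hi1 (by omega)]
    rw [Tmul (l-1) _ hinv, Tpow]
    congr 1
    have hcond : (l-1 ≤ l-1-r+t+n) ↔ (r - t ≤ n) := by omega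
    simp only [hcond]
    by_cases hc : r - t ≤ n
    · rw [if_pos hc, if_pos hc, show l-1+1 = l by omega, show l-1-r+t+n-(l-1) = n - (r-t) by omega]
    · rw [if_neg hc, if_neg hc]
  -- reflect the inner sum and swap
  have hrefl : ∀ r ∈ Finset.range l,
      (∑ t ∈ Finset.range (r+1),
        ((-1 : MvPolynomial ℕ k)^t * Es k (Finset.Icc 1 l) (r-t)) *
          (if r - t ≤ n then (-1 : MvPolynomial ℕ k)^(l-1) * Hp k l (n-(r-t)) else 0))
      = ∑ j ∈ Finset.range (r+1),
        ((-1 : MvPolynomial ℕ k)^(r-j) * Es k (Finset.Icc 1 l) j) *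
          (if j ≤ n then (-1 : MvPolynomial ℕ k)^(l-1) * Hp k l (n-j) else 0) := by
    intro r _
    rw [← Finset.sum_range_reflect
      (fun t => ((-1 : MvPolynomial ℕ k)^t * Es k (Finset.Icc 1 l) (r-t)) *
          (if r - t ≤ n then (-1 : MvPolynomial ℕ k)^(l-1) * Hp k l (n-(r-t)) else 0)) (r+1)]
    refine Finset.sum_congr rfl fun j hj => ?_
    rw [Finset.mem_range] at hj
    rw [show r+1-1-j = r - j by omega, show r-(r-j) = j by omega]
  have htri : ∀ Cf : ℕ → ℕ → MvPolynomial ℕ k,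
      (∑ r ∈ Finset.range l, ∑ j ∈ Finset.range (r+1), Cf r j)
      = ∑ j ∈ Finset.range l, ∑ r ∈ Finset.Ico j l, Cf r j := by
    intro Cf
    calc (∑ r ∈ Finset.range l, ∑ j ∈ Finset.range (r+1), Cf r j)
        = ∑ r ∈ Finset.Ico 0 l, ∑ j ∈ Finset.Ico 0 (r+1), Cf r j := by
          simp only [← Finset.range_eq_Ico]
      _ = ∑ j ∈ Finset.Ico 0 l, ∑ r ∈ Finset.Ico j l, Cf r j :=
          (Finset.sum_Ico_Ico_comm 0 l (fun j r => Cf r j)).symm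
      _ = ∑ j ∈ Finset.range l, ∑ r ∈ Finset.Ico j l, Cf r j := by
          simp only [← Finset.range_eq_Ico]
  have hgeo : ∀ j : ℕ, (∑ r ∈ Finset.Ico j l, (-1 : MvPolynomial ℕ k)^(r-j))
      = if Even (l - j) then 0 else 1 := by
    intro j
    rw [Finset.sum_Ico_eq_sum_range]
    rw [Finset.sum_congr rfl (fun u _ => by rw [show j + u - j = u by omega])]
    exact neg_one_geom_sum
  have hTg2 : T (l-1) ((∏ i ∈ Finset.Icc 2 l, ((X i : MvPolynomial ℕ k) + X 1)) * X 1 ^ n)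
      = ∑ j ∈ Finset.range l, (if Even (l - j) then 0 else 1) *
          (Es k (Finset.Icc 1 l) j *
            (if j ≤ n then (-1 : MvPolynomial ℕ k)^(l-1) * Hp k l (n-j) else 0)) := by
    rw [hTg, Finset.sum_congr rfl hrefl, htri (fun r j =>
      ((-1 : MvPolynomial ℕ k)^(r-j) * Es k (Finset.Icc 1 l) j) *
          (if j ≤ n then (-1 : MvPolynomial ℕ k)^(l-1) * Hp k l (n-j) else 0))]
    refine Finset.sum_congr rfl fun j hj => ?_
    rw [← hgeo j, Finset.sum_mul]
    refine Finset.sum_congr rfl fun r hr => by ring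
  rw [hfold, hTg2]
  by_cases hn : n = 0
  · subst hn
    rw [if_pos rfl]
    rw [Finset.sum_eq_single_of_mem 0 (Finset.mem_range.mpr (by omega))]
    · simp only [Nat.sub_zero, Nat.le_refl, if_true, Es_zero, Hp_zero, mul_one, one_mul,
        le_refl, ite_true]
      rcases Nat.even_or_odd l with he|ho
      · rw [if_pos he]
        have hodd : Odd (l-1) := by
          rcases he with ⟨c, hc⟩
          exact ⟨c-1, by omega⟩
        rw [zero_mul, (hodd.neg_one_pow : ((-1 : k))^(l-1) = -1),
          show ((-1 : k) + 1)/2 = 0 by ring, map_zero]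
      · have hol : ¬ Even l := by
          rw [Nat.even_iff]
          rw [Nat.odd_iff] at ho
          omega
        rw [if_neg hol]
        have heven : Even (l-1) := by
          rw [Nat.even_iff]
          rw [Nat.odd_iff] at ho
          omega
        rw [one_mul, (heven.neg_one_pow : ((-1 : MvPolynomial ℕ k))^(l-1) = 1),
          (heven.neg_one_pow : ((-1 : k))^(l-1) = 1),
          show ((1 : k) + 1)/2 = 1 by rw [one_add_one_eq_two, div_self two_ne], map_one]
    · intro j hj hj0
      rw [if_neg (show ¬ j ≤ 0 by omega), mul_zero, mul_zero]
  · rw [if_neg hn]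
    obtain ⟨m, rfl⟩ : ∃ m, n = m + 1 := ⟨n - 1, by omega⟩
    set n := m + 1 with hndef
    set N := l + n + 1 with hN
    set E : ℕ → MvPolynomial ℕ k := fun j => Es k (Finset.Icc 1 l) j with hE
    set HH : ℕ → MvPolynomial ℕ k := fun j => Hp k l j with hHH
    -- S1
    have hS1 : (∑ j ∈ Finset.range l, (if Even (l - j) then 0 else 1) *
          (E j * (if j ≤ n then (-1 : MvPolynomial ℕ k)^(l-1) * HH (n-j) else 0)))
        = (-1 : MvPolynomial ℕ k)^(l-1) *
          ∑ j ∈ Finset.range N, (if j ≤ n ∧ ¬ Even (l - j) then E j * HH (n-j) else 0) := by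
      rw [Finset.sum_subset (Finset.range_subset_range.mpr (show l ≤ N by omega))
        (fun j _ hjl => ?_), Finset.mul_sum]
      · refine Finset.sum_congr rfl fun j _ => ?_
        by_cases hev : Even (l - j) <;> by_cases hjn : j ≤ n <;>
          simp only [hev, hjn, if_true, if_false, ite_true, ite_false, not_true, not_false_iff,
            true_and, false_and, and_true, and_false] <;> ring
      · rw [Finset.mem_range, not_lt] at hjl
        rw [if_pos (by simp [Nat.sub_eq_zero_of_le hjl]), zero_mul]
    -- S2
    have hguard : ∀ (f : ℕ → MvPolynomial ℕ k),
        (∑ j ∈ Finset.range (n+1), f j)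
        = ∑ j ∈ Finset.range N, (if j ≤ n then f j else 0) := by
      intro f
      have h1 : (∑ j ∈ Finset.range (n+1), f j)
          = ∑ j ∈ Finset.range (n+1), (if j ≤ n then f j else 0) := by
        refine Finset.sum_congr rfl fun j hj => ?_
        rw [Finset.mem_range] at hj
        rw [if_pos (show j ≤ n by omega)]
      rw [h1]
      refine Finset.sum_subset (Finset.range_subset_range.mpr (show n+1 ≤ N by omega))
        (fun j _ hj => ?_)
      rw [Finset.mem_range, not_lt] at hj
      rw [if_neg (show ¬ j ≤ n by omega)]
    have hS2 : (∑ s ∈ Finset.range (n + 1), h s * esymPoly k l (n - s))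
        = ∑ j ∈ Finset.range N, (if j ≤ n then E j * HH (n-j) else 0) := by
      rw [← hguard (fun j => E j * HH (n-j))]
      rw [← Finset.sum_range_reflect (fun s => h s * esymPoly k l (n-s)) (n+1)]
      refine Finset.sum_congr rfl fun j hj => ?_
      rw [Finset.mem_range] at hj
      rw [show n+1-1-j = n - j by omega, hHp (n-j), hesym, show n-(n-j) = j by omega]
      rw [hE, hHH]
      ring
    -- S3 = 0
    have hS3 : (∑ j ∈ Finset.range N,
        (if j ≤ n then (-1 : MvPolynomial ℕ k)^j * E j * HH (n-j) else 0)) = 0 := by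
      rw [← hguard (fun j => (-1 : MvPolynomial ℕ k)^j * E j * HH (n-j))]
      exact newton k l m
    -- termwise identity
    have hterm : ∀ j ∈ Finset.range N,
        (2 : MvPolynomial ℕ k) * (if j ≤ n ∧ ¬ Even (l - j) then E j * HH (n-j) else 0)
        = (if j ≤ n then E j * HH (n-j) else 0)
          + (-1 : MvPolynomial ℕ k)^(l-1) *
            (if j ≤ n then (-1 : MvPolynomial ℕ k)^j * E j * HH (n-j) else 0) := by
      intro j _
      by_cases hjn : j ≤ n
      · by_cases hjl : j ≤ l
        · by_cases hev : Even (l - j)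
          · rw [if_neg (show ¬ (j ≤ n ∧ ¬ Even (l - j)) by tauto), if_pos hjn, if_pos hjn]
            have hodd : ¬ Even (l-1+j) := by
              rw [Nat.even_iff] at hev ⊢
              omega
            have hpow : ((-1 : MvPolynomial ℕ k))^(l-1) * (-1 : MvPolynomial ℕ k)^j = -1 := by
              rw [← pow_add]
              exact Odd.neg_one_pow (Nat.not_even_iff_odd.mp hodd)
            linear_combination (-(E j * HH (n-j))) * hpow
          · rw [if_pos ⟨hjn, hev⟩, if_pos hjn, if_pos hjn]
            have heven : Even (l-1+j) := by
              rw [Nat.even_iff] at hev ⊢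
              omega
            have hpow : ((-1 : MvPolynomial ℕ k))^(l-1) * (-1 : MvPolynomial ℕ k)^j = 1 := by
              rw [← pow_add]
              exact Even.neg_one_pow heven
            linear_combination (-(E j * HH (n-j))) * hpow
        · have hEj : E j = 0 := Es_of_lt k (by rw [hcardIcc]; omega)
          simp [hEj]
      · rw [if_neg (show ¬ (j ≤ n ∧ ¬ Even (l - j)) by tauto), if_neg hjn, if_neg hjn]
        simp
    have hdouble : (2 : MvPolynomial ℕ k) *
        (∑ j ∈ Finset.range N, (if j ≤ n ∧ ¬ Even (l - j) then E j * HH (n-j) else 0))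
        = ∑ j ∈ Finset.range N, (if j ≤ n then E j * HH (n-j) else 0) := by
      rw [Finset.mul_sum, Finset.sum_congr rfl hterm, Finset.sum_add_distrib, ← Finset.mul_sum,
        hS3, mul_zero, add_zero]
    have hconstk : (-((-1 : k)^l / 2)) * 2 = (-1 : k)^(l-1) := by
      rw [show l = l-1+1 by omega, pow_succ]
      field_simp
      rw [Nat.add_sub_cancel]
    have hconst : -(C ((-1 : k)^l / 2) : MvPolynomial ℕ k) * 2 = (-1 : MvPolynomial ℕ k)^(l-1) := by
      rw [show (2 : MvPolynomial ℕ k) = C (2 : k) from (map_ofNat C 2).symm,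
        ← map_neg, ← map_mul, hconstk, map_pow, map_neg, map_one]
    rw [hS1, hS2, ← hdouble]
    linear_combination (-(∑ j ∈ Finset.range N,
      (if j ≤ n ∧ ¬ Even (l - j) then E j * HH (n-j) else 0))) * hconst
end

section
/- The sequences ((-1)^r x_1^r)_{0≤r≤l-1} and (e_{l-1-r}(x_2,…,x_l))_{0≤r≤l-1} are dual bases of k[x_1,…,x_l]^{S_1×S_{l-1}} as a free module over k[x_1,…,x_l]^{S_l} with respect to the Frobenius trace ∂_{l-1}···∂_2∂_1; in particular Σ_{r=0}^{l-1} (-1)^r x_1^r e_{l-1-r}(x_2,…,x_l) = (x_2 - x_1)(x_3 - x_1)···(x_l - x_1). -/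
open MvPolynomial

section Aux
variable {k : Type*} [CommRing k]

noncomputable def myes : List ℕ → ℕ → MvPolynomial ℕ k
  | _, 0 => 1
  | [], _+1 => 0
  | (u::A), (n+1) => myes A (n+1) + X u * myes A n

noncomputable def myhs : List ℕ → ℕ → MvPolynomial ℕ k
  | _, 0 => 1
  | [], _+1 => 0
  | (u::A), (n+1) => myhs A (n+1) + X u * myhs (u::A) n
  termination_by L n => (L.length, n)

@[simp] lemma myes_zero (L : List ℕ) : (myes L 0 : MvPolynomial ℕ k) = 1 := by
  cases L <;> rfl

@[simp] lemma myhs_zero (L : List ℕ) : (myhs L 0 : MvPolynomial ℕ k) = 1 := by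
  cases L <;> rw [myhs]

@[simp] lemma myes_nil_succ (n : ℕ) : (myes [] (n+1) : MvPolynomial ℕ k) = 0 := rfl
@[simp] lemma myhs_nil_succ (n : ℕ) : (myhs [] (n+1) : MvPolynomial ℕ k) = 0 := by rw [myhs]

lemma myes_cons (u : ℕ) (A : List ℕ) (n : ℕ) :
    (myes (u::A) (n+1) : MvPolynomial ℕ k) = myes A (n+1) + X u * myes A n := rfl

lemma myhs_cons (u : ℕ) (A : List ℕ) (n : ℕ) :
    (myhs (u::A) (n+1) : MvPolynomial ℕ k) = myhs A (n+1) + X u * myhs (u::A) n := by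
  rw [myhs]

lemma myes_len : ∀ (L : List ℕ) (n : ℕ), L.length < n → (myes L n : MvPolynomial ℕ k) = 0
  | L, 0, h => by omega
  | [], n+1, h => rfl
  | (u::A), n+1, h => by
      simp only [List.length_cons] at h
      rw [myes_cons, myes_len A (n+1) (by omega)]
      cases n with
      | zero => omega
      | succ m => rw [myes_len A (m+1) (by omega)]; ring

lemma myes_comm (u v : ℕ) (A : List ℕ) (n : ℕ) :
    (myes (u::v::A) n : MvPolynomial ℕ k) = myes (v::u::A) n := by
  cases n with
  | zero => simp
  | succ n =>
    cases n with
    | zero => simp [myes_cons]; ring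
    | succ m => simp only [myes_cons]; ring

lemma myes_perm {L L' : List ℕ} (h : L.Perm L') (n : ℕ) :
    (myes L n : MvPolynomial ℕ k) = myes L' n := by
  induction h generalizing n with
  | nil => rfl
  | cons x _ ih =>
    cases n with
    | zero => simp
    | succ m => simp only [myes_cons, ih]
  | swap x y L =>
    exact myes_comm _ _ _ _
  | trans _ _ ih1 ih2 => rw [ih1, ih2]

lemma myhs_single (u n : ℕ) : (myhs [u] n : MvPolynomial ℕ k) = X u ^ n := by
  induction n with
  | zero => simp
  | succ m ih => rw [myhs_cons, ih, myhs_nil_succ, pow_succ]; ring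

lemma rename_myes (σ : ℕ → ℕ) : ∀ (L : List ℕ) (n : ℕ),
    rename σ (myes L n : MvPolynomial ℕ k) = myes (L.map σ) n
  | L, 0 => by simp
  | [], n+1 => by simp
  | (u::A), n+1 => by
      rw [myes_cons, map_add, map_mul, rename_X, rename_myes σ A (n+1),
        rename_myes σ A n, List.map_cons, myes_cons]

lemma rename_myhs (σ : ℕ → ℕ) : ∀ (L : List ℕ) (n : ℕ),
    rename σ (myhs L n : MvPolynomial ℕ k) = myhs (L.map σ) n
  | L, 0 => by simp
  | [], n+1 => by simp
  | (u::A), n+1 => by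
      rw [myhs_cons, map_add, map_mul, rename_X, rename_myhs σ A (n+1),
        rename_myhs σ (u::A) n, List.map_cons, myhs_cons]
  termination_by L n => (L.length, n)

lemma myhs_sub (u v : ℕ) (A : List ℕ) : ∀ n : ℕ,
    (myhs (u::A) (n+1) : MvPolynomial ℕ k) - myhs (v::A) (n+1)
      = (X u - X v) * myhs (u::v::A) n
  | 0 => by simp [myhs_cons]
  | n+1 => by
      have h1 := myhs_sub u v A n
      rw [myhs_cons u A (n+1), myhs_cons v A (n+1), myhs_cons u (v::A) n]
      linear_combination (X u : MvPolynomial ℕ k) * h1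

lemma myhs_comm (u v : ℕ) (A : List ℕ) : ∀ n : ℕ,
    (myhs (u::v::A) n : MvPolynomial ℕ k) = myhs (v::u::A) n
  | 0 => by simp
  | n+1 => by
      have ih := myhs_comm u v A n
      have h1 := myhs_sub (k := k) u v A n
      rw [ih] at h1
      rw [myhs_cons u (v::A) n, myhs_cons v (u::A) n, ih]
      linear_combination -h1

noncomputable def mys (L : List ℕ) (n : ℕ) : MvPolynomial ℕ k :=
  ∑ t ∈ Finset.range (n+1), (-1)^t * myhs L t * myes L (n-t)

@[simp] lemma mys_zero (L : List ℕ) : (mys L 0 : MvPolynomial ℕ k) = 1 := by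
  simp [mys]

lemma mys_rec (u : ℕ) (A : List ℕ) (n : ℕ) :
    (mys (u::A) (n+1) : MvPolynomial ℕ k)
      = mys A (n+1) + X u * mys A n - X u * mys (u::A) n := by
  have hsplit : (mys (u::A) (n+1) : MvPolynomial ℕ k)
      = (∑ t ∈ Finset.range (n+2), (-1:MvPolynomial ℕ k)^t * myhs A t * myes (u::A) (n+1-t))
      + (∑ t ∈ Finset.range (n+2), (-1:MvPolynomial ℕ k)^t *
          (if t = 0 then 0 else X u * myhs (u::A) (t-1)) * myes (u::A) (n+1-t)) := by
    rw [mys, ← Finset.sum_add_distrib]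
    apply Finset.sum_congr rfl
    intro t _
    cases t with
    | zero => simp
    | succ m => rw [myhs_cons]; simp only [if_neg (Nat.succ_ne_zero m), Nat.add_sub_cancel]; ring
  have h2 : (∑ t ∈ Finset.range (n+2), (-1:MvPolynomial ℕ k)^t *
          (if t = 0 then 0 else X u * myhs (u::A) (t-1)) * myes (u::A) (n+1-t))
      = - (X u * mys (u::A) n) := by
    rw [Finset.sum_range_succ']
    have e1 : ∀ t ∈ Finset.range (n+1),
        ((-1:MvPolynomial ℕ k)^(t+1) *
            (if t+1 = 0 then 0 else X u * myhs (u::A) (t+1-1))) * myes (u::A) (n+1-(t+1))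
          = -(X u * ((-1:MvPolynomial ℕ k)^t * myhs (u::A) t * myes (u::A) (n-t))) := by
      intro t _
      have he : n+1-(t+1) = n-t := by omega
      rw [he]
      simp only [Nat.succ_ne_zero, if_false, Nat.add_sub_cancel, pow_succ]
      ring
    rw [Finset.sum_congr rfl e1, Finset.sum_neg_distrib, mys, Finset.mul_sum]
    simp
  have h3 : (∑ t ∈ Finset.range (n+2), (-1:MvPolynomial ℕ k)^t * myhs A t * myes (u::A) (n+1-t))
      = mys A (n+1) + X u * mys A n := by
    rw [Finset.sum_range_succ]
    have hc : ∀ t ∈ Finset.range (n+1),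
        (-1:MvPolynomial ℕ k)^t * myhs A t * myes (u::A) (n+1-t)
          = ((-1)^t * myhs A t * myes A (n+1-t)) + X u * ((-1)^t * myhs A t * myes A (n-t)) := by
      intro t ht
      have ht' : t ≤ n := Finset.mem_range_succ_iff.mp ht
      have he : n+1-t = (n-t)+1 := by omega
      rw [he, myes_cons]; ring
    rw [Finset.sum_congr rfl hc, Finset.sum_add_distrib, ← Finset.mul_sum]
    have h4 : (mys A (n+1) : MvPolynomial ℕ k)
        = (∑ t ∈ Finset.range (n+1), (-1:MvPolynomial ℕ k)^t * myhs A t * myes A (n+1-t))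
          + (-1)^(n+1) * myhs A (n+1) := by
      rw [mys, Finset.sum_range_succ, Nat.sub_self, myes_zero, mul_one]
    rw [h4, mys]
    simp only [Nat.sub_self, myes_zero, mul_one]
    ring
  rw [hsplit, h2, h3]; ring

lemma mys_succ : ∀ (L : List ℕ) (n : ℕ), (mys L (n+1) : MvPolynomial ℕ k) = 0
  | [], n => by
      rw [mys, Finset.sum_eq_zero]
      intro t ht
      cases t with
      | zero => simp
      | succ m => simp
  | (u::A), 0 => by
      rw [mys_rec, mys_succ A 0]
      simp
  | (u::A), (n+1) => by
      rw [mys_rec, mys_succ A (n+1), mys_succ A n, mys_succ (u::A) n]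
      simp
  termination_by L n => (L.length, n)

lemma myes_finset : ∀ (L : List ℕ), L.Nodup → ∀ n : ℕ,
    (∑ S ∈ L.toFinset.powersetCard n, ∏ i ∈ S, (X i : MvPolynomial ℕ k)) = myes L n
  | L, hnd, 0 => by simp [Finset.powersetCard_zero]
  | [], _, n+1 => by
      rw [myes_nil_succ, Finset.sum_eq_zero]
      intro S hS
      rw [Finset.mem_powersetCard] at hS
      exact absurd (Finset.card_le_card hS.1) (by simp [hS.2])
  | (u::A), hnd, n+1 => by
      have hu : u ∉ A.toFinset := by
        simp only [List.mem_toFinset]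
        exact (List.nodup_cons.mp hnd).1
      have hndA : A.Nodup := (List.nodup_cons.mp hnd).2
      rw [List.toFinset_cons, Finset.powersetCard_succ_insert hu]
      have hdisj : Disjoint (Finset.powersetCard (n+1) A.toFinset)
          ((Finset.powersetCard n A.toFinset).image (insert u)) := by
        rw [Finset.disjoint_left]
        intro S hS1 hS2
        rw [Finset.mem_powersetCard] at hS1
        rw [Finset.mem_image] at hS2
        obtain ⟨T, _, rfl⟩ := hS2
        exact hu (hS1.1 (Finset.mem_insert_self u T))
      rw [Finset.sum_union hdisj]
      have himg : (∑ S ∈ (Finset.powersetCard n A.toFinset).image (insert u),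
            ∏ i ∈ S, (X i : MvPolynomial ℕ k))
          = ∑ S ∈ Finset.powersetCard n A.toFinset, X u * ∏ i ∈ S, (X i : MvPolynomial ℕ k) := by
        rw [Finset.sum_image]
        · apply Finset.sum_congr rfl
          intro S hS
          rw [Finset.mem_powersetCard] at hS
          have huS : u ∉ S := fun h => hu (hS.1 h)
          rw [Finset.prod_insert huS]
        · intro S hS T hT hST
          rw [Finset.mem_coe, Finset.mem_powersetCard] at hS hT
          have huS : u ∉ S := fun h => hu (hS.1 h)
          have huT : u ∉ T := fun h => hu (hT.1 h)
          have : ∀ x, x ∈ S ↔ x ∈ T := by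
            intro x
            constructor
            · intro hx
              have : x ∈ insert u T := hST ▸ Finset.mem_insert_of_mem hx
              rcases Finset.mem_insert.mp this with h | h
              · exact absurd (h ▸ hx) huS
              · exact h
            · intro hx
              have : x ∈ insert u S := hST.symm ▸ Finset.mem_insert_of_mem hx
              rcases Finset.mem_insert.mp this with h | h
              · exact absurd (h ▸ hx) huT
              · exact h
          exact Finset.ext this
      rw [himg, ← Finset.mul_sum, myes_finset A hndA (n+1), myes_finset A hndA n, myes_cons]

lemma myes_prod (y : ℕ) : ∀ (A : List ℕ),
    (∑ r ∈ Finset.range (A.length+1),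
        (-1:MvPolynomial ℕ k)^r * X y ^ r * myes A (A.length - r))
      = (A.map (fun x => (X x : MvPolynomial ℕ k) - X y)).prod
  | [] => by simp
  | (u::B) => by
      have ih := myes_prod y B
      set n := B.length with hn
      have hlen : (u::B).length = n + 1 := by simp [hn]
      rw [hlen]
      have hsplit : (∑ r ∈ Finset.range (n+2),
            (-1:MvPolynomial ℕ k)^r * X y ^ r * myes (u::B) (n+1-r))
          = (∑ r ∈ Finset.range (n+2), (-1:MvPolynomial ℕ k)^r * X y ^ r * myes B (n+1-r))
            + X u * (∑ r ∈ Finset.range (n+1),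
                (-1:MvPolynomial ℕ k)^r * X y ^ r * myes B (n-r)) := by
        rw [Finset.sum_range_succ, Finset.sum_range_succ (n := n+1)
          (f := fun r => (-1:MvPolynomial ℕ k)^r * X y ^ r * myes B (n+1-r))]
        have hc : ∀ r ∈ Finset.range (n+1),
            (-1:MvPolynomial ℕ k)^r * X y ^ r * myes (u::B) (n+1-r)
              = (-1:MvPolynomial ℕ k)^r * X y ^ r * myes B (n+1-r)
                + X u * ((-1:MvPolynomial ℕ k)^r * X y ^ r * myes B (n-r)) := by
          intro r hr
          have hr' : r ≤ n := Finset.mem_range_succ_iff.mp hr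
          have he : n+1-r = (n-r)+1 := by omega
          rw [he, myes_cons]; ring
        rw [Finset.sum_congr rfl hc, Finset.sum_add_distrib, Finset.mul_sum]
        simp only [Nat.sub_self, myes_zero, mul_one]
        ring
      have hfirst : (∑ r ∈ Finset.range (n+2),
            (-1:MvPolynomial ℕ k)^r * X y ^ r * myes B (n+1-r))
          = - (X y * (∑ r ∈ Finset.range (n+1),
              (-1:MvPolynomial ℕ k)^r * X y ^ r * myes B (n-r))) := by
        rw [Finset.sum_range_succ']
        have e1 : ∀ r ∈ Finset.range (n+1),
            (-1:MvPolynomial ℕ k)^(r+1) * X y ^ (r+1) * myes B (n+1-(r+1))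
              = -(X y * ((-1:MvPolynomial ℕ k)^r * X y ^ r * myes B (n-r))) := by
          intro r _
          have he : n+1-(r+1) = n-r := by omega
          rw [he, pow_succ, pow_succ]; ring
        rw [Finset.sum_congr rfl e1, Finset.sum_neg_distrib, Finset.mul_sum]
        have hz : (myes B (n+1) : MvPolynomial ℕ k) = 0 := myes_len B (n+1) (by omega)
        simp [hz]
      rw [hsplit, hfirst, ih, List.map_cons, List.prod_cons]
      ring

lemma myrev_cons (j : ℕ) :
    (List.range' 1 (j+1)).reverse = (j+1) :: (List.range' 1 j).reverse := by
  rw [List.range'_1_concat, List.reverse_append]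
  simp [Nat.add_comm]

lemma myrev_mem {j a : ℕ} (h : a ∈ (List.range' 1 j).reverse) : 1 ≤ a ∧ a < 1 + j := by
  rw [List.mem_reverse, List.mem_range'_1] at h
  exact h

end Aux

/-- The sequences `((-1)^r x_1^r)_{0≤r≤l-1}` and
`(e_{l-1-r}(x_2,…,x_l))_{0≤r≤l-1}` are dual bases of `k[x_1,…,x_l]^{S_1×S_{l-1}}` over
`k[x_1,…,x_l]^{S_l}` with respect to the Frobenius trace `∂_{l-1}···∂_2∂_1` (where `∂_i`
is characterized by `(x_{i+1}-x_i)·∂_i f = f - s_i f`): that is,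
`∂_{l-1}···∂_1((-1)^r x_1^r · e_{l-1-s}(x_2,…,x_l)) = δ_{r,s}`; in particular
`Σ_{r=0}^{l-1} (-1)^r x_1^r e_{l-1-r}(x_2,…,x_l) = (x_2-x_1)(x_3-x_1)···(x_l-x_1)`. -/
theorem stmt8 (k : Type*) [Field k] (l : ℕ) (hl : 1 ≤ l)
    (D : ℕ → MvPolynomial ℕ k → MvPolynomial ℕ k)
    (hD : ∀ (i : ℕ) (f : MvPolynomial ℕ k),
      (X (i + 1) - X i) * D i f = f - rename (Equiv.swap i (i + 1)) f) :
    (∀ r < l, ∀ s < l,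
        (((List.range (l - 1)).map (· + 1)).reverse).foldr D
            ((-1 : MvPolynomial ℕ k) ^ r * X 1 ^ r *
              ∑ S ∈ (Finset.Icc 2 l).powersetCard (l - 1 - s), ∏ i ∈ S, X i) =
          if r = s then 1 else 0) ∧
      ∑ r ∈ Finset.range l, (-1 : MvPolynomial ℕ k) ^ r * X 1 ^ r *
          ∑ S ∈ (Finset.Icc 2 l).powersetCard (l - 1 - r), ∏ i ∈ S, X i =
        ∏ i ∈ Finset.Icc 2 l, ((X i : MvPolynomial ℕ k) - X 1) := by
  classical
  -- basic cancellation
  have cancel : ∀ (i : ℕ) (a b : MvPolynomial ℕ k),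
      (X (i+1) - X i) * a = (X (i+1) - X i) * b → a = b := by
    intro i a b h
    have hne : (X (i+1) : MvPolynomial ℕ k) - X i ≠ 0 := by
      intro h0
      exact Nat.succ_ne_self i (X_injective (sub_eq_zero.mp h0))
    exact mul_left_cancel₀ hne h
  have Dzero : ∀ (i : ℕ) (f : MvPolynomial ℕ k),
      rename (Equiv.swap i (i+1)) f = f → D i f = 0 := by
    intro i f hf
    refine cancel i _ 0 ?_
    rw [hD, hf, sub_self, mul_zero]
  have Dmul : ∀ (i : ℕ) (f g : MvPolynomial ℕ k),
      rename (Equiv.swap i (i+1)) g = g → D i (f * g) = D i f * g := by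
    intro i f g hg
    refine cancel i _ _ ?_
    rw [hD, map_mul, hg]
    calc f * g - rename (Equiv.swap i (i+1)) f * g
        = (f - rename (Equiv.swap i (i+1)) f) * g := by ring
      _ = ((X (i+1) - X i) * D i f) * g := by rw [hD]
      _ = (X (i+1) - X i) * (D i f * g) := by ring
  have Dsum : ∀ (i : ℕ) (s : Finset ℕ) (f : ℕ → MvPolynomial ℕ k),
      D i (∑ x ∈ s, f x) = ∑ x ∈ s, D i (f x) := by
    intro i s f
    refine cancel i _ _ ?_
    rw [hD, map_sum, Finset.mul_sum, ← Finset.sum_sub_distrib]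
    exact Finset.sum_congr rfl fun x _ => (hD i (f x)).symm
  -- the fold
  have Fsucc : ∀ (j : ℕ) (p : MvPolynomial ℕ k),
      (((List.range (j+1)).map (· + 1)).reverse).foldr D p
        = D (j+1) ((((List.range j).map (· + 1)).reverse).foldr D p) := by
    intro j p
    rw [List.range_succ, List.map_append, List.reverse_append]
    simp
  -- swap fixes constants of the form (-1)^p
  have swap_neg_one : ∀ (i p : ℕ),
      rename (Equiv.swap i (i+1)) ((-1 : MvPolynomial ℕ k)^p) = (-1)^p := by
    intro i p
    simp
  -- main divided-difference computation
  have FX : ∀ (j n : ℕ),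
      (((List.range j).map (· + 1)).reverse).foldr D ((X 1 : MvPolynomial ℕ k) ^ n)
        = if j ≤ n then (-1 : MvPolynomial ℕ k)^j * myhs ((List.range' 1 (j+1)).reverse) (n - j)
          else 0 := by
    intro j
    induction j with
    | zero =>
      intro n
      simp [myhs_single]
    | succ j ih =>
      intro n
      rw [Fsucc, ih n]
      have hmap : (List.map (Equiv.swap (j+1) (j+2)) ((List.range' 1 j).reverse))
          = (List.range' 1 j).reverse := by
        have hfix : ∀ a ∈ (List.range' 1 j).reverse, (Equiv.swap (j+1) (j+2)) a = id a := by
          intro a ha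
          have := myrev_mem ha
          exact Equiv.swap_apply_of_ne_of_ne (by omega) (by omega)
        rw [List.map_congr_left hfix, List.map_id]
      by_cases h1 : j + 1 ≤ n
      · have h0 : j ≤ n := by omega
        rw [if_pos h0, if_pos h1]
        have hnj : n - j = (n - (j+1)) + 1 := by omega
        rw [myrev_cons j]
        set A := (List.range' 1 j).reverse with hA
        -- D (j+1) ((-1)^j * myhs ((j+1)::A) (n-j))
        have hren : rename (Equiv.swap (j+1) (j+1+1)) (myhs ((j+1)::A) (n-j) : MvPolynomial ℕ k)
            = myhs ((j+2)::A) (n-j) := by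
          rw [rename_myhs, List.map_cons]
          rw [show Equiv.swap (j+1) (j+1+1) (j+1) = j+2 from Equiv.swap_apply_left (j+1) (j+2)]
          rw [hA, hmap]
        have hDval : D (j+1) (myhs ((j+1)::A) (n-j) : MvPolynomial ℕ k)
            = - myhs ((j+2)::(j+1)::A) (n - (j+1)) := by
          refine cancel (j+1) _ _ ?_
          rw [hD, hren, hnj, myhs_sub (j+1) (j+2) A (n - (j+1)),
            myhs_comm (j+1) (j+2) A (n - (j+1))]
          ring
        have : D (j+1) ((-1 : MvPolynomial ℕ k)^j * myhs ((j+1)::A) (n-j))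
            = (-1 : MvPolynomial ℕ k)^j * D (j+1) (myhs ((j+1)::A) (n-j)) := by
          rw [mul_comm, Dmul (j+1) _ _ (swap_neg_one (j+1) j), mul_comm]
        rw [this, hDval, myrev_cons (j+1), myrev_cons j]
        rw [pow_succ]
        ring
      · rw [if_neg h1]
        by_cases h0 : j ≤ n
        · -- j = n, value is a constant
          have hjn : j = n := by omega
          rw [if_pos h0, hjn, Nat.sub_self, myhs_zero, mul_one]
          apply Dzero
          simp
        · rw [if_neg h0]
          apply Dzero
          simp
  -- invariance of the full elementary symmetric functions
  have Einv : ∀ (i t : ℕ), 1 ≤ i → i + 1 ≤ l →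
      rename (Equiv.swap i (i+1)) (myes (List.range' 1 l) t : MvPolynomial ℕ k)
        = myes (List.range' 1 l) t := by
    intro i t h1 h2
    rw [rename_myes]
    refine myes_perm ?_ t
    apply List.perm_of_nodup_nodup_toFinset_eq
    · exact (List.nodup_range' 1 Nat.one_pos).map (Equiv.injective _)
    · exact List.nodup_range' 1 Nat.one_pos
    · ext a
      simp only [List.mem_toFinset, List.mem_map, List.mem_range'_1]
      have hmem : ∀ b : ℕ, 1 ≤ b ∧ b < 1 + l → 1 ≤ Equiv.swap i (i+1) b ∧ Equiv.swap i (i+1) b < 1 + l := by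
        intro b hb
        rcases eq_or_ne b i with rfl|hbi
        · rw [Equiv.swap_apply_left]; omega
        rcases eq_or_ne b (i+1) with rfl|hbi1
        · rw [Equiv.swap_apply_right]; omega
        · rw [Equiv.swap_apply_of_ne_of_ne hbi hbi1]; exact hb
      constructor
      · rintro ⟨b, hb, rfl⟩
        exact hmem b hb
      · intro ha
        exact ⟨Equiv.swap i (i+1) a, hmem a ha, Equiv.swap_apply_self _ _ _⟩
  -- pulling invariant factors and sums through the fold
  have Fmul : ∀ (j : ℕ), j ≤ l - 1 → ∀ (g : MvPolynomial ℕ k) (t : ℕ),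
      (((List.range j).map (· + 1)).reverse).foldr D (g * myes (List.range' 1 l) t)
        = (((List.range j).map (· + 1)).reverse).foldr D g * myes (List.range' 1 l) t := by
    intro j
    induction j with
    | zero => intro _ g t; simp
    | succ j ih =>
      intro hj g t
      rw [Fsucc, Fsucc, ih (by omega), Dmul _ _ _ (Einv (j+1) t (by omega) (by omega))]
  have Fsum : ∀ (j : ℕ) (s : Finset ℕ) (f : ℕ → MvPolynomial ℕ k),
      (((List.range j).map (· + 1)).reverse).foldr D (∑ x ∈ s, f x)
        = ∑ x ∈ s, (((List.range j).map (· + 1)).reverse).foldr D (f x) := by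
    intro j
    induction j with
    | zero => intro s f; simp
    | succ j ih =>
      intro s f
      rw [Fsucc, ih, Dsum]
      exact Finset.sum_congr rfl fun x _ => (Fsucc j (f x)).symm ▸ rfl
  have Fscal : ∀ (j p : ℕ) (g : MvPolynomial ℕ k),
      (((List.range j).map (· + 1)).reverse).foldr D ((-1)^p * g)
        = (-1)^p * (((List.range j).map (· + 1)).reverse).foldr D g := by
    intro j p
    induction j with
    | zero => intro g; simp
    | succ j ih =>
      intro g
      rw [Fsucc, Fsucc, ih, mul_comm ((-1 : MvPolynomial ℕ k)^p), Dmul _ _ _ (swap_neg_one (j+1) p),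
        mul_comm]
  -- bridges
  have hIcc : Finset.Icc 2 l = (List.range' 2 (l-1)).toFinset := by
    ext a
    simp only [Finset.mem_Icc, List.mem_toFinset, List.mem_range'_1]
    omega
  have hE : ∀ m : ℕ, (∑ S ∈ (Finset.Icc 2 l).powersetCard m, ∏ i ∈ S, (X i : MvPolynomial ℕ k))
      = myes (List.range' 2 (l-1)) m := by
    intro m
    rw [hIcc, myes_finset _ (List.nodup_range' 1 Nat.one_pos) m]
  have hr1 : List.range' 1 l = 1 :: List.range' 2 (l-1) := by
    conv_lhs => rw [show l = (l-1)+1 from by omega, List.range'_succ]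
  have hC : ∀ m : ℕ, (myes (List.range' 2 (l-1)) m : MvPolynomial ℕ k)
      = ∑ j ∈ Finset.range (m+1),
          (-1:MvPolynomial ℕ k)^j * X 1 ^ j * myes (List.range' 1 l) (m - j) := by
    intro m
    induction m with
    | zero => simp
    | succ m ih =>
      rw [Finset.sum_range_succ']
      have e1 : ∀ j ∈ Finset.range (m+1),
          (-1:MvPolynomial ℕ k)^(j+1) * X 1^(j+1) * myes (List.range' 1 l) (m+1-(j+1))
            = -(X 1 * ((-1:MvPolynomial ℕ k)^j * X 1^j * myes (List.range' 1 l) (m-j))) := by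
        intro j _
        have he : m+1-(j+1) = m-j := by omega
        rw [he, pow_succ, pow_succ]; ring
      rw [Finset.sum_congr rfl e1, Finset.sum_neg_distrib, ← Finset.mul_sum, ← ih, hr1]
      simp only [pow_zero, one_mul, Nat.sub_zero]
      rw [myes_cons]
      ring
  constructor
  · -- part 1
    intro r hr s hs
    rw [hE, hC]
    have harg : (-1 : MvPolynomial ℕ k)^r * X 1^r *
        (∑ j ∈ Finset.range (l-1-s+1),
          (-1:MvPolynomial ℕ k)^j * X 1 ^ j * myes (List.range' 1 l) (l-1-s - j))
        = ∑ j ∈ Finset.range (l-1-s+1),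
            (-1:MvPolynomial ℕ k)^(r+j) * (X 1 ^ (r+j) * myes (List.range' 1 l) (l-1-s - j)) := by
      rw [Finset.mul_sum]
      refine Finset.sum_congr rfl fun j _ => ?_
      rw [pow_add, pow_add]; ring
    rw [harg, Fsum]
    have hterm : ∀ j ∈ Finset.range (l-1-s+1),
        (((List.range (l-1)).map (· + 1)).reverse).foldr D
            ((-1:MvPolynomial ℕ k)^(r+j) * (X 1 ^ (r+j) * myes (List.range' 1 l) (l-1-s - j)))
          = (-1:MvPolynomial ℕ k)^(r+j) *
              ((if l-1 ≤ r+j then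
                  (-1 : MvPolynomial ℕ k)^(l-1) * myhs ((List.range' 1 l).reverse) (r+j - (l-1))
                else 0) * myes (List.range' 1 l) (l-1-s - j)) := by
      intro j _
      rw [Fscal, Fmul (l-1) le_rfl (X 1 ^ (r+j)) (l-1-s-j), FX (l-1) (r+j),
        show l-1+1 = l from by omega]
    rw [Finset.sum_congr rfl hterm]
    by_cases hrs : r < s
    · rw [if_neg (by omega)]
      apply Finset.sum_eq_zero
      intro j hj
      rw [Finset.mem_range] at hj
      rw [if_neg (by omega)]
      ring
    · push_neg at hrs
      have hsplit : l - 1 - s + 1 = (l - 1 - r) + ((r - s) + 1) := by omega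
      rw [hsplit, Finset.sum_range_add]
      have hz1 : (∑ j ∈ Finset.range (l-1-r), (-1:MvPolynomial ℕ k)^(r+j) *
            ((if l-1 ≤ r+j then
                (-1 : MvPolynomial ℕ k)^(l-1) * myhs ((List.range' 1 l).reverse) (r+j - (l-1))
              else 0) * myes (List.range' 1 l) (l-1-s - j))) = 0 := by
        apply Finset.sum_eq_zero
        intro j hj
        rw [Finset.mem_range] at hj
        rw [if_neg (by omega)]
        ring
      have hsq : ((-1 : MvPolynomial ℕ k)^(l-1)) * ((-1 : MvPolynomial ℕ k)^(l-1)) = 1 := by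
        rw [← mul_pow]
        norm_num
      have hterm2 : ∀ t ∈ Finset.range (r-s+1),
          (-1:MvPolynomial ℕ k)^(r+((l-1-r)+t)) *
            ((if l-1 ≤ r+((l-1-r)+t) then
                (-1 : MvPolynomial ℕ k)^(l-1) * myhs ((List.range' 1 l).reverse) (r+((l-1-r)+t) - (l-1))
              else 0) * myes (List.range' 1 l) (l-1-s - ((l-1-r)+t)))
            = (-1:MvPolynomial ℕ k)^t * myhs ((List.range' 1 l).reverse) t *
                myes ((List.range' 1 l).reverse) (r-s-t) := by
        intro t ht
        rw [Finset.mem_range] at ht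
        have h1 : r + ((l-1-r)+t) = (l-1) + t := by omega
        have h2 : (l-1)+t - (l-1) = t := by omega
        have h3 : l-1-s-((l-1-r)+t) = r-s-t := by omega
        rw [h1, if_pos (by omega), h2, h3,
          myes_perm (List.reverse_perm (List.range' 1 l)) (r-s-t), pow_add]
        calc (-1:MvPolynomial ℕ k)^(l-1) * (-1:MvPolynomial ℕ k)^t *
              ((-1 : MvPolynomial ℕ k)^(l-1) * myhs ((List.range' 1 l).reverse) t *
                myes (List.range' 1 l) (r-s-t))
            = ((-1:MvPolynomial ℕ k)^(l-1) * (-1:MvPolynomial ℕ k)^(l-1)) *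
                ((-1:MvPolynomial ℕ k)^t * myhs ((List.range' 1 l).reverse) t *
                  myes (List.range' 1 l) (r-s-t)) := by ring
          _ = (-1:MvPolynomial ℕ k)^t * myhs ((List.range' 1 l).reverse) t *
                myes (List.range' 1 l) (r-s-t) := by rw [hsq, one_mul]
      rw [hz1, zero_add, Finset.sum_congr rfl hterm2]
      have hmys : (∑ t ∈ Finset.range (r-s+1), (-1:MvPolynomial ℕ k)^t *
            myhs ((List.range' 1 l).reverse) t * myes ((List.range' 1 l).reverse) (r-s-t))
          = mys ((List.range' 1 l).reverse) (r-s) := by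
        rw [mys]
      rw [hmys]
      by_cases hrs2 : r = s
      · rw [if_pos hrs2, show r - s = 0 from by omega, mys_zero]
      · rw [if_neg hrs2, show r - s = (r - s - 1) + 1 from by omega, mys_succ]
  · -- part 2
    have hlen : (List.range' 2 (l-1)).length = l - 1 := List.length_range'
    calc (∑ r ∈ Finset.range l, (-1 : MvPolynomial ℕ k) ^ r * X 1 ^ r *
            ∑ S ∈ (Finset.Icc 2 l).powersetCard (l - 1 - r), ∏ i ∈ S, X i)
        = ∑ r ∈ Finset.range ((List.range' 2 (l-1)).length + 1),
            (-1 : MvPolynomial ℕ k) ^ r * X 1 ^ r *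
              myes (List.range' 2 (l-1)) ((List.range' 2 (l-1)).length - r) := by
          rw [hlen, show l - 1 + 1 = l from by omega]
          exact Finset.sum_congr rfl fun r _ => by rw [hE]
      _ = ((List.range' 2 (l-1)).map (fun x => (X x : MvPolynomial ℕ k) - X 1)).prod :=
          myes_prod 1 _
      _ = ∏ i ∈ Finset.Icc 2 l, ((X i : MvPolynomial ℕ k) - X 1) := by
          rw [hIcc, List.prod_toFinset _ (List.nodup_range' 1 Nat.one_pos)]
end

section
/- For 2 ≤ n ≤ l-1 and partial symmetrization operators in k[x_1,…,x_l]: writing η₊ = (x_{n+1}−x_1)(x_{n+2}−x_1)···(x_l−x_1) and η₋ = (x_{n+1}+x_1)(x_{n+2}+x_1)···(x_l+x_1), the Demazure operator composite (∂_{l-1}···∂_2∂_1)(∂_{l-n+1}···∂_{l-1})···(∂_3···∂_{n+1})(∂_2···∂_n) applied to (−x_1)^{l−1}·η₋^{⌈(n−1)/2⌉}·η₊^{⌊(n−1)/2⌋} equals 1. -/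
open MvPolynomial

namespace Stmt9Aux
variable {R : Type*} [CommRing R]

def Hs : ℕ → List R → R
  | 0, _ => 0
  | 1, _ => 1
  | _+2, [] => 0
  | m+2, t :: ts => t * Hs (m+1) (t :: ts) + Hs (m+2) ts
termination_by m ts => (m, ts.length)

@[simp] lemma Hs_zero (L : List R) : Hs 0 L = 0 := by simp [Hs]
@[simp] lemma Hs_one (L : List R) : Hs 1 L = 1 := by simp [Hs]
lemma Hs_nil (m : ℕ) : Hs (m+2) ([] : List R) = 0 := by simp [Hs]
lemma Hs_cons (m : ℕ) (t : R) (ts : List R) :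
    Hs (m+2) (t :: ts) = t * Hs (m+1) (t :: ts) + Hs (m+2) ts := by rw [Hs]

lemma Hs_diff : ∀ (m : ℕ) (u v : R) (S : List R),
    Hs m (u :: S) - Hs m (v :: S) = (u - v) * Hs (m - 1) (u :: v :: S)
  | 0, u, v, S => by simp
  | 1, u, v, S => by simp
  | (m+2), u, v, S => by
    have e1 := Hs_cons m u S
    have e2 := Hs_cons m v S
    show _ = (u - v) * Hs (m + 1) (u :: v :: S)
    match m with
    | 0 =>
      norm_num [Hs_one] at e1 e2 ⊢
      linear_combination e1 - e2
    | (m'+1) =>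
      have ih := Hs_diff (m'+2) u v S
      simp only [show m'+2-1 = m'+1 by omega] at ih
      have exp := Hs_cons m' u (v :: S)
      linear_combination e1 - e2 + u * ih - (u - v) * exp
termination_by m => m

lemma Hs_swap : ∀ (m : ℕ) (a b : R) (S : List R),
    Hs m (a :: b :: S) = Hs m (b :: a :: S)
  | 0, a, b, S => by simp
  | 1, a, b, S => by simp
  | (m+2), a, b, S => by
    have e1 := Hs_cons m a (b :: S)
    have eL := Hs_cons m b S
    have e3 := Hs_cons m b (a :: S)
    have eR := Hs_cons m a S
    match m with
    | 0 =>
      norm_num [Hs_one] at e1 eL e3 eR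
      linear_combination e1 + eL - e3 - eR
    | (m'+1) =>
      have ihs : Hs (m'+2) (a :: b :: S) = Hs (m'+2) (b :: a :: S) :=
        Hs_swap (m'+2) a b S
      have hd := Hs_diff (m'+2) a b S
      simp only [show m'+2-1 = m'+1 by omega] at hd
      have exp := Hs_cons m' a (b :: S)
      linear_combination e1 + eL - e3 - eR + b * ihs - a * hd + (a-b) * exp
termination_by m => m

lemma Hs_single : ∀ (d : ℕ) (t : R), Hs (d+1) [t] = t^d
  | 0, t => by simp
  | d+1, t => by rw [Hs_cons, Hs_nil, Hs_single d t]; ring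

lemma map_Hs {S : Type*} [CommRing S] (φ : R →+* S) :
    ∀ (m : ℕ) (L : List R), φ (Hs m L) = Hs m (L.map φ)
  | 0, L => by simp
  | 1, L => by simp
  | m+2, [] => by simp [Hs_nil]
  | m+2, t :: ts => by
    rw [Hs_cons, map_add, map_mul, map_Hs φ (m+1) (t :: ts), map_Hs φ (m+2) ts,
      List.map_cons, Hs_cons]
termination_by m L => (m, L.length)

/-- Divided difference of a one-variable polynomial at a list of points. -/
def DD (q : Polynomial R) (L : List R) : R :=
  ∑ d ∈ Finset.range (q.natDegree + 1), q.coeff d * Hs (d + 2 - L.length) L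

lemma DD_single (q : Polynomial R) (t : R) : DD q [t] = q.eval t := by
  rw [DD, Polynomial.eval_eq_sum_range]
  refine Finset.sum_congr rfl fun d _ => ?_
  rw [List.length_singleton, show d + 2 - 1 = d + 1 by omega, Hs_single]

lemma DD_diff (q : Polynomial R) (u v : R) (S : List R) :
    DD q (u :: S) - DD q (v :: S) = (u - v) * DD q (u :: v :: S) := by
  rw [DD, DD, DD, ← Finset.sum_sub_distrib, Finset.mul_sum]
  refine Finset.sum_congr rfl fun d _ => ?_
  have h := Hs_diff (d + 2 - (u :: S).length) u v S
  simp only [List.length_cons] at h ⊢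
  rw [show d + 2 - (S.length + 1) - 1 = d + 2 - (S.length + 1 + 1) by omega] at h
  linear_combination q.coeff d * h

lemma DD_swap (q : Polynomial R) (a b : R) (S : List R) :
    DD q (a :: b :: S) = DD q (b :: a :: S) := by
  rw [DD, DD]
  refine Finset.sum_congr rfl fun d _ => ?_
  rw [List.length_cons, List.length_cons, List.length_cons, List.length_cons, Hs_swap]

lemma DD_top (q : Polynomial R) (L : List R) (h : L.length = q.natDegree + 1) :
    DD q L = q.leadingCoeff := by
  rw [DD, Finset.sum_range_succ, Finset.sum_eq_zero, zero_add, h,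
    show q.natDegree + 2 - (q.natDegree + 1) = 1 by omega, Hs_one, mul_one,
    Polynomial.leadingCoeff]
  intro d hd
  rw [Finset.mem_range] at hd
  rw [h, show d + 2 - (q.natDegree + 1) = 0 by omega, Hs_zero, mul_zero]

end Stmt9Aux

namespace Stmt9Aux
variable {k : Type*} [Field k]

lemma rename_DD (e : ℕ → ℕ) (q : Polynomial (MvPolynomial ℕ k)) (L : List (MvPolynomial ℕ k))
    (hq : ∀ d, rename e (q.coeff d) = q.coeff d) :
    rename e (DD q L) = DD q (L.map (rename e)) := by
  rw [DD, DD, map_sum]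
  refine Finset.sum_congr rfl fun d _ => ?_
  rw [map_mul, hq, List.length_map]
  congr 1
  exact map_Hs (rename e).toRingHom _ L

lemma X_sub_ne (i : ℕ) : (X (i+1) : MvPolynomial ℕ k) - X i ≠ 0 := by
  rw [sub_ne_zero]
  intro h
  have := X_injective (R := k) h
  omega

variable (D : ℕ → MvPolynomial ℕ k → MvPolynomial ℕ k)

lemma D_eq (hD : ∀ (i : ℕ) (f : MvPolynomial ℕ k),
      (X (i + 1) - X i) * D i f = f - rename (Equiv.swap i (i + 1)) f) (i : ℕ) (f g : MvPolynomial ℕ k)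
    (h : (X (i+1) - X i) * g = f - rename (Equiv.swap i (i+1)) f) : D i f = g :=
  mul_left_cancel₀ (X_sub_ne i) ((hD i f).trans h.symm)

lemma step_down (hD : ∀ (i : ℕ) (f : MvPolynomial ℕ k),
      (X (i + 1) - X i) * D i f = f - rename (Equiv.swap i (i + 1)) f) (i : ℕ) (q : Polynomial (MvPolynomial ℕ k)) (C : MvPolynomial ℕ k)
    (S : List (MvPolynomial ℕ k))
    (hC : rename (Equiv.swap i (i+1)) C = C)
    (hq : ∀ d, rename (Equiv.swap i (i+1)) (q.coeff d) = q.coeff d)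
    (hS : ∀ x ∈ S, rename (Equiv.swap i (i+1)) x = x) :
    D i (C * DD q (X (i+1) :: S)) = C * DD q (X i :: X (i+1) :: S) := by
  apply D_eq D hD
  have hSm : S.map (rename (Equiv.swap i (i+1))) = S := by
    rw [List.map_congr_left hS]; exact List.map_id _
  have hren : rename (Equiv.swap i (i+1)) (C * DD q (X (i+1) :: S))
      = C * DD q (X i :: S) := by
    rw [map_mul, hC, rename_DD _ _ _ hq, List.map_cons, hSm, rename_X,
      Equiv.swap_apply_right]
  rw [hren]
  have hd := DD_diff q (X (i+1)) (X i) S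
  have hs := DD_swap q (X (i+1)) (X i) S
  linear_combination (-C) * hd - (X (i+1) - X i : MvPolynomial ℕ k) * C * hs

lemma step_up (hD : ∀ (i : ℕ) (f : MvPolynomial ℕ k),
      (X (i + 1) - X i) * D i f = f - rename (Equiv.swap i (i + 1)) f) (i : ℕ) (q : Polynomial (MvPolynomial ℕ k)) (C : MvPolynomial ℕ k)
    (S : List (MvPolynomial ℕ k))
    (hC : rename (Equiv.swap i (i+1)) C = C)
    (hq : ∀ d, rename (Equiv.swap i (i+1)) (q.coeff d) = q.coeff d)
    (hS : ∀ x ∈ S, rename (Equiv.swap i (i+1)) x = x) :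
    D i (C * DD q (X i :: S)) = -(C * DD q (X (i+1) :: X i :: S)) := by
  apply D_eq D hD
  have hSm : S.map (rename (Equiv.swap i (i+1))) = S := by
    rw [List.map_congr_left hS]; exact List.map_id _
  have hren : rename (Equiv.swap i (i+1)) (C * DD q (X i :: S))
      = C * DD q (X (i+1) :: S) := by
    rw [map_mul, hC, rename_DD _ _ _ hq, List.map_cons, hSm, rename_X,
      Equiv.swap_apply_left]
  rw [hren]
  have hd := DD_diff q (X i) (X (i+1)) S
  have hs := DD_swap q (X i) (X (i+1)) S
  linear_combination (-C) * hd + (X (i+1) - X i : MvPolynomial ℕ k) * C * hs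

lemma rename_X_fix (j m : ℕ) (h1 : m ≠ j) (h2 : m ≠ j+1) :
    rename (Equiv.swap j (j+1)) (X m : MvPolynomial ℕ k) = X m := by
  rw [rename_X, Equiv.swap_apply_of_ne_of_ne h1 h2]

lemma foldr_block (hD : ∀ (i : ℕ) (f : MvPolynomial ℕ k),
      (X (i + 1) - X i) * D i f = f - rename (Equiv.swap i (i + 1)) f)
    (q : Polynomial (MvPolynomial ℕ k))
    (hq : ∀ j d, 2 ≤ j → rename (Equiv.swap j (j+1)) (q.coeff d) = q.coeff d) :
    ∀ (c i t0 : ℕ) (C : MvPolynomial ℕ k), 2 ≤ i → 1 ≤ t0 →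
    (∀ j, i ≤ j → j < i + c → rename (Equiv.swap j (j+1)) C = C) →
    List.foldr D (C * DD q ((List.range' (i+c) t0).map X)) (List.range' i c) =
      C * DD q ((List.range' i (t0 + c)).map X) := by
  intro c
  induction c with
  | zero => intro i t0 C hi ht hC; simp
  | succ c ih =>
    intro i t0 C hi ht hC
    rw [List.range'_succ, List.foldr_cons, show i + (c+1) = (i+1) + c by omega,
      ih (i+1) t0 C (by omega) ht (fun j h1 h2 => hC j (by omega) (by omega)),
      show t0 + c = (t0 + c - 1) + 1 by omega, List.range'_succ, List.map_cons]
    rw [step_down D hD i q C _ (hC i (by omega) (by omega)) (fun d => hq i d hi) ?_]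
    · congr 1
      rw [show t0 + (c+1) = (t0 + c - 1) + 1 + 1 by omega, List.range'_succ,
        List.range'_succ, List.map_cons, List.map_cons]
    · intro x hx
      rw [List.mem_map] at hx
      obtain ⟨j, hj, rfl⟩ := hx
      rw [List.mem_range'_1] at hj
      exact rename_X_fix i j (by omega) (by omega)

lemma foldr_segA (hD : ∀ (i : ℕ) (f : MvPolynomial ℕ k),
      (X (i + 1) - X i) * D i f = f - rename (Equiv.swap i (i + 1)) f)
    (q : Polynomial (MvPolynomial ℕ k))
    (hq : ∀ j d, rename (Equiv.swap j (j+1)) (q.coeff d) = q.coeff d) :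
    ∀ c, List.foldr D (DD q [X 1]) ((List.range' 1 c).reverse) =
      (-1 : MvPolynomial ℕ k)^c * DD q (((List.range' 1 (c+1)).map X).reverse) := by
  intro c
  induction c with
  | zero => simp [List.range'_one]
  | succ c ih =>
    have hrev : ∀ c' : ℕ, ((List.range' 1 (c'+1)).map X).reverse
        = (X (c'+1) : MvPolynomial ℕ k) :: ((List.range' 1 c').map X).reverse := by
      intro c'
      rw [List.range'_concat, List.map_append, List.reverse_append]
      simp
      omega
    rw [List.range'_concat]
    simp only [show (1:ℕ) + 1 * c = c + 1 by omega]
    rw [List.reverse_append, List.reverse_singleton, List.singleton_append,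
      List.foldr_cons, ih, hrev c]
    rw [step_up D hD (c+1) q _ _ ?_ (fun d => hq (c+1) d) ?_]
    · rw [hrev (c+1), hrev c]
      ring
    · simp
    · intro x hx
      rw [List.mem_reverse, List.mem_map] at hx
      obtain ⟨j, hj, rfl⟩ := hx
      rw [List.mem_range'_1] at hj
      exact rename_X_fix (c+1) j (by omega) (by omega)

/-- The one-variable polynomial `(t+x₁)^(n/2)·(t-x₁)^((n-1)/2)`. -/
noncomputable def qq (k : Type*) [Field k] (n : ℕ) : Polynomial (MvPolynomial ℕ k) :=
  (Polynomial.X + Polynomial.C (X 1))^(n/2) * (Polynomial.X - Polynomial.C (X 1))^((n-1)/2)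

/-- The intermediate state after `t` blocks. -/
noncomputable def Pt (k : Type*) [Field k] (l n t : ℕ) : MvPolynomial ℕ k :=
  (-(X 1 : MvPolynomial ℕ k))^(l-1) *
    ∏ i ∈ Finset.Icc (n+1+t) l,
      ((X i + X 1 : MvPolynomial ℕ k)^(n/2) * (X i - X 1)^((n-1)/2))

lemma qq_monic (n : ℕ) : (qq k n).Monic :=
  ((Polynomial.monic_X_add_C _).pow _).mul ((Polynomial.monic_X_sub_C _).pow _)

lemma qq_natDegree (n : ℕ) (hn : 1 ≤ n) : (qq k n).natDegree = n - 1 := by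
  rw [qq, Polynomial.Monic.natDegree_mul ((Polynomial.monic_X_add_C _).pow _)
    ((Polynomial.monic_X_sub_C _).pow _), Polynomial.natDegree_pow,
    Polynomial.natDegree_pow, Polynomial.natDegree_X_add_C, Polynomial.natDegree_X_sub_C]
  omega

lemma qq_coeff_fix (n : ℕ) : ∀ j d, 2 ≤ j →
    rename (Equiv.swap j (j+1)) ((qq k n).coeff d) = (qq k n).coeff d := by
  intro j d hj
  have hmap : (qq k n).map (rename (Equiv.swap j (j+1))).toRingHom = qq k n := by
    rw [qq]
    simp only [Polynomial.map_mul, Polynomial.map_pow, Polynomial.map_add,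
      Polynomial.map_sub, Polynomial.map_X, Polynomial.map_C, AlgHom.toRingHom_eq_coe,
      RingHom.coe_coe]
    rw [rename_X_fix j 1 (by omega) (by omega)]
  conv_rhs => rw [← hmap]
  rw [Polynomial.coeff_map]
  rfl

lemma qq_eval (n j : ℕ) :
    Polynomial.eval (X j) (qq k n) =
      (X j + X 1 : MvPolynomial ℕ k)^(n/2) * (X j - X 1)^((n-1)/2) := by
  simp [qq]

lemma block_step (hD : ∀ (i : ℕ) (f : MvPolynomial ℕ k),
      (X (i + 1) - X i) * D i f = f - rename (Equiv.swap i (i + 1)) f)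
    (l n t : ℕ) (hn2 : 2 ≤ n) (hnl : n ≤ l - 1) (ht : t < l - n) :
    List.foldr D (Pt k l n t) ((List.range (n-1)).map fun j => t+2+j) = Pt k l n (t+1) := by
  have hl : 3 ≤ l := by omega
  set C : MvPolynomial ℕ k := (-(X 1 : MvPolynomial ℕ k))^(l-1) *
    ∏ i ∈ Finset.Icc (n+2+t) l,
      ((X i + X 1 : MvPolynomial ℕ k)^(n/2) * (X i - X 1)^((n-1)/2)) with hC_def
  have hsplit : Pt k l n t = C * Polynomial.eval (X (n+1+t)) (qq k n) := by
    rw [Pt, ← Finset.Ico_add_one_right_eq_Icc,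
      Finset.prod_eq_prod_Ico_succ_bot (show n+1+t < l+1 by omega),
      show n+1+t+1 = n+2+t by omega, Finset.Ico_add_one_right_eq_Icc, qq_eval, hC_def]
    ring
  have hCinv : ∀ j, t+2 ≤ j → j < t+2+(n-1) →
      rename (Equiv.swap j (j+1)) C = C := by
    intro j hj1 hj2
    rw [hC_def]
    simp only [map_mul, map_pow, map_neg, map_prod, map_add, map_sub, rename_X]
    rw [Equiv.swap_apply_of_ne_of_ne (show (1:ℕ) ≠ j by omega) (show (1:ℕ) ≠ j+1 by omega)]
    congr 1
    refine Finset.prod_congr rfl fun i hi => ?_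
    rw [Finset.mem_Icc] at hi
    rw [Equiv.swap_apply_of_ne_of_ne (show i ≠ j by omega) (show i ≠ j+1 by omega)]
  have hlist : ((List.range (n-1)).map fun j => t+2+j) = List.range' (t+2) (n-1) :=
    List.range'_eq_map_range.symm
  have hmain := foldr_block D hD (qq k n) (qq_coeff_fix n) (n-1) (t+2) 1 C
    (by omega) (by omega) hCinv
  rw [show (t+2) + (n-1) = n+1+t by omega, List.range'_one, List.map_cons, List.map_nil,
    DD_single] at hmain
  rw [hsplit, hlist, hmain, show 1 + (n-1) = n by omega,
    DD_top _ _ (by simp only [List.length_map, List.length_range']; rw [qq_natDegree n (by omega)]; omega),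
    (qq_monic n).leadingCoeff, mul_one, Pt, hC_def, show n+1+(t+1) = n+2+t by omega]

lemma bpart (hD : ∀ (i : ℕ) (f : MvPolynomial ℕ k),
      (X (i + 1) - X i) * D i f = f - rename (Equiv.swap i (i + 1)) f)
    (l n : ℕ) (hn2 : 2 ≤ n) (hnl : n ≤ l - 1) :
    ∀ t, t ≤ l - n →
    List.foldr D (Pt k l n 0)
      (((List.range t).reverse.map fun m => (List.range (n-1)).map fun j => m+2+j).flatten)
      = Pt k l n t := by
  intro t
  induction t with
  | zero => intro _; simp
  | succ t ih =>
    intro ht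
    rw [List.range_succ, List.reverse_append, List.reverse_singleton, List.singleton_append,
      List.map_cons, List.flatten_cons, List.foldr_append, ih (by omega),
      block_step D hD l n t hn2 hnl (by omega)]

/-- The one-variable polynomial `(-t)^(l-1)`. -/
noncomputable def rr (k : Type*) [Field k] (l : ℕ) : Polynomial (MvPolynomial ℕ k) :=
  Polynomial.C ((-1 : MvPolynomial ℕ k)^(l-1)) * Polynomial.X^(l-1)

lemma rr_natDegree (l : ℕ) : (rr k l).natDegree = l - 1 :=
  Polynomial.natDegree_C_mul_X_pow _ _ (pow_ne_zero _ (neg_ne_zero.mpr one_ne_zero))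

lemma rr_leadingCoeff (l : ℕ) : (rr k l).leadingCoeff = (-1 : MvPolynomial ℕ k)^(l-1) := by
  rw [Polynomial.leadingCoeff, rr_natDegree, rr, Polynomial.coeff_C_mul,
    Polynomial.coeff_X_pow, if_pos rfl, mul_one]

lemma rr_coeff_fix (l : ℕ) : ∀ j d,
    rename (Equiv.swap j (j+1)) ((rr k l).coeff d) = (rr k l).coeff d := by
  intro j d
  rw [rr, Polynomial.coeff_C_mul, Polynomial.coeff_X_pow]
  split_ifs with h
  · rw [mul_one]; simp
  · simp

end Stmt9Aux

open Stmt9Aux in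
/-- For `2 ≤ n ≤ l-1`, with `η₊ = (x_{n+1}-x_1)···(x_l-x_1)` and
`η₋ = (x_{n+1}+x_1)···(x_l+x_1)` in `k[x_1,…,x_l]`, the composite Demazure operator
`(∂_{l-1}···∂_2∂_1)(∂_{l-n+1}···∂_{l-1})···(∂_3···∂_{n+1})(∂_2···∂_n)` applied to
`(-x_1)^{l-1}·η₋^{⌈(n-1)/2⌉}·η₊^{⌊(n-1)/2⌋}` equals `1`.  Here `∂_i` is characterized by
`(x_{i+1}-x_i)·∂_i f = f - s_i f` with `s_i` transposing `x_i, x_{i+1}`, and the word of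
indices is applied rightmost-first. -/
theorem stmt9 (k : Type*) [Field k] (hk : ringChar k ≠ 2) (l n : ℕ)
    (hn2 : 2 ≤ n) (hnl : n ≤ l - 1)
    (D : ℕ → MvPolynomial ℕ k → MvPolynomial ℕ k)
    (hD : ∀ (i : ℕ) (f : MvPolynomial ℕ k),
      (X (i + 1) - X i) * D i f = f - rename (Equiv.swap i (i + 1)) f) :
    ((((List.range (l - 1)).map (· + 1)).reverse ++
        (((List.range (l - n)).reverse.map fun m =>
          (List.range (n - 1)).map fun j => m + 2 + j)).flatten).foldr D
        ((-(X 1 : MvPolynomial ℕ k)) ^ (l - 1) *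
          (∏ i ∈ Finset.Icc (n + 1) l, ((X i : MvPolynomial ℕ k) + X 1)) ^ (n / 2) *
          (∏ i ∈ Finset.Icc (n + 1) l, ((X i : MvPolynomial ℕ k) - X 1)) ^ ((n - 1) / 2))) =
      1 := by
  have hl : 3 ≤ l := by omega
  have hP0 : ((-(X 1 : MvPolynomial ℕ k)) ^ (l - 1) *
          (∏ i ∈ Finset.Icc (n + 1) l, ((X i : MvPolynomial ℕ k) + X 1)) ^ (n / 2) *
          (∏ i ∈ Finset.Icc (n + 1) l, ((X i : MvPolynomial ℕ k) - X 1)) ^ ((n - 1) / 2))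
      = Pt k l n 0 := by
    rw [Pt, show n+1+0 = n+1 by omega, Finset.prod_mul_distrib, Finset.prod_pow,
      Finset.prod_pow, mul_assoc]
  have hend : Pt k l n (l-n) = DD (rr k l) [X 1] := by
    rw [DD_single, Pt, Finset.Icc_eq_empty (by omega), Finset.prod_empty, mul_one, rr,
      Polynomial.eval_mul, Polynomial.eval_C, Polynomial.eval_pow, Polynomial.eval_X,
      neg_pow]
  have hAlist : ((List.range (l-1)).map (· + 1)).reverse = (List.range' 1 (l-1)).reverse := by
    congr 1
    rw [List.range'_eq_map_range]
    exact List.map_congr_left (fun x _ => by omega)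
  rw [List.foldr_append, hP0, bpart D hD l n hn2 hnl (l-n) le_rfl, hend, hAlist,
    foldr_segA D hD (rr k l) (rr_coeff_fix l) (l-1),
    DD_top _ _ (by simp only [List.length_reverse, List.length_map, List.length_range',
      rr_natDegree]),
    rr_leadingCoeff, ← mul_pow]
  norm_num
end

section
/- For the bilinear form on V(l) determined by (η_l, η_l) = 1, adjunction (uv₁, v₂) = (v₁, ρ(u)v₂), and orthogonality of the standard basis with conjugate-norms q^{n(l−n)}·qbinom(l,n)_q, the top degree term of the Laurent polynomial (b^n η_l, b^n η_l) is q^{2·binom(n,2)} for 0 ≤ n ≤ l, and is q^{(2n−l)(l−1)} for n ≥ l, where b = f + ρ(f). -/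
open LaurentPolynomial

/-- The balanced quantum integer `[m]_q` in `ℤ[q,q⁻¹]`. -/
noncomputable def qint (m : ℕ) : LaurentPolynomial ℤ :=
  ∑ i ∈ Finset.range m, T (2 * (i : ℤ) - ((m : ℤ) - 1))

/-- The balanced Gaussian binomial coefficient `[a choose b]_q`, via the q-Pascal
recursion; it is invariant under the bar involution `q ↦ q⁻¹`. -/
noncomputable def qbinomQ : ℕ → ℕ → LaurentPolynomial ℤ
  | _, 0 => 1
  | 0, _ + 1 => 0
  | a + 1, b + 1 =>
      T (-((a : ℤ) - b)) * qbinomQ a b + T ((b : ℤ) + 1) * qbinomQ a (b + 1)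

/-- `P` has top degree term exactly `q^d` (leading coefficient `1`). -/
def HasTopTerm (P : LaurentPolynomial ℤ) (d : ℤ) : Prop :=
  ∃ p : Polynomial ℤ, p.Monic ∧ P = Polynomial.toLaurent p * T (d - (p.natDegree : ℤ))

open Polynomial


/-- triangular numbers -/
def s12tri : ℕ → ℕ
  | 0 => 0
  | n+1 => s12tri n + (n+1)

lemma s12tri_two (n : ℕ) : 2 * s12tri n = n * (n+1) := by
  induction n with
  | zero => rfl
  | succ n ih => rw [s12tri]; ring_nf; ring_nf at ih; omega

lemma s12tri_pred_cast (k : ℕ) : (2 * (s12tri (k-1)) : ℤ) = (k:ℤ) * ((k:ℤ) - 1) := by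
  cases k with
  | zero => simp [s12tri]
  | succ k =>
    have h := s12tri_two k
    zify at h
    simp only [Nat.add_sub_cancel]
    push_cast
    linear_combination h

/-- `p` has natDegree at most `d` and coefficient `1` at `d`. -/
def TopB (p : Polynomial ℤ) (d : ℕ) : Prop := p.natDegree ≤ d ∧ p.coeff d = 1

lemma TopB_mul {p q : Polynomial ℤ} {a b : ℕ} (hp : TopB p a) (hq : TopB q b) :
    TopB (p * q) (a + b) := by
  refine ⟨natDegree_mul_le.trans (add_le_add hp.1 hq.1), ?_⟩
  rw [coeff_mul_add_eq_of_natDegree_le hp.1 hq.1, hp.2, hq.2, one_mul]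

lemma TopB_X_pow (e : ℕ) : TopB ((X:Polynomial ℤ) ^ e) e :=
  ⟨natDegree_X_pow_le e, by simp⟩

lemma TopB_one : TopB (1 : Polynomial ℤ) 0 := ⟨by simp, by simp⟩

noncomputable def qpoly (m : ℕ) : Polynomial ℤ := ∑ i ∈ Finset.range m, X ^ (2*i)

lemma qpoly_zero : qpoly 0 = 0 := by simp [qpoly]

lemma TopB_qpoly {m : ℕ} (hm : 1 ≤ m) : TopB (qpoly m) (2*(m-1)) := by
  constructor
  · refine (natDegree_sum_le _ _).trans ?_
    simp only [Finset.fold_max_le]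
    refine ⟨by omega, fun i hi => ?_⟩
    simp only [Finset.mem_range] at hi
    exact (natDegree_X_pow_le _).trans (by omega)
  · rw [qpoly, finset_sum_coeff]
    rw [Finset.sum_eq_single (m-1)]
    · simp
    · intro i hi hne
      simp only [Finset.mem_range] at hi
      rw [coeff_X_pow]
      simp only [ite_eq_right_iff]
      intro h; omega
    · intro h; simp at h; omega

/-- the Gaussian binomial in `q²` as a polynomial -/
noncomputable def gp : ℕ → ℕ → Polynomial ℤ
  | 0, 0 => 1
  | 0, _+1 => 0
  | _+1, 0 => 1
  | a+1, b+1 => gp a b + X ^ (2*(b+1)) * gp a (b+1)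

lemma gp_zero_right : ∀ a, gp a 0 = 1
  | 0 => rfl
  | _+1 => rfl

lemma gp_eq_zero : ∀ {a b : ℕ}, a < b → gp a b = 0
  | _, 0, h => absurd h (by omega)
  | 0, b+1, _ => rfl
  | a+1, b+1, h => by
      rw [gp, gp_eq_zero (by omega : a < b), gp_eq_zero (by omega : a < b+1)]
      simp

lemma TopB_gp : ∀ {a b : ℕ}, b ≤ a → TopB (gp a b) (2*b*(a-b))
  | _, 0, _ => by simpa [gp_zero_right] using TopB_one
  | 0, b+1, h => absurd h (by omega)
  | a+1, b+1, h => by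
      rw [gp]
      rcases eq_or_lt_of_le h with he | hlt
      · -- b+1 = a+1 : second term zero
        have hba : a < b + 1 := by omega
        rw [gp_eq_zero hba, mul_zero, add_zero]
        have hab : a = b := by omega
        subst hab
        simpa using TopB_gp (le_refl a)
      · -- b+1 ≤ a
        have h1 : b + 1 ≤ a := by omega
        have ht : TopB (X ^ (2*(b+1)) * gp a (b+1)) (2*(b+1)*(a+1-(b+1))) := by
          have h3 := TopB_mul (TopB_X_pow (2*(b+1))) (TopB_gp h1)
          have he2 : 2*(b+1) + 2*(b+1)*(a-(b+1)) = 2*(b+1)*(a+1-(b+1)) := by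
            zify [h1, (by omega : b + 1 ≤ a + 1)]
            ring
          rwa [he2] at h3
        have hE : a + 1 - (b+1) = a - b := by omega
        rw [hE] at ht
        have hd : (gp a b).natDegree < 2*(b+1)*(a+1-(b+1)) := by
          refine lt_of_le_of_lt (TopB_gp (by omega : b ≤ a)).1 ?_
          rw [hE]
          zify [(by omega : b ≤ a)]
          nlinarith [h1]
        rw [hE] at hd
        have hE2 : 2*(b+1)*(a+1-(b+1)) = 2*(b+1)*(a-b) := by rw [hE]
        rw [hE2]
        refine ⟨?_, ?_⟩
        · refine (natDegree_add_le _ _).trans ?_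
          simp only [max_le_iff]
          exact ⟨le_of_lt hd, ht.1⟩
        · rw [coeff_add, coeff_eq_zero_of_natDegree_lt hd, zero_add, ht.2]

lemma mul_pred_cast (h : ℕ) : ((h*(h-1) : ℕ) : ℤ) = (h:ℤ)*((h:ℤ)-1) := by
  cases h with
  | zero => simp
  | succ h => push_cast [Nat.add_sub_cancel]; ring

/-- degree bound for `cp l (k+2m) k` -/
def dlt (l k m : ℕ) : ℕ :=
  (2*l*(k+2*m) + 2*(s12tri (min (k+m) l - 1)) + 2*((k+m) - min (k+m) l)*(l-1))
    - (s12tri (k-1) + k)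

lemma dlt_sub_le (l k m : ℕ) (hl : 1 ≤ l) (hk : k ≤ l) :
    s12tri (k-1) + k ≤
      2*l*(k+2*m) + 2*(s12tri (min (k+m) l - 1)) + 2*((k+m) - min (k+m) l)*(l-1) := by
  have t2 : 2 * s12tri (k-1) ≤ k*k := by
    rcases Nat.eq_zero_or_pos k with rfl | hp
    · simp [s12tri]
    · calc 2 * s12tri (k-1) = (k-1)*((k-1)+1) := s12tri_two _
        _ ≤ k*k := Nat.mul_le_mul (by omega) (by omega)
  have t3 : k*k ≤ l*k := Nat.mul_le_mul_right _ hk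
  have t4 : k ≤ l*k := by
    rcases Nat.eq_zero_or_pos k with rfl | hp
    · simp
    · calc k = 1*k := (one_mul k).symm
        _ ≤ l*k := Nat.mul_le_mul_right _ hl
  have t5 : l*k ≤ l*(k+2*m) := Nat.mul_le_mul_left _ (by omega)
  have t6 : 2*l*(k+2*m) = 2*(l*(k+2*m)) := by ring
  omega

lemma dlt_cast_low (l k m : ℕ) (hl : 1 ≤ l) (hk : k ≤ l) (hc : k + m ≤ l) :
    2*(dlt l k m : ℤ) = 4*l*(k+2*m) + 2*((k:ℤ)+m)*((k:ℤ)+m-1) - (k:ℤ)*((k:ℤ)-1) - 2*k := by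
  have hsub := dlt_sub_le l k m hl hk
  rw [dlt, Nat.cast_sub hsub]
  rw [min_eq_left hc] at *
  have e1 := s12tri_pred_cast (k+m)
  have e2 := s12tri_pred_cast k
  push_cast at e1 e2 ⊢
  simp only [Nat.sub_self] at *
  push_cast at *
  linear_combination 2*e1 - e2

lemma dlt_cast_high (l k m : ℕ) (hl : 1 ≤ l) (hk : k ≤ l) (hc : l ≤ k + m) :
    2*(dlt l k m : ℤ) = 4*l*(k+2*m) + 2*l*((l:ℤ)-1) + 4*((k:ℤ)+(m:ℤ)-l)*((l:ℤ)-1)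
      - (k:ℤ)*((k:ℤ)-1) - 2*k := by
  have hsub := dlt_sub_le l k m hl hk
  rw [dlt, Nat.cast_sub hsub]
  rw [min_eq_right hc] at *
  have e1 := s12tri_pred_cast l
  have e2 := s12tri_pred_cast k
  push_cast [Nat.cast_sub hc, Nat.cast_sub hl] at e1 e2 ⊢
  linear_combination 2*e1 - e2

lemma dlt_up (l k m : ℕ) (hl : 1 ≤ l) (hk1 : 1 ≤ k) (hk : k ≤ l) :
    (dlt l k m : ℤ) = dlt l (k-1) m + 2*l + k - 2
      + (if k + m ≤ l then 2*(m:ℤ) else 2*((l:ℤ)-k)) := by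
  rcases le_or_gt (k+m) l with hc | hc
  · have c1 := dlt_cast_low l k m hl hk hc
    have c2 := dlt_cast_low l (k-1) m hl (by omega) (by omega)
    rw [if_pos hc]
    suffices hs : 2*(dlt l k m : ℤ) = 2*((dlt l (k-1) m : ℤ) + 2*l + k - 2 + 2*(m:ℤ)) by
      linarith
    push_cast [Nat.cast_sub hk1] at c1 c2 ⊢
    linear_combination c1 - c2
  · have c1 := dlt_cast_high l k m hl hk (by omega)
    have c2 := dlt_cast_high l (k-1) m hl (by omega) (by omega)
    rw [if_neg (by omega)]
    suffices hs : 2*(dlt l k m : ℤ) = 2*((dlt l (k-1) m : ℤ) + 2*l + k - 2 + 2*((l:ℤ)-k)) by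
      linarith
    push_cast [Nat.cast_sub hk1] at c1 c2 ⊢
    linear_combination c1 - c2

lemma dlt_down (l k m : ℕ) (hl : 1 ≤ l) (hk : k + 1 ≤ l) (hm : 1 ≤ m) :
    (dlt l k m : ℤ) = dlt l (k+1) (m-1) + k + 2*l + 1 := by
  suffices hs : 2*(dlt l k m : ℤ) = 2*((dlt l (k+1) (m-1) : ℤ) + k + 2*l + 1) by linarith
  rcases le_or_gt (k+m) l with hc | hc
  · have c1 := dlt_cast_low l k m hl (by omega) hc
    have c2 := dlt_cast_low l (k+1) (m-1) hl hk (by omega)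
    push_cast [Nat.cast_sub hm] at c1 c2 ⊢
    linear_combination c1 - c2
  · have c1 := dlt_cast_high l k m hl (by omega) (by omega)
    have c2 := dlt_cast_high l (k+1) (m-1) hl hk (by omega)
    push_cast [Nat.cast_sub hm] at c1 c2 ⊢
    linear_combination c1 - c2

lemma dlt_up_le (l k m : ℕ) (hl : 1 ≤ l) (hk1 : 1 ≤ k) (hk : k ≤ l) :
    (dlt l (k-1) m : ℤ) + 2*l + k - 2 ≤ dlt l k m := by
  rw [dlt_up l k m hl hk1 hk]
  split_ifs with h
  · have : (0:ℤ) ≤ m := by positivity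
    linarith
  · have : (k:ℤ) ≤ l := by exact_mod_cast hk
    linarith

lemma dlt_up_strict (l k m : ℕ) (hl : 1 ≤ l) (hk1 : 1 ≤ k) (hk : k + 1 ≤ l) (hm : 1 ≤ m) :
    (dlt l (k-1) m : ℤ) + 2*l + k ≤ dlt l k m := by
  rw [dlt_up l k m hl hk1 (by omega)]
  split_ifs with h
  · have : (1:ℤ) ≤ m := by exact_mod_cast hm
    linarith
  · have : (k:ℤ) + 1 ≤ l := by exact_mod_cast hk
    linarith

lemma dlt_key_low (l k : ℕ) (hl : 1 ≤ l) (hk : k ≤ l) :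
    2*(dlt l k 0 : ℤ) + 2*k - 4*l*k = (k:ℤ)*((k:ℤ)-1) := by
  have c := dlt_cast_low l k 0 hl hk (by omega)
  push_cast at c ⊢
  linear_combination c

lemma dlt_key_top (l m : ℕ) (hl : 1 ≤ l) :
    2*(dlt l l m : ℤ) + 2*l - 4*l*((l:ℤ)+2*m) = ((l:ℤ)+4*m)*((l:ℤ)-1) := by
  have c := dlt_cast_high l l m hl le_rfl (by omega)
  push_cast at c ⊢
  linear_combination c

lemma dlt_key_sub (l m : ℕ) (hl : 1 ≤ l) (hm : 1 ≤ m) :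
    2*(dlt l (l-1) m : ℤ) + 2*((l:ℤ)-1) - 4*l*((l:ℤ)-1+2*m) = ((l:ℤ)+4*m-2)*((l:ℤ)-1) := by
  have c := dlt_cast_high l (l-1) m hl (by omega) (by omega)
  push_cast [Nat.cast_sub hl] at c ⊢
  linear_combination c

lemma dlt_lt_low (l k m : ℕ) (hl : 1 ≤ l) (hm : 1 ≤ m) (hn : k + 2*m ≤ l) :
    2*(dlt l k m : ℤ) + 2*k - 4*l*((k:ℤ)+2*m) + 2 ≤ ((k:ℤ)+2*m)*((k:ℤ)+2*m-1) := by
  have c := dlt_cast_low l k m hl (by omega) (by omega)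
  have hm' : (1:ℤ) ≤ m := by exact_mod_cast hm
  nlinarith [c, hm', sq_nonneg ((m:ℤ)-1)]

lemma dlt_lt_high (l k m : ℕ) (hl : 1 ≤ l) (hk2 : k + 2 ≤ l) (hc : l ≤ k + m) :
    2*(dlt l k m : ℤ) + 2*k - 4*l*((k:ℤ)+2*m) + 2 ≤ (2*((k:ℤ)+2*m) - l)*((l:ℤ)-1) := by
  have c := dlt_cast_high l k m hl (by omega) hc
  have h2 : (k:ℤ) + 2 ≤ l := by exact_mod_cast hk2
  nlinarith [c, h2, mul_nonneg (by linarith : (0:ℤ) ≤ (l:ℤ)-k-2) (by linarith : (0:ℤ) ≤ (l:ℤ)-k+1)]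

lemma dlt_lt_mid (l k m : ℕ) (hl : 1 ≤ l) (hcm : k + m < l) (hn : l ≤ k + 2*m) :
    2*(dlt l k m : ℤ) + 2*k - 4*l*((k:ℤ)+2*m) + 2 ≤ (2*((k:ℤ)+2*m) - l)*((l:ℤ)-1) := by
  have c := dlt_cast_low l k m hl (by omega) (by omega)
  have ht1 : (1:ℤ) ≤ (l:ℤ) - k - m := by omega
  have hmt : (l:ℤ) - k - m ≤ m := by omega
  nlinarith [c, ht1, hmt,
    mul_nonneg (by linarith : (0:ℤ) ≤ (m:ℤ) - ((l:ℤ)-k-m)) (by linarith : (0:ℤ) ≤ ((l:ℤ)-k-m) - 1),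
    mul_nonneg (by linarith : (0:ℤ) ≤ (m:ℤ) - ((l:ℤ)-k-m)) (by positivity : (0:ℤ) ≤ (m:ℤ)),
    mul_le_mul (le_refl (m:ℤ)) ht1 (by linarith) (by positivity)]

/-- coefficient of `v k` in `bⁿ v₀`, up to normalization `T(k - 2nl)` -/
noncomputable def cpo (l : ℕ) : ℕ → ℕ → Polynomial ℤ
  | 0, 0 => 1
  | 0, _+1 => 0
  | n+1, k =>
      (if k ≤ l then X^(2*l-k) * qpoly k * cpo l n (k-1) else 0)
      + (if k+1 ≤ l then X^(3*k+3) * qpoly (l-k) * cpo l n (k+1) else 0)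

lemma cpo_succ (l n k : ℕ) : cpo l (n+1) k =
    (if k ≤ l then X^(2*l-k) * qpoly k * cpo l n (k-1) else 0)
    + (if k+1 ≤ l then X^(3*k+3) * qpoly (l-k) * cpo l n (k+1) else 0) := by
  rw [cpo]

/-- index of the basis vector carrying the top term of `bⁿ v₀` -/
def keyf (l n : ℕ) : ℕ := if n ≤ l then n else l - (n - l) % 2

lemma keyf_le (l n : ℕ) (h : n ≤ l) : keyf l n = n := by
  simp only [keyf, if_pos h]

lemma keyf_top (l n : ℕ) (h1 : l < n) (h2 : (n - l) % 2 = 0) : keyf l n = l := by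
  simp only [keyf, if_neg (by omega : ¬ n ≤ l)]
  omega

lemma keyf_sub (l n : ℕ) (h1 : l < n) (h2 : (n - l) % 2 = 1) : keyf l n = l - 1 := by
  simp only [keyf, if_neg (by omega : ¬ n ≤ l)]
  omega

lemma lemA (l : ℕ) (hl : 1 ≤ l) : ∀ n,
    (∀ k, cpo l n k ≠ 0 → k ≤ l ∧ ∃ m, n = k + 2*m) ∧
    (∀ k m, n = k + 2*m → k ≤ l → (cpo l n k).natDegree ≤ dlt l k m) ∧
    (∀ m, n = keyf l n + 2*m → (cpo l n (keyf l n)).coeff (dlt l (keyf l n) m) = 1) := by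
  intro n
  induction n with
  | zero =>
    refine ⟨?_, ?_, ?_⟩
    · intro k hk
      obtain _ | k := k
      · exact ⟨by omega, 0, rfl⟩
      · exact absurd rfl hk
    · intro k m hm hkl
      obtain ⟨rfl, rfl⟩ : k = 0 ∧ m = 0 := by omega
      show (1 : Polynomial ℤ).natDegree ≤ _
      simp
    · intro m hm
      have hk0 : keyf l 0 = 0 := keyf_le l 0 (by omega)
      rw [hk0] at hm ⊢
      obtain rfl : m = 0 := by omega
      have hd : dlt l 0 0 = 0 := by simp [dlt, s12tri]
      rw [hd]
      show (1 : Polynomial ℤ).coeff 0 = 1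
      simp
  | succ n ih =>
    obtain ⟨ihv, ihd, ihk⟩ := ih
    have hvanish : ∀ k, (¬ (k ≤ l ∧ ∃ m, n + 1 = k + 2*m)) → cpo l (n+1) k = 0 := by
      intro k hcon
      rw [cpo_succ]
      have h1 : (if k ≤ l then X^(2*l-k) * qpoly k * cpo l n (k-1) else 0) = 0 := by
        split_ifs with hkl
        · obtain _ | j := k
          · rw [qpoly_zero]; ring
          · simp only [Nat.add_sub_cancel]
            rcases eq_or_ne (cpo l n j) 0 with h0 | h0
            · rw [h0, mul_zero]
            · obtain ⟨_, m', hm'⟩ := ihv j h0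
              exact absurd ⟨hkl, m', by omega⟩ hcon
        · rfl
      have h2 : (if k+1 ≤ l then X^(3*k+3) * qpoly (l-k) * cpo l n (k+1) else 0) = 0 := by
        split_ifs with hkl
        · rcases eq_or_ne (cpo l n (k+1)) 0 with h0 | h0
          · rw [h0, mul_zero]
          · obtain ⟨_, m', hm'⟩ := ihv (k+1) h0
            exact absurd ⟨by omega, m'+1, by omega⟩ hcon
        · rfl
      rw [h1, h2, add_zero]
    refine ⟨?_, ?_, ?_⟩
    · intro k hk
      by_contra hcon
      exact hk (hvanish k hcon)
    · -- degree bounds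
      intro k m hm hkl
      rw [cpo_succ]
      refine (natDegree_add_le _ _).trans (max_le ?_ ?_)
      · rw [if_pos hkl]
        obtain _ | j := k
        · rw [qpoly_zero]; simp
        · simp only [Nat.add_sub_cancel]
          rcases eq_or_ne (cpo l n j) 0 with h0 | h0
          · rw [h0, mul_zero]; simp
          · obtain ⟨hjl, m', hm'⟩ := ihv j h0
            have hmm : m' = m := by omega
            rw [hmm] at hm'
            have hd := ihd j m hm' hjl
            have hstep : (X^(2*l-(j+1)) * qpoly (j+1) * cpo l n j).natDegree ≤
                (2*l-(j+1)) + 2*((j+1)-1) + (cpo l n j).natDegree := by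
              refine natDegree_mul_le.trans ?_
              have h5 := natDegree_mul_le (p := (X:Polynomial ℤ)^(2*l-(j+1))) (q := qpoly (j+1))
              have hq := (TopB_qpoly (by omega : 1 ≤ j+1)).1
              have hx := natDegree_X_pow_le (R := ℤ) (2*l-(j+1))
              omega
            refine hstep.trans ?_
            have hup := dlt_up_le l (j+1) m hl (by omega) hkl
            simp only [Nat.add_sub_cancel] at hup
            omega
      · split_ifs with hkl2
        · rcases eq_or_ne (cpo l n (k+1)) 0 with h0 | h0
          · rw [h0, mul_zero]; simp
          · obtain ⟨hjl, m', hm'⟩ := ihv (k+1) h0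
            obtain rfl : m = m' + 1 := by omega
            have hd := ihd (k+1) m' hm' hjl
            have hstep : (X^(3*k+3) * qpoly (l-k) * cpo l n (k+1)).natDegree ≤
                (3*k+3) + 2*((l-k)-1) + (cpo l n (k+1)).natDegree := by
              refine natDegree_mul_le.trans ?_
              have h5 := natDegree_mul_le (p := (X:Polynomial ℤ)^(3*k+3)) (q := qpoly (l-k))
              have hq := (TopB_qpoly (by omega : 1 ≤ l-k)).1
              have hx := natDegree_X_pow_le (R := ℤ) (3*k+3)
              omega
            refine hstep.trans ?_
            have hdn := dlt_down l k (m'+1) hl (by omega) (by omega)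
            simp only [Nat.add_sub_cancel] at hdn
            omega
        · simp
    · -- key coefficient
      intro m hm
      rcases le_or_gt (n+1) l with hn1 | hn1
      · -- low case : keyf = n+1, m = 0
        have hkey : keyf l (n+1) = n+1 := keyf_le l (n+1) hn1
        rw [hkey] at hm ⊢
        obtain rfl : m = 0 := by omega
        rw [cpo_succ]
        simp only [Nat.add_sub_cancel]
        have ht2 : (if (n+1)+1 ≤ l then X^(3*(n+1)+3) * qpoly (l-(n+1)) * cpo l n (n+1+1) else 0)
            = 0 := by
          split_ifs with h
          · rcases eq_or_ne (cpo l n (n+2)) 0 with h0 | h0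
            · rw [h0, mul_zero]
            · obtain ⟨_, m', hm'⟩ := ihv (n+2) h0
              omega
          · rfl
        rw [ht2, add_zero, if_pos hn1]
        have hkeyn : keyf l n = n := keyf_le l n (by omega)
        have hcn : TopB (cpo l n n) (dlt l n 0) := by
          refine ⟨ihd n 0 (by omega) (by omega), ?_⟩
          have h6 := ihk 0 (by rw [hkeyn]; omega)
          rwa [hkeyn] at h6
        have hTop := TopB_mul (TopB_mul (TopB_X_pow (2*l-(n+1)))
          (by simpa only [Nat.add_sub_cancel] using TopB_qpoly (by omega : 1 ≤ n+1) :
            TopB (qpoly (n+1)) (2*n))) hcn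
        have hexp : (2*l-(n+1)) + 2*n + dlt l n 0 = dlt l (n+1) 0 := by
          have h7 := dlt_up l (n+1) 0 hl (by omega) hn1
          rw [if_pos (by omega : (n+1) + 0 ≤ l)] at h7
          simp only [Nat.add_sub_cancel] at h7
          omega
        rw [hexp] at hTop
        exact hTop.2
      · -- high case
        rcases Nat.even_or_odd (n+1-l) with he | ho
        · -- keyf = l
          have h2 : (n+1-l) % 2 = 0 := Nat.even_iff.mp he
          have hkey : keyf l (n+1) = l := keyf_top l (n+1) hn1 h2
          rw [hkey] at hm ⊢
          have hm1 : 1 ≤ m := by omega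
          rw [cpo_succ]
          rw [if_neg (by omega : ¬ l + 1 ≤ l), add_zero, if_pos (le_refl l)]
          have hkeyn : keyf l n = l - 1 := keyf_sub l n (by omega) (by omega)
          have hcn : TopB (cpo l n (l-1)) (dlt l (l-1) m) := by
            refine ⟨ihd (l-1) m (by omega) (by omega), ?_⟩
            have h6 := ihk m (by rw [hkeyn]; omega)
            rwa [hkeyn] at h6
          have hTop := TopB_mul (TopB_mul (TopB_X_pow (2*l-l)) (TopB_qpoly hl)) hcn
          have hexp : (2*l-l) + 2*(l-1) + dlt l (l-1) m = dlt l l m := by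
            have h7 := dlt_up l l m hl hl (le_refl l)
            rw [if_neg (by omega)] at h7
            omega
          rw [hexp] at hTop
          exact hTop.2
        · -- keyf = l - 1
          have h2 : (n+1-l) % 2 = 1 := Nat.odd_iff.mp ho
          have hkey : keyf l (n+1) = l - 1 := keyf_sub l (n+1) hn1 h2
          rw [hkey] at hm ⊢
          have hm1 : 1 ≤ m := by omega
          rw [cpo_succ]
          rw [if_pos (by omega : l-1 ≤ l), if_pos (by omega : (l-1)+1 ≤ l)]
          rw [coeff_add]
          -- second summand carries the top term
          have hkeyn : keyf l n = l := by
            rcases eq_or_lt_of_le (by omega : l ≤ n) with h | h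
            · exact h ▸ keyf_le l n (by omega)
            · exact keyf_top l n h (by omega)
          have hcn : TopB (cpo l n ((l-1)+1)) (dlt l l (m-1)) := by
            rw [show (l-1)+1 = l by omega]
            refine ⟨ihd l (m-1) (by omega) (le_refl l), ?_⟩
            have h6 := ihk (m-1) (by rw [hkeyn]; omega)
            rwa [hkeyn] at h6
          have hq1 : TopB (qpoly (l-(l-1))) 0 := by
            rw [show l-(l-1) = 1 by omega]
            simpa using TopB_qpoly (le_refl 1)
          have hTop : TopB (X^(3*(l-1)+3) * qpoly (l-(l-1)) * cpo l n ((l-1)+1))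
              (dlt l (l-1) m) := by
            have h3 := TopB_mul (TopB_mul (TopB_X_pow (3*(l-1)+3)) hq1) hcn
            have hexp : ((3*(l-1)+3) + 0) + dlt l l (m-1) = dlt l (l-1) m := by
              have h7 := dlt_down l (l-1) m hl (by omega) hm1
              rw [show (l-1)+1 = l by omega] at h7
              omega
            rwa [hexp] at h3
          have hc1 : (X^(2*l-(l-1)) * qpoly (l-1) * cpo l n (l-1-1)).coeff (dlt l (l-1) m)
              = 0 := by
            rcases Nat.lt_or_ge l 2 with hl2 | hl2
            · rw [show l - 1 = 0 by omega, qpoly_zero]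
              simp
            · rcases eq_or_ne (cpo l n (l-1-1)) 0 with h0 | h0
              · rw [h0, mul_zero, coeff_zero]
              · obtain ⟨hjl, m', hm'⟩ := ihv (l-1-1) h0
                have hmm : m' = m := by omega
                rw [hmm] at hm'
                have hd := ihd (l-1-1) m hm' hjl
                refine coeff_eq_zero_of_natDegree_lt ?_
                have hstep : (X^(2*l-(l-1)) * qpoly (l-1) * cpo l n (l-1-1)).natDegree ≤
                    (2*l-(l-1)) + 2*((l-1)-1) + (cpo l n (l-1-1)).natDegree := by
                  refine natDegree_mul_le.trans ?_
                  have h5 := natDegree_mul_le (p := (X:Polynomial ℤ)^(2*l-(l-1))) (q := qpoly (l-1))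
                  have hq := (TopB_qpoly (by omega : 1 ≤ l-1)).1
                  have hx := natDegree_X_pow_le (R := ℤ) (2*l-(l-1))
                  omega
                have hstrict := dlt_up_strict l (l-1) m hl (by omega) (by omega) hm1
                omega
          rw [hc1, zero_add]
          exact hTop.2


lemma qint_zero : qint 0 = 0 := by simp [qint]

lemma toL_shift (p : Polynomial ℤ) (a : ℕ) (x : ℤ) :
    Polynomial.toLaurent ((X:Polynomial ℤ)^a * p) * T x
      = Polynomial.toLaurent p * T ((a:ℤ) + x) := by
  rw [map_mul, Polynomial.toLaurent_X_pow, T_add]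
  ring

lemma qint_eq (m : ℕ) : qint m = Polynomial.toLaurent (qpoly m) * T (1 - (m:ℤ)) := by
  rw [qint, qpoly, map_sum, Finset.sum_mul]
  refine Finset.sum_congr rfl fun i _ => ?_
  rw [Polynomial.toLaurent_X_pow, ← T_add]
  congr 1
  push_cast
  ring


lemma qbinom_eq : ∀ a b : ℕ, qbinomQ a b
    = Polynomial.toLaurent (gp a b) * T (-((b:ℤ) * ((a:ℤ) - (b:ℤ))))
  | a, 0 => by
      rw [qbinomQ, gp_zero_right]
      simp
  | 0, b+1 => by
      rw [qbinomQ]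
      rw [gp_eq_zero (by omega)]
      simp
  | a+1, b+1 => by
      rw [qbinomQ, qbinom_eq a b, qbinom_eq a (b+1), gp]
      rw [map_add, add_mul]
      congr 1
      · rw [← mul_assoc, mul_comm (T (-((a:ℤ)-b))) _, mul_assoc, ← T_add]
        congr 2
        push_cast
        ring
      · rw [← mul_assoc, mul_comm (T ((b:ℤ)+1)) _, mul_assoc, ← T_add, toL_shift]
        congr 1
        push_cast
        ring

lemma shifts_eq (A B : LaurentPolynomial ℤ) (x y z : ℤ) (h : x + y = z) :
    A * T x * (B * T y) = A * B * T z := by rw [← h, T_add]; ring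

lemma Arec (l : ℕ) (hl : 1 ≤ l) (n k : ℕ) (hk : k ≤ l) :
    Polynomial.toLaurent (cpo l (n+1) k) * T ((k:ℤ) - 2*((n:ℤ)+1)*l) =
      qint k * (Polynomial.toLaurent (cpo l n (k-1)) * T ((((k:ℤ))-1) - 2*(n:ℤ)*l))
      + (if k+1 ≤ l then (T (2*(k:ℤ)-(l:ℤ)+1) * qint (l-k)) *
          (Polynomial.toLaurent (cpo l n (k+1)) * T (((k:ℤ)+1) - 2*(n:ℤ)*l)) else 0) := by
  rw [cpo_succ, map_add, add_mul, if_pos hk]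
  congr 1
  · -- up term
    obtain _ | j := k
    · rw [qpoly_zero, qint_zero]
      simp
    · simp only [Nat.add_sub_cancel]
      rw [mul_assoc, toL_shift, qint_eq, map_mul]
      rw [shifts_eq (Polynomial.toLaurent (qpoly (j+1))) (Polynomial.toLaurent (cpo l n j))
        (1 - ((j+1 : ℕ) : ℤ)) ((((j+1 : ℕ) : ℤ))-1 - 2*(n:ℤ)*l) (-(2*(n:ℤ)*l)) (by push_cast; ring)]
      congr 1
      have hc : ((2*l - (j+1) : ℕ) : ℤ) = 2*(l:ℤ) - ((j:ℤ)+1) := by omega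
      rw [hc]
      push_cast
      ring
  · split_ifs with h2
    · rw [mul_assoc, toL_shift, qint_eq, map_mul]
      have hc : ((3*k+3 : ℕ) : ℤ) = 3*(k:ℤ)+3 := by push_cast; ring
      rw [hc]
      have hc2 : ((l - k : ℕ) : ℤ) = (l:ℤ) - k := by omega
      rw [hc2]
      -- reorganize RHS
      rw [show (T (2*(k:ℤ)-(l:ℤ)+1) * (Polynomial.toLaurent (qpoly (l-k)) * T (1 - ((l:ℤ)-k)))) *
            (Polynomial.toLaurent (cpo l n (k+1)) * T (((k:ℤ)+1) - 2*(n:ℤ)*l)) =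
          Polynomial.toLaurent (qpoly (l-k)) * Polynomial.toLaurent (cpo l n (k+1)) *
            (T (2*(k:ℤ)-(l:ℤ)+1) * T (1 - ((l:ℤ)-k)) * T (((k:ℤ)+1) - 2*(n:ℤ)*l)) from by ring]
      rw [← T_add, ← T_add, ← map_mul]
      congr 1
      push_cast
      ring
    · simp

def ee (l k : ℕ) : ℕ := 2*l*l + 2*k*k + 2*k - 2*(k*l)

lemma ee_cast (l k : ℕ) (hk : k ≤ l) :
    ((ee l k : ℕ) : ℤ) = 2*(l:ℤ)*l + 2*(k:ℤ)*k + 2*k - 2*(k:ℤ)*l := by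
  have h : 2*(k*l) ≤ 2*l*l + 2*k*k + 2*k := by nlinarith
  rw [ee, Nat.cast_sub h]
  push_cast
  ring

lemma ekl_cast (l k : ℕ) (hk : k ≤ l) :
    ((2*k*(l-k) : ℕ) : ℤ) = 2*(k:ℤ)*((l:ℤ)-k) := by
  push_cast [Nat.cast_sub hk]
  ring

lemma keyf_spec (l n : ℕ) (hl : 1 ≤ l) : keyf l n ≤ l ∧ n = keyf l n + 2*((n - keyf l n)/2) := by
  simp only [keyf]
  split_ifs with h
  · omega
  · rcases Nat.mod_two_eq_zero_or_one (n-l) with hr | hr <;> rw [hr] <;> omega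

lemma keyf_parity (l n k m : ℕ) (hl : 1 ≤ l) (hk : k ≤ l) (hm : n = k + 2*m)
    (hne : k ≠ keyf l n) (hnl : l ≤ n) : k + 2 ≤ l := by
  simp only [keyf] at hne
  split_ifs at hne with h
  · omega
  · rcases Nat.mod_two_eq_zero_or_one (n-l) with hr | hr <;> rw [hr] at hne <;> omega

lemma topNP (l : ℕ) (hl : 1 ≤ l) (n : ℕ) (Tn : ℕ)
    (hkey : (Tn:ℤ) = ee l (keyf l n) + 2*(dlt l (keyf l n) ((n - keyf l n)/2))
      + 2*((keyf l n : ℕ):ℤ)*((l:ℤ)-(keyf l n)))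
    (hlt : ∀ k m, k ≤ l → n = k + 2*m → k ≠ keyf l n →
      (ee l k : ℤ) + 2*(dlt l k m) + 2*(k:ℤ)*((l:ℤ)-k) + 1 ≤ (Tn:ℤ)) :
    TopB (∑ k ∈ Finset.range (l+1), X^(ee l k) * cpo l n k^2 * gp l k) Tn := by
  obtain ⟨hvan, hdeg, hcoeff⟩ := lemA l hl n
  have hKl : keyf l n ≤ l := (keyf_spec l n hl).1
  have hKm : n = keyf l n + 2*((n - keyf l n)/2) := (keyf_spec l n hl).2
  have hterm : ∀ k m, k ≤ l → n = k + 2*m →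
      (X^(ee l k) * cpo l n k^2 * gp l k).natDegree ≤ ee l k + 2*(dlt l k m) + 2*k*(l-k) := by
    intro k m hk hm
    refine natDegree_mul_le.trans ?_
    have h1 : ((X:Polynomial ℤ)^(ee l k) * cpo l n k^2).natDegree ≤ ee l k + 2*(dlt l k m) := by
      refine natDegree_mul_le.trans ?_
      have hd := hdeg k m hm hk
      have h2 : (cpo l n k^2).natDegree ≤ 2*(dlt l k m) := by
        rw [pow_two]
        exact natDegree_mul_le.trans (by omega)
      have hx := natDegree_X_pow_le (R := ℤ) (ee l k)
      omega
    have hg := (TopB_gp hk).1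
    omega
  have hbound : ∀ k m, k ≤ l → n = k + 2*m → k ≠ keyf l n →
      (X^(ee l k) * cpo l n k^2 * gp l k).natDegree < Tn := by
    intro k m hk hm hne
    refine lt_of_le_of_lt (hterm k m hk hm) ?_
    have h5 := hlt k m hk hm hne
    have h6 : ((ee l k + 2*(dlt l k m) + 2*k*(l-k) + 1 : ℕ) : ℤ) ≤ (Tn:ℤ) := by
      push_cast [Nat.cast_sub hk]
      linarith
    have h7 : ee l k + 2*(dlt l k m) + 2*k*(l-k) + 1 ≤ Tn := by exact_mod_cast h6
    omega
  have hkeyE : ee l (keyf l n) + 2*(dlt l (keyf l n) ((n - keyf l n)/2))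
      + 2*(keyf l n)*(l-(keyf l n)) = Tn := by
    have h7 : ((ee l (keyf l n) + 2*(dlt l (keyf l n) ((n - keyf l n)/2))
        + 2*(keyf l n)*(l-(keyf l n)) : ℕ) : ℤ) = (Tn:ℤ) := by
      push_cast [Nat.cast_sub hKl]
      linarith [hkey]
    exact_mod_cast h7
  constructor
  · refine (natDegree_sum_le _ _).trans ?_
    simp only [Finset.fold_max_le]
    refine ⟨by omega, fun k hk => ?_⟩
    simp only [Finset.mem_range, Function.comp_apply] at hk ⊢
    rcases eq_or_ne (cpo l n k) 0 with h0 | h0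
    · rw [h0]
      simp
    · obtain ⟨hkl, m, hm⟩ := hvan k h0
      rcases eq_or_ne k (keyf l n) with heq | hne
      · rw [heq, ← hkeyE]
        exact hterm _ _ hKl hKm
      · exact le_of_lt (hbound k m hkl hm hne)
  · rw [finset_sum_coeff]
    rw [Finset.sum_eq_single (keyf l n)]
    · have hcK : TopB (cpo l n (keyf l n)) (dlt l (keyf l n) ((n - keyf l n)/2)) :=
        ⟨hdeg _ _ hKm hKl, hcoeff _ hKm⟩
      have hsq : TopB (cpo l n (keyf l n)^2) (2*(dlt l (keyf l n) ((n - keyf l n)/2))) := by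
        rw [pow_two, two_mul]
        exact TopB_mul hcK hcK
      have hT := TopB_mul (TopB_mul (TopB_X_pow (ee l (keyf l n))) hsq) (TopB_gp hKl)
      rw [hkeyE] at hT
      exact hT.2
    · intro k hk hne
      simp only [Finset.mem_range] at hk
      rcases eq_or_ne (cpo l n k) 0 with h0 | h0
      · rw [h0]
        simp
      · obtain ⟨hkl, m, hm⟩ := hvan k h0
        exact coeff_eq_zero_of_natDegree_lt (hbound k m hkl hm hne)
    · intro h
      exact absurd (Finset.mem_range.mpr (by omega)) h

-- THEOREM PART (spliced after aux lemmas; uses real names qint, qbinomQ, HasTopTerm)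
lemma pred_cast_mul (n : ℕ) : (n:ℤ) * (((n-1 : ℕ)) : ℤ) = (n:ℤ)*((n:ℤ)-1) := by
  cases n with
  | zero => simp
  | succ n => push_cast [Nat.add_sub_cancel]; ring

lemma hasTop_of (P : LaurentPolynomial ℤ) (p : Polynomial ℤ) (D : ℕ) (s d : ℤ)
    (hp : TopB p D) (hP : P = Polynomial.toLaurent p * T s) (hd : d = (D:ℤ) + s) :
    HasTopTerm P d := by
  have hne : p.coeff D = 1 := hp.2
  have hmono : p.Monic := Polynomial.monic_of_natDegree_le_of_coeff_eq_one D hp.1 hne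
  have hdeg : p.natDegree = D :=
    le_antisymm hp.1 (Polynomial.le_natDegree_of_ne_zero (by rw [hne]; exact one_ne_zero))
  refine ⟨p, hmono, ?_⟩
  rw [hP, hdeg]
  congr 1
  rw [hd]
  ring

lemma shift4 (A B : Polynomial ℤ) (x y z w : ℤ) (h : x + x + (y + z) = w) :
    (Polynomial.toLaurent A * T x)^2 * (T y * (Polynomial.toLaurent B * T z))
      = Polynomial.toLaurent (A^2 * B) * T w := by
  rw [← h, map_mul, map_pow, T_add, T_add, T_add]
  ring

/-- For the bilinear form on `V(l)` determined by `(η_l,η_l) = 1`, adjunction,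
and orthogonality of the standard basis with
`(f^{(n)}η_l, f^{(n)}η_l) = conj(q^{n(l-n)}·qbinom(l,n)_q) = q^{-n(l-n)}·qbinom(l,n)_q`
(the Gaussian binomial being bar-invariant), the top degree term of the Laurent polynomial
`(b^n η_l, b^n η_l)` is `q^{2·binom(n,2)} = q^{n(n-1)}` for `0 ≤ n ≤ l`, and is
`q^{(2n-l)(l-1)}` for `n ≥ l`, where `b = f + ρ(f)`. -/
theorem stmt12 (l : ℕ) (hl : 1 ≤ l) {M : Type*} [AddCommGroup M]
    [Module (LaurentPolynomial ℤ) M]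
    (v : ℕ → M) (hv : ∀ m, l < m → v m = 0)
    (F Fρ : Module.End (LaurentPolynomial ℤ) M)
    (hF : ∀ n ≤ l, F (v n) = qint (n + 1) • v (n + 1))
    (hFρ : ∀ n ≤ l, Fρ (v n) =
      (if n = 0 then 0 else T (2 * (n : ℤ) - l - 1) * qint (l + 1 - n)) • v (n - 1))
    (Φ : M →ₗ[LaurentPolynomial ℤ] M →ₗ[LaurentPolynomial ℤ] LaurentPolynomial ℤ)
    (hΦo : ∀ m n, m ≠ n → Φ (v m) (v n) = 0)
    (hΦd : ∀ n ≤ l, Φ (v n) (v n) = T (-((n : ℤ) * ((l : ℤ) - n))) * qbinomQ l n) :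
    ∀ n : ℕ,
      (n ≤ l → HasTopTerm (Φ (((F + Fρ) ^ n) (v 0)) (((F + Fρ) ^ n) (v 0)))
        ((n : ℤ) * ((n : ℤ) - 1))) ∧
      (l ≤ n → HasTopTerm (Φ (((F + Fρ) ^ n) (v 0)) (((F + Fρ) ^ n) (v 0)))
        ((2 * (n : ℤ) - l) * ((l : ℤ) - 1))) := by
  intro n
  have hval : ∀ N : ℕ, ((F + Fρ) ^ N) (v 0) =
      ∑ k ∈ Finset.range (l+1),
        (Polynomial.toLaurent (cpo l N k) * T ((k:ℤ) - 2*(N:ℤ)*(l:ℤ))) • v k := by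
    intro N
    induction N with
    | zero =>
      rw [pow_zero, Module.End.one_apply, Finset.sum_eq_single 0]
      · have h00 : cpo l 0 0 = 1 := rfl
        rw [h00]
        simp
      · intro k hk hne
        obtain _ | k := k
        · exact absurd rfl hne
        · have h0 : cpo l 0 (k+1) = 0 := rfl
          rw [h0]
          simp
      · intro h
        exact absurd (Finset.mem_range.mpr (by omega)) h
    | succ N ihN =>
      rw [pow_succ', Module.End.mul_apply, ihN, map_sum]
      have hstep : ∀ k ∈ Finset.range (l+1),
          (F + Fρ) ((Polynomial.toLaurent (cpo l N k) * T ((k:ℤ) - 2*(N:ℤ)*(l:ℤ))) • v k)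
          = ((qint (k+1) * (Polynomial.toLaurent (cpo l N k) * T ((k:ℤ) - 2*(N:ℤ)*(l:ℤ)))) • v (k+1))
            + ((Polynomial.toLaurent (cpo l N k) * T ((k:ℤ) - 2*(N:ℤ)*(l:ℤ))) •
                (((if k = 0 then 0 else T (2*(k:ℤ) - l - 1) * qint (l + 1 - k))) • v (k-1))) := by
        intro k hk
        simp only [Finset.mem_range] at hk
        rw [LinearMap.add_apply, map_smul, map_smul, hF k (by omega), hFρ k (by omega),
          smul_smul, mul_comm]
      rw [Finset.sum_congr rfl hstep, Finset.sum_add_distrib]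
      have hS1 : (∑ k ∈ Finset.range (l+1),
            (qint (k+1) * (Polynomial.toLaurent (cpo l N k) * T ((k:ℤ) - 2*(N:ℤ)*(l:ℤ)))) • v (k+1))
          = ∑ k ∈ Finset.range (l+1),
            (qint k * (Polynomial.toLaurent (cpo l N (k-1)) * T (((k:ℤ)-1) - 2*(N:ℤ)*(l:ℤ)))) • v k := by
        rw [Finset.sum_range_succ, Finset.sum_range_succ']
        rw [hv (l+1) (by omega), smul_zero, add_zero]
        rw [qint_zero, zero_mul, zero_smul, add_zero]
        refine Finset.sum_congr rfl fun i _ => ?_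
        simp only [Nat.add_sub_cancel]
        rw [show (((i+1:ℕ):ℤ) - 1 - 2*(N:ℤ)*(l:ℤ)) = ((i:ℤ) - 2*(N:ℤ)*(l:ℤ)) from by push_cast; ring]
      have hS2 : (∑ k ∈ Finset.range (l+1),
            (Polynomial.toLaurent (cpo l N k) * T ((k:ℤ) - 2*(N:ℤ)*(l:ℤ))) •
              (((if k = 0 then 0 else T (2*(k:ℤ) - l - 1) * qint (l + 1 - k))) • v (k-1)))
          = ∑ k ∈ Finset.range (l+1),
            (if k+1 ≤ l then (T (2*(k:ℤ)-(l:ℤ)+1) * qint (l-k)) *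
              (Polynomial.toLaurent (cpo l N (k+1)) * T (((k:ℤ)+1) - 2*(N:ℤ)*(l:ℤ))) else 0) • v k := by
        rw [Finset.sum_range_succ', Finset.sum_range_succ]
        rw [if_neg (by omega : ¬ l + 1 ≤ l), zero_smul, add_zero]
        rw [if_pos rfl, zero_smul, smul_zero, add_zero]
        refine Finset.sum_congr rfl fun i hi => ?_
        simp only [Finset.mem_range] at hi
        rw [if_neg (Nat.succ_ne_zero i), if_pos (by omega : i + 1 ≤ l)]
        simp only [Nat.add_sub_cancel]
        rw [smul_smul, mul_comm]
        rw [show l + 1 - (i+1) = l - i from by omega]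
        rw [show (2*((i+1:ℕ):ℤ) - (l:ℤ) - 1) = (2*(i:ℤ) - (l:ℤ) + 1) from by push_cast; ring]
        norm_cast
      rw [hS1, hS2, ← Finset.sum_add_distrib]
      refine (Finset.sum_congr rfl fun k hk => ?_).symm
      simp only [Finset.mem_range] at hk
      rw [show ((k:ℤ) - 2*((N+1:ℕ):ℤ)*(l:ℤ)) = ((k:ℤ) - 2*((N:ℤ)+1)*(l:ℤ)) from by push_cast; ring]
      rw [Arec l hl N k (by omega), add_smul]
  -- the norm as a sum
  have hnorm : Φ (((F+Fρ)^n) (v 0)) (((F+Fρ)^n) (v 0))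
      = ∑ k ∈ Finset.range (l+1),
        (Polynomial.toLaurent (cpo l n k) * T ((k:ℤ) - 2*(n:ℤ)*(l:ℤ)))^2
          * (T (-((k:ℤ)*((l:ℤ)-(k:ℤ)))) * qbinomQ l k) := by
    rw [hval n, map_sum]
    refine Finset.sum_congr rfl fun k hk => ?_
    simp only [Finset.mem_range] at hk
    rw [map_smul, smul_eq_mul, map_sum, LinearMap.sum_apply, Finset.sum_eq_single k]
    · rw [map_smul, LinearMap.smul_apply, smul_eq_mul, hΦd k (by omega)]
      ring
    · intro j hj hne
      rw [map_smul, LinearMap.smul_apply, hΦo j k hne, smul_zero]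
    · intro h
      exact absurd (Finset.mem_range.mpr (by omega)) h
  have hsummand : ∀ k ∈ Finset.range (l+1),
      (Polynomial.toLaurent (cpo l n k) * T ((k:ℤ) - 2*(n:ℤ)*(l:ℤ)))^2
        * (T (-((k:ℤ)*((l:ℤ)-(k:ℤ)))) * qbinomQ l k)
      = Polynomial.toLaurent (X^(ee l k) * cpo l n k^2 * gp l k)
          * T (-(4*(n:ℤ)*(l:ℤ)) - 2*(l:ℤ)*(l:ℤ)) := by
    intro k hk
    simp only [Finset.mem_range] at hk
    rw [qbinom_eq l k]
    rw [shift4 (cpo l n k) (gp l k) ((k:ℤ) - 2*(n:ℤ)*(l:ℤ)) (-((k:ℤ)*((l:ℤ)-(k:ℤ))))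
      (-((k:ℤ)*((l:ℤ)-(k:ℤ)))) (2*((k:ℤ) - 2*(n:ℤ)*(l:ℤ)) - 2*(k:ℤ)*((l:ℤ)-(k:ℤ))) (by ring)]
    conv_rhs => rw [mul_assoc, toL_shift]
    congr 1
    rw [ee_cast l k (by omega)]
    ring
  have hrepr : Φ (((F+Fρ)^n) (v 0)) (((F+Fρ)^n) (v 0))
      = Polynomial.toLaurent (∑ k ∈ Finset.range (l+1), X^(ee l k) * cpo l n k^2 * gp l k)
          * T (-(4*(n:ℤ)*(l:ℤ)) - 2*(l:ℤ)*(l:ℤ)) := by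
    rw [hnorm, Finset.sum_congr rfl hsummand, ← Finset.sum_mul, ← map_sum]
  constructor
  · -- n ≤ l
    intro hn
    refine hasTop_of _ _ (n*(n-1) + 4*n*l + 2*l*l) _ _ ?_ hrepr ?_
    · refine topNP l hl n _ ?_ ?_
      · rw [keyf_le l n hn, show (n - n)/2 = 0 from by omega]
        have h1 := dlt_key_low l n hl hn
        have h2 := ee_cast l n hn
        push_cast
        linarith [pred_cast_mul n, h1, h2]
      · intro k m hk hm hne
        rw [keyf_le l n hn] at hne
        have hm1 : 1 ≤ m := by omega
        have h1 := dlt_lt_low l k m hl hm1 (by omega)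
        have h2 := ee_cast l k hk
        have hmc : ((n:ℕ):ℤ) = (k:ℤ) + 2*(m:ℤ) := by exact_mod_cast hm
        rw [← hmc] at h1
        push_cast
        linarith [pred_cast_mul n, h1, h2]
    · push_cast
      linear_combination -pred_cast_mul n
  · -- l ≤ n
    intro hn
    refine hasTop_of _ _ ((2*n - l)*(l-1) + 4*n*l + 2*l*l) _ _ ?_ hrepr ?_
    · refine topNP l hl n _ ?_ ?_
      · rcases Nat.mod_two_eq_zero_or_one (n - l) with hpar | hpar
        · obtain ⟨Mq, hM⟩ : ∃ Mq, n = l + 2*Mq := ⟨(n-l)/2, by omega⟩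
          subst hM
          rw [show keyf l (l + 2*Mq) = l from by
            simp only [keyf]; split_ifs with h <;> omega]
          rw [show (l + 2*Mq - l)/2 = Mq from by omega]
          have h1 := dlt_key_top l Mq hl
          have h2 := ee_cast l l le_rfl
          push_cast [Nat.cast_sub (show l ≤ 2*(l+2*Mq) by omega), Nat.cast_sub hl]
          linarith
        · obtain ⟨Mq, hM, hM1⟩ : ∃ Mq, n = (l-1) + 2*Mq ∧ 1 ≤ Mq :=
            ⟨(n-l+1)/2, by omega, by omega⟩
          subst hM
          rw [show keyf l ((l-1) + 2*Mq) = l - 1 from by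
            simp only [keyf]; split_ifs with h <;> omega]
          rw [show ((l-1) + 2*Mq - (l-1))/2 = Mq from by omega]
          have h1 := dlt_key_sub l Mq hl hM1
          have h2 := ee_cast l (l-1) (by omega)
          push_cast [Nat.cast_sub hl] at h2
          push_cast [Nat.cast_sub (show l ≤ 2*((l-1)+2*Mq) by omega), Nat.cast_sub hl]
          linarith
      · intro k m hk hm hne
        have hk2 : k + 2 ≤ l := keyf_parity l n k m hl hk hm hne hn
        have h2 := ee_cast l k hk
        have hmc : ((n:ℕ):ℤ) = (k:ℤ) + 2*(m:ℤ) := by exact_mod_cast hm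
        rcases le_or_gt l (k+m) with hc | hc
        · have h1 := dlt_lt_high l k m hl hk2 hc
          rw [← hmc] at h1
          push_cast [Nat.cast_sub (show l ≤ 2*n by omega), Nat.cast_sub hl]
          linarith
        · have h1 := dlt_lt_mid l k m hl hc (by omega)
          rw [← hmc] at h1
          push_cast [Nat.cast_sub (show l ≤ 2*n by omega), Nat.cast_sub hl]
          linarith
    · push_cast [Nat.cast_sub (show l ≤ 2*n by omega), Nat.cast_sub hl]
      ring
end

section
/- The minimal length element s_0^n d_n of the double coset W_O (s_0^n d_n) W_{O+} in the type D_l Weyl group (extended by s_0 when n is odd) has length binom(n,2). -/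
/-- The simple reflection `s_i` of type `B_l`/`D_l` (for `1 ≤ i ≤ l-1`): the signed
permutation swapping `x_i` and `x_{i+1}`, modelled as a permutation of `ℕ × Bool`
(position, sign). -/
noncomputable def sgen (i : ℕ) : Equiv.Perm (ℕ × Bool) :=
  Equiv.prodCongr (Equiv.swap i (i + 1)) (Equiv.refl Bool)

/-- The sign change `s₀ : x_1 ↦ -x_1`. -/
noncomputable def s0 : Equiv.Perm (ℕ × Bool) :=
  Equiv.swap ((1 : ℕ), true) ((1 : ℕ), false)

/-- The simple reflection `s_{-1} = s₀ s₁ s₀ : x_1 ↦ -x_2`. -/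
noncomputable def sm1 : Equiv.Perm (ℕ × Bool) := s0 * sgen 1 * s0

/-- The signed permutation `d_n : x_i ↦ -x_{n+1-i}` for `1 ≤ i ≤ n`, fixing the other
variables (an involution). -/
noncomputable def dperm (n : ℕ) : Equiv.Perm (ℕ × Bool) :=
  Function.Involutive.toPerm
    (fun p => if 1 ≤ p.1 ∧ p.1 ≤ n then (n + 1 - p.1, !p.2) else p)
    (by
      rintro ⟨i, b⟩
      dsimp only
      by_cases h : 1 ≤ i ∧ i ≤ n
      · rw [if_pos h]
        dsimp only
        rw [if_pos (⟨by omega, by omega⟩ : 1 ≤ n + 1 - i ∧ n + 1 - i ≤ n)]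
        have e1 : n + 1 - (n + 1 - i) = i := by omega
        rw [e1, Bool.not_not]
      · rw [if_neg h, if_neg h])

/-- The double coset representative `s₀ⁿ dₙ`. -/
noncomputable def repn (n : ℕ) : Equiv.Perm (ℕ × Bool) := s0 ^ n * dperm n

/-- The simple reflections `{s_1, …, s_{l-1}}` generating `W_{O+}` (type `A_{l-1}`). -/
def SOp (l : ℕ) : Set (Equiv.Perm (ℕ × Bool)) :=
  {g | ∃ i, 1 ≤ i ∧ i ≤ l - 1 ∧ g = sgen i}

/-- The full set of simple reflections `{s_{-1}, s_1, …, s_{l-1}}` of the type `D_l`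
Weyl group `W`. -/
def SD (l : ℕ) : Set (Equiv.Perm (ℕ × Bool)) := insert sm1 (SOp l)

/-- The Coxeter length on the type `D_l` Weyl group: the minimal length of a word in the
simple reflections `SD l` expressing `w`. -/
noncomputable def dlen (l : ℕ) (w : Equiv.Perm (ℕ × Bool)) : ℕ :=
  sInf {m | ∃ word : List (Equiv.Perm (ℕ × Bool)),
    word.length = m ∧ (∀ x ∈ word, x ∈ SD l) ∧ word.prod = w}

-- application lemmas
lemma sgen_apply (i p : ℕ) (b : Bool) :
    sgen i (p, b) = (if p = i then i + 1 else if p = i + 1 then i else p, b) := by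
  show (Equiv.swap i (i+1) p, b) = _
  rw [Equiv.swap_apply_def]

lemma s0_apply (p : ℕ) (b : Bool) :
    s0 (p, b) = if p = 1 then (1, !b) else (p, b) := by
  by_cases h : p = 1
  · subst h; cases b <;> simp [s0, Equiv.swap_apply_def]
  · rw [if_neg h]
    exact Equiv.swap_apply_of_ne_of_ne (by simp [Prod.ext_iff, h]) (by simp [Prod.ext_iff, h])

lemma sm1_apply (p : ℕ) (b : Bool) :
    sm1 (p, b) = if p = 1 then (2, !b) else if p = 2 then (1, !b) else (p, b) := by
  by_cases h1 : p = 1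
  · subst h1; simp [sm1, Equiv.Perm.mul_apply, s0_apply, sgen_apply]
  · by_cases h2 : p = 2
    · subst h2; simp [sm1, Equiv.Perm.mul_apply, s0_apply, sgen_apply]
    · have h3 : p ≠ 1 + 1 := by omega
      simp [sm1, Equiv.Perm.mul_apply, s0_apply, sgen_apply, h1, h2, h3]

lemma dperm_apply (n p : ℕ) (b : Bool) :
    dperm n (p, b) = if 1 ≤ p ∧ p ≤ n then (n + 1 - p, !b) else (p, b) := rfl

lemma s0_sq : s0 * s0 = 1 := by
  simpa [s0] using Equiv.swap_mul_self ((1:ℕ), true) ((1:ℕ), false)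

lemma s0_pow_even {m : ℕ} (h : m % 2 = 0) : s0 ^ m = 1 := by
  obtain ⟨k, rfl⟩ : ∃ k, m = 2 * k := ⟨m / 2, by omega⟩
  rw [pow_mul]
  simp [pow_two, s0_sq]

lemma s0_pow_odd {m : ℕ} (h : m % 2 = 1) : s0 ^ m = s0 := by
  obtain ⟨k, rfl⟩ : ∃ k, m = 2 * k + 1 := ⟨m / 2, by omega⟩
  rw [pow_succ, pow_mul]
  simp [pow_two, s0_sq]

lemma repn_apply (m p : ℕ) (b : Bool) :
    repn m (p, b) = if 1 ≤ p ∧ p ≤ m then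
      (if p = m ∧ m % 2 = 1 then (1, b) else (m + 1 - p, !b)) else (p, b) := by
  simp only [repn, Equiv.Perm.mul_apply, dperm_apply]
  rcases Nat.even_or_odd m with he | ho
  · rw [s0_pow_even (Nat.even_iff.mp he)]
    split_ifs with h1 h2
    · exact absurd h2.2 (by have := Nat.even_iff.mp he; omega)
    · rfl
    · rfl
  · rw [s0_pow_odd (Nat.odd_iff.mp ho)]
    have hm := Nat.odd_iff.mp ho
    split_ifs with h1 h2
    · obtain ⟨rfl, -⟩ := h2
      rw [s0_apply, if_pos (by omega)]
      simp
    · rw [s0_apply, if_neg (by omega)]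
    · rw [s0_apply, if_neg (by omega)]

-- PART 2: upper bound word
noncomputable def cwordA (m : ℕ) : List (Equiv.Perm (ℕ × Bool)) :=
  (List.range m).map (fun i => sgen (i+1))

noncomputable def cwordB (k : ℕ) : List (Equiv.Perm (ℕ × Bool)) :=
  (List.range k).map (fun i => sgen (i+2))

noncomputable def cword (m : ℕ) : List (Equiv.Perm (ℕ × Bool)) :=
  if m % 2 = 0 then cwordA m else sm1 :: cwordB (m-1)

noncomputable def uword : ℕ → List (Equiv.Perm (ℕ × Bool))
  | 0 => []
  | m+1 => cword m ++ uword m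

lemma cwordA_prod (m : ℕ) : ∀ p b, (cwordA m).prod (p, b) =
    if 1 ≤ p ∧ p ≤ m then (p+1, b) else if p = m+1 then (1, b) else (p, b) := by
  induction m with
  | zero =>
    intro p b
    simp only [cwordA, List.range_zero, List.map_nil, List.prod_nil, Equiv.Perm.one_apply]
    split_ifs with h1 h2
    · omega
    · subst h2; rfl
    · rfl
  | succ m ih =>
    intro p b
    have hw : cwordA (m+1) = cwordA m ++ [sgen (m+1)] := by
      simp [cwordA, List.range_succ]
    rw [hw, List.prod_append, List.prod_singleton, Equiv.Perm.mul_apply, sgen_apply]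
    simp only [ih]
    split_ifs <;> simp only [Prod.mk.injEq, and_true] <;> first | omega | (exfalso; omega)

lemma cwordB_prod (k : ℕ) : ∀ p b, (cwordB k).prod (p, b) =
    if 2 ≤ p ∧ p ≤ k+1 then (p+1, b) else if p = k+2 then (2, b) else (p, b) := by
  induction k with
  | zero =>
    intro p b
    simp only [cwordB, List.range_zero, List.map_nil, List.prod_nil, Equiv.Perm.one_apply]
    split_ifs with h1 h2
    · omega
    · subst h2; rfl
    · rfl
  | succ k ih =>
    intro p b
    have hw : cwordB (k+1) = cwordB k ++ [sgen (k+2)] := by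
      simp [cwordB, List.range_succ]
    rw [hw, List.prod_append, List.prod_singleton, Equiv.Perm.mul_apply, sgen_apply]
    simp only [ih]
    split_ifs <;> simp only [Prod.mk.injEq, and_true] <;> first | omega | (exfalso; omega)

lemma cword_prod_repn (m : ℕ) : (cword m).prod * repn m = repn (m+1) := by
  apply Equiv.ext
  rintro ⟨p, b⟩
  rw [Equiv.Perm.mul_apply, repn_apply, repn_apply]
  rcases Nat.even_or_odd m with he | ho
  · have hm : m % 2 = 0 := Nat.even_iff.mp he
    rw [cword, if_pos hm]
    split_ifs with h1 h2 h3 h4 h5 <;>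
      rw [cwordA_prod] <;> split_ifs <;> simp only [Prod.mk.injEq, and_true] <;>
      first | omega | (exfalso; omega)
  · have hm : m % 2 = 1 := Nat.odd_iff.mp ho
    rw [cword, if_neg (by omega), List.prod_cons, Equiv.Perm.mul_apply]
    split_ifs with h1 h2 h3 h4 h5 <;>
      rw [cwordB_prod] <;> split_ifs <;> rw [sm1_apply] <;> split_ifs <;>
      simp only [Prod.mk.injEq, and_true] <;>
      first | omega | (exfalso; omega)

lemma repn_zero : repn 0 = 1 := by
  apply Equiv.ext
  rintro ⟨p, b⟩
  rw [repn_apply, if_neg (by omega)]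
  rfl

lemma uword_prod (n : ℕ) : (uword n).prod = repn n := by
  induction n with
  | zero => simp [uword, repn_zero]
  | succ m ih =>
    rw [uword, List.prod_append, ih, cword_prod_repn]

lemma cword_length (m : ℕ) : (cword m).length = m := by
  rcases Nat.even_or_odd m with he | ho
  · rw [cword, if_pos (Nat.even_iff.mp he)]
    simp [cwordA]
  · have hm : m % 2 = 1 := Nat.odd_iff.mp ho
    rw [cword, if_neg (by omega)]
    simp only [List.length_cons, cwordB, List.length_map, List.length_range]
    omega

lemma uword_length (n : ℕ) : (uword n).length = n.choose 2 := by
  induction n with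
  | zero => simp [uword]
  | succ m ih =>
    rw [uword, List.length_append, cword_length, ih, Nat.choose_succ_succ,
      Nat.choose_one_right]
    try omega

lemma uword_mem {l n : ℕ} (hn : n ≤ l) : ∀ x ∈ uword n, x ∈ SD l := by
  induction n with
  | zero => simp [uword]
  | succ m ih =>
    intro x hx
    rw [uword, List.mem_append] at hx
    rcases hx with hx | hx
    · rw [cword] at hx
      split_ifs at hx with hp
      · simp only [cwordA, List.mem_map, List.mem_range] at hx
        obtain ⟨i, hi, rfl⟩ := hx
        exact Or.inr ⟨i+1, by omega, by omega, rfl⟩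
      · rcases List.mem_cons.mp hx with rfl | hx
        · exact Or.inl rfl
        · simp only [cwordB, List.mem_map, List.mem_range] at hx
          obtain ⟨i, hi, rfl⟩ := hx
          exact Or.inr ⟨i+2, by omega, by omega, rfl⟩
    · exact ih (by omega) x hx

-- PART 3: lower bound
def toInt (q : ℕ × Bool) : ℤ := if q.2 then (q.1 : ℤ) else -(q.1 : ℤ)

noncomputable def vf (w : Equiv.Perm (ℕ × Bool)) (i : ℕ) : ℤ := toInt (w (i, true))

noncomputable def Dv (l : ℕ) (v : ℕ → ℤ) : ℕ :=
  ∑ i ∈ Finset.Ico 1 (l+1), ∑ j ∈ Finset.Ico 1 (l+1),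
    (if i < j then (if v i > v j then 1 else 0) + (if v i + v j < 0 then 1 else 0) else 0)

def commSig (w : Equiv.Perm (ℕ × Bool)) : Prop :=
  ∀ p : ℕ × Bool, w (p.1, !p.2) = ((w p).1, !(w p).2)

def fix0 (w : Equiv.Perm (ℕ × Bool)) : Prop := ∀ c : Bool, w (0, c) = (0, c)

open scoped Classical in
noncomputable def Nv (l : ℕ) (w : Equiv.Perm (ℕ × Bool)) : ℕ :=
  if commSig w ∧ fix0 w then Dv l (vf w) else 0

lemma Dv_step (l : ℕ) (v v' : ℕ → ℤ) (a b : ℕ)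
    (h1 : ∀ i j, 1 ≤ i → 1 ≤ j → i ≠ j → ¬(i = a ∧ j = b) → ¬(i = b ∧ j = a) →
      ((if v' i > v' j then 1 else 0) + (if v' i + v' j < 0 then 1 else 0) : ℕ) =
        (if v i > v j then 1 else 0) + (if v i + v j < 0 then 1 else 0))
    (h2 : ∀ i j, 1 ≤ i → 1 ≤ j → ((if v' i > v' j then 1 else 0) + (if v' i + v' j < 0 then 1 else 0) : ℕ) ≤
      (if v i > v j then 1 else 0) + (if v i + v j < 0 then 1 else 0) + 1) :
    Dv l v' ≤ Dv l v + 1 := by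
  classical
  set A := min a b with hA
  set B := max a b with hB
  set s := Finset.Ico 1 (l+1) with hs
  have hpt : ∀ i j : ℕ, 1 ≤ i → 1 ≤ j →
      (if i < j then (if v' i > v' j then 1 else 0) + (if v' i + v' j < 0 then 1 else 0) else 0)
      ≤ (if i < j then (if v i > v j then 1 else 0) + (if v i + v j < 0 then 1 else 0) else 0)
        + (if i = A ∧ j = B then 1 else 0) := by
    intro i j hi1 hj1
    by_cases hij : i < j
    · rw [if_pos hij, if_pos hij]
      by_cases hsp : (i = a ∧ j = b) ∨ (i = b ∧ j = a)
      · have hAB : i = A ∧ j = B := by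
          rcases hsp with ⟨rfl, rfl⟩ | ⟨rfl, rfl⟩ <;> constructor <;> omega
        rw [if_pos hAB]
        exact h2 i j hi1 hj1
      · rw [h1 i j hi1 hj1 (by omega) (fun h => hsp (Or.inl h)) (fun h => hsp (Or.inr h))]
        exact Nat.le_add_right _ _
    · rw [if_neg hij, if_neg hij]
      exact Nat.zero_le _
  calc Dv l v' ≤ ∑ i ∈ s, ∑ j ∈ s,
        ((if i < j then (if v i > v j then 1 else 0) + (if v i + v j < 0 then 1 else 0) else 0)
          + (if i = A ∧ j = B then 1 else 0)) := by
        refine Finset.sum_le_sum fun i hi => Finset.sum_le_sum fun j hj => hpt i j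
          (Finset.mem_Ico.mp hi).1 (Finset.mem_Ico.mp hj).1
    _ = Dv l v + ∑ i ∈ s, ∑ j ∈ s, (if i = A ∧ j = B then 1 else 0) := by
        rw [Dv]
        rw [← Finset.sum_add_distrib]
        refine Finset.sum_congr rfl fun i _ => ?_
        rw [← Finset.sum_add_distrib]
    _ ≤ Dv l v + 1 := by
        gcongr
        calc ∑ i ∈ s, ∑ j ∈ s, (if i = A ∧ j = B then (1:ℕ) else 0)
            ≤ ∑ i ∈ s, (if i = A then 1 else 0) := by
              refine Finset.sum_le_sum fun i _ => ?_
              by_cases hiA : i = A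
              · rw [if_pos hiA]
                have hj : ∀ j : ℕ, (if i = A ∧ j = B then (1:ℕ) else 0) = if j = B then 1 else 0 := by
                  intro j; by_cases h : j = B <;> simp [h, hiA]
                simp only [hj]
                rw [Finset.sum_ite_eq' s B (fun _ => (1:ℕ))]
                split_ifs <;> omega
              · have : ∀ j : ℕ, (if i = A ∧ j = B then (1:ℕ) else 0) = 0 := by
                  intro j; simp [hiA]
                simp [this, hiA]
          _ ≤ 1 := by
              rw [Finset.sum_ite_eq' s A (fun _ => (1:ℕ))]
              split_ifs <;> omega

-- g functions
def gA (k : ℕ) (x : ℤ) : ℤ :=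
  if x = (k:ℤ) then (k:ℤ)+1 else if x = (k:ℤ)+1 then (k:ℤ)
  else if x = -(k:ℤ) then -((k:ℤ)+1) else if x = -((k:ℤ)+1) then -(k:ℤ) else x

def gD (x : ℤ) : ℤ :=
  if x = 1 then -2 else if x = -1 then 2 else if x = 2 then -1 else if x = -2 then 1 else x

set_option maxHeartbeats 1600000 in
lemma gA_pres (k : ℕ) (hk : 1 ≤ k) (x y : ℤ) (hx : x ≠ 0) (hy : y ≠ 0)
    (h1 : ¬((x = (k:ℤ) ∨ x = -(k:ℤ)) ∧ (y = (k:ℤ)+1 ∨ y = -((k:ℤ)+1))))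
    (h2 : ¬((x = (k:ℤ)+1 ∨ x = -((k:ℤ)+1)) ∧ (y = (k:ℤ) ∨ y = -(k:ℤ)))) :
    ((if gA k x > gA k y then 1 else 0) + (if gA k x + gA k y < 0 then 1 else 0) : ℕ) =
      (if x > y then 1 else 0) + (if x + y < 0 then 1 else 0) := by
  unfold gA
  split_ifs <;> omega

set_option maxHeartbeats 1600000 in
lemma gA_bound (k : ℕ) (hk : 1 ≤ k) (x y : ℤ) (hx : x ≠ 0) (hy : y ≠ 0) :
    ((if gA k x > gA k y then 1 else 0) + (if gA k x + gA k y < 0 then 1 else 0) : ℕ) ≤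
      (if x > y then 1 else 0) + (if x + y < 0 then 1 else 0) + 1 := by
  unfold gA
  split_ifs <;> omega

set_option maxHeartbeats 1600000 in
lemma gD_pres (x y : ℤ) (hx : x ≠ 0) (hy : y ≠ 0)
    (h1 : ¬((x = 1 ∨ x = -1) ∧ (y = 2 ∨ y = -2)))
    (h2 : ¬((x = 2 ∨ x = -2) ∧ (y = 1 ∨ y = -1)))
    (h3 : ¬((x = 1 ∨ x = -1) ∧ (y = 1 ∨ y = -1)))
    (h4 : ¬((x = 2 ∨ x = -2) ∧ (y = 2 ∨ y = -2))) :
    ((if gD x > gD y then 1 else 0) + (if gD x + gD y < 0 then 1 else 0) : ℕ) =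
      (if x > y then 1 else 0) + (if x + y < 0 then 1 else 0) := by
  unfold gD
  split_ifs <;> omega

set_option maxHeartbeats 1600000 in
lemma gD_bound (x y : ℤ) (hx : x ≠ 0) (hy : y ≠ 0) :
    ((if gD x > gD y then 1 else 0) + (if gD x + gD y < 0 then 1 else 0) : ℕ) ≤
      (if x > y then 1 else 0) + (if x + y < 0 then 1 else 0) + 1 := by
  unfold gD
  split_ifs <;> omega

-- commSig lemmas
lemma commSig_sgen (k : ℕ) : commSig (sgen k) := by
  rintro ⟨p, b⟩
  simp only [sgen_apply]

lemma commSig_sm1 : commSig sm1 := by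
  rintro ⟨p, b⟩
  simp only [sm1_apply]
  split_ifs <;> rfl

lemma commSig_repn (n : ℕ) : commSig (repn n) := by
  rintro ⟨p, b⟩
  simp only [repn_apply]
  split_ifs <;> rfl

lemma commSig.mul {u w : Equiv.Perm (ℕ × Bool)} (hu : commSig u) (hw : commSig w) :
    commSig (u * w) := by
  intro p
  rw [Equiv.Perm.mul_apply, Equiv.Perm.mul_apply, hw p, hu (w p)]

lemma commSig.inv {u : Equiv.Perm (ℕ × Bool)} (hu : commSig u) : commSig u⁻¹ := by
  intro q
  have h := hu (u⁻¹ q)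
  rw [show ∀ x, u (u⁻¹ x) = x from fun x => u.apply_symm_apply x] at h
  calc u⁻¹ (q.1, !q.2) = u⁻¹ (u ((u⁻¹ q).1, !(u⁻¹ q).2)) := by rw [h]
    _ = ((u⁻¹ q).1, !(u⁻¹ q).2) := u.symm_apply_apply _

lemma commSig.of_mul {u w : Equiv.Perm (ℕ × Bool)} (hu : commSig u) (huw : commSig (u * w)) :
    commSig w := by
  have h : w = u⁻¹ * (u * w) := by group
  rw [h]
  exact hu.inv.mul huw

-- goodness lemmas
lemma fix0_sgen (k : ℕ) (hk : 1 ≤ k) : fix0 (sgen k) := by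
  intro c
  rw [sgen_apply, if_neg (by omega), if_neg (by omega)]

lemma fix0_sm1 : fix0 sm1 := by
  intro c
  rw [sm1_apply, if_neg (by omega), if_neg (by omega)]

lemma fix0_repn (n : ℕ) : fix0 (repn n) := by
  intro c
  rw [repn_apply, if_neg (by omega)]

lemma fix0.mul {u w : Equiv.Perm (ℕ × Bool)} (hu : fix0 u) (hw : fix0 w) : fix0 (u * w) := by
  intro c
  rw [Equiv.Perm.mul_apply, hw c, hu c]

lemma fix0.inv {u : Equiv.Perm (ℕ × Bool)} (hu : fix0 u) : fix0 u⁻¹ := by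
  intro c
  rw [← hu c, show ∀ x, u⁻¹ (u x) = x from fun x => u.symm_apply_apply x, hu c]

lemma fix0.of_mul {u w : Equiv.Perm (ℕ × Bool)} (hu : fix0 u) (huw : fix0 (u * w)) :
    fix0 w := by
  have h : w = u⁻¹ * (u * w) := by group
  rw [h]
  exact hu.inv.mul huw

-- value function lemmas
lemma vf_ne_zero {w : Equiv.Perm (ℕ × Bool)} (hw : fix0 w) {i : ℕ} (hi : 1 ≤ i) :
    vf w i ≠ 0 := by
  intro h
  rcases hq : w (i, true) with ⟨q, c⟩
  have hq0 : q = 0 := by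
    rw [vf, hq] at h
    rcases c <;> simp [toInt] at h <;> omega
  subst hq0
  have : (i, true) = (0, c) := w.injective (by rw [hq, hw c])
  simp at this
  omega

lemma vf_abs_inj {w : Equiv.Perm (ℕ × Bool)} (hc : commSig w) {i j : ℕ}
    (h : vf w i = vf w j ∨ vf w i = -vf w j) : i = j := by
  rcases hi : w (i, true) with ⟨q, c⟩
  rcases hj : w (j, true) with ⟨r, d⟩
  have hqr : q = r := by
    rw [vf, vf, hi, hj] at h
    rcases c <;> rcases d <;> simp [toInt] at h <;> omega
  subst hqr
  by_cases hcd : c = d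
  · subst hcd
    have : (i, true) = (j, true) := w.injective (by rw [hi, hj])
    simpa using this
  · exfalso
    have hwj : w (j, false) = (q, !d) := by
      have h2 := hc (j, true)
      simp only at h2
      rw [hj] at h2
      exact h2
    have hcd' : c = !d := by rcases c <;> rcases d <;> simp_all
    have : (i, true) = (j, false) := w.injective (by rw [hi, hwj, hcd'])
    simp at this

lemma vf_spec {w : Equiv.Perm (ℕ × Bool)} (hc : commSig w) {k : ℕ} (hk : 1 ≤ k) {i : ℕ}
    (h : vf w i = (k:ℤ) ∨ vf w i = -(k:ℤ)) : i = (w⁻¹ ((k:ℕ), true)).1 := by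
  have key : w (i, true) = ((k:ℕ), true) ∨ w (i, true) = ((k:ℕ), false) := by
    rcases hq : w (i, true) with ⟨q, c⟩
    rw [vf, hq] at h
    rcases c
    · right
      simp only [toInt] at h
      have hqk : q = k := by rcases h with h | h <;> simp at h <;> omega
      rw [hqk]
    · left
      simp only [toInt] at h
      have hqk : q = k := by rcases h with h | h <;> simp at h <;> omega
      rw [hqk]
  rcases key with hk1 | hk1
  · have hv : w⁻¹ ((k:ℕ), true) = (i, true) := by rw [← hk1, show ∀ x, w⁻¹ (w x) = x from fun x => w.symm_apply_apply x]
    rw [hv]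
  · have h1 : w⁻¹ ((k:ℕ), false) = (i, true) := by rw [← hk1, show ∀ x, w⁻¹ (w x) = x from fun x => w.symm_apply_apply x]
    have h2 := hc.inv ((k:ℕ), true)
    simp only at h2
    rw [show (((k:ℕ), !true) : ℕ × Bool) = ((k:ℕ), false) from rfl, h1] at h2
    exact congrArg Prod.fst h2

lemma toInt_mk_true (q : ℕ) : toInt (q, true) = (q:ℤ) := rfl
lemma toInt_mk_false (q : ℕ) : toInt (q, false) = -(q:ℤ) := rfl

lemma vf_sgen_mul (k : ℕ) (hk : 1 ≤ k) (w : Equiv.Perm (ℕ × Bool)) (i : ℕ) :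
    vf (sgen k * w) i = gA k (vf w i) := by
  rcases hq : w (i, true) with ⟨q, c⟩
  rw [vf, Equiv.Perm.mul_apply, hq, sgen_apply, vf, hq]
  rcases c <;> simp only [toInt_mk_true, toInt_mk_false, gA] <;> split_ifs <;>
    first
      | omega
      | (simp only [Bool.not_true, Bool.not_false, toInt_mk_true, toInt_mk_false] at *; try omega)

lemma vf_sm1_mul (w : Equiv.Perm (ℕ × Bool)) (i : ℕ) :
    vf (sm1 * w) i = gD (vf w i) := by
  rcases hq : w (i, true) with ⟨q, c⟩
  rw [vf, Equiv.Perm.mul_apply, hq, sm1_apply, vf, hq]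
  rcases c <;> simp only [toInt_mk_true, toInt_mk_false, gD] <;> split_ifs <;>
    first
      | omega
      | (simp only [Bool.not_true, Bool.not_false, toInt_mk_true, toInt_mk_false] at *; try omega)

lemma Nv_step_sgen (l k : ℕ) (hk1 : 1 ≤ k) (w : Equiv.Perm (ℕ × Bool)) :
    Nv l (sgen k * w) ≤ Nv l w + 1 := by
  by_cases hgw : commSig w ∧ fix0 w
  · have hg' : commSig (sgen k * w) ∧ fix0 (sgen k * w) :=
      ⟨(commSig_sgen k).mul hgw.1, (fix0_sgen k hk1).mul hgw.2⟩
    rw [Nv, if_pos hg', Nv, if_pos hgw]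
    refine Dv_step l (vf w) (vf (sgen k * w)) ((w⁻¹ ((k:ℕ), true)).1)
      ((w⁻¹ ((k+1:ℕ), true)).1) ?_ ?_
    · intro i j hi hj hij hab hba
      rw [vf_sgen_mul k hk1 w i, vf_sgen_mul k hk1 w j]
      refine gA_pres k hk1 _ _ (vf_ne_zero hgw.2 hi) (vf_ne_zero hgw.2 hj) ?_ ?_
      · rintro ⟨hx, hy⟩
        refine hab ⟨vf_spec hgw.1 hk1 hx, vf_spec hgw.1 (by omega)
          (?_ : vf w j = ((k+1:ℕ):ℤ) ∨ vf w j = -((k+1:ℕ):ℤ))⟩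
        push_cast
        exact hy
      · rintro ⟨hx, hy⟩
        refine hba ⟨vf_spec hgw.1 (by omega)
          (?_ : vf w i = ((k+1:ℕ):ℤ) ∨ vf w i = -((k+1:ℕ):ℤ)), vf_spec hgw.1 hk1 hy⟩
        push_cast
        exact hx
    · intro i j hi hj
      rw [vf_sgen_mul k hk1 w i, vf_sgen_mul k hk1 w j]
      exact gA_bound k hk1 _ _ (vf_ne_zero hgw.2 hi) (vf_ne_zero hgw.2 hj)
  · have hg' : ¬ (commSig (sgen k * w) ∧ fix0 (sgen k * w)) := by
      rintro ⟨h1, h2⟩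
      exact hgw ⟨(commSig_sgen k).of_mul h1, (fix0_sgen k hk1).of_mul h2⟩
    rw [Nv, if_neg hg']
    exact Nat.zero_le _

lemma Nv_step_sm1 (l : ℕ) (w : Equiv.Perm (ℕ × Bool)) :
    Nv l (sm1 * w) ≤ Nv l w + 1 := by
  by_cases hgw : commSig w ∧ fix0 w
  · have hg' : commSig (sm1 * w) ∧ fix0 (sm1 * w) :=
      ⟨commSig_sm1.mul hgw.1, fix0_sm1.mul hgw.2⟩
    rw [Nv, if_pos hg', Nv, if_pos hgw]
    refine Dv_step l (vf w) (vf (sm1 * w)) ((w⁻¹ ((1:ℕ), true)).1)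
      ((w⁻¹ ((2:ℕ), true)).1) ?_ ?_
    · intro i j hi hj hij hab hba
      rw [vf_sm1_mul w i, vf_sm1_mul w j]
      refine gD_pres _ _ (vf_ne_zero hgw.2 hi) (vf_ne_zero hgw.2 hj) ?_ ?_ ?_ ?_
      · rintro ⟨hx, hy⟩
        refine hab ⟨vf_spec hgw.1 le_rfl
            (?_ : vf w i = ((1:ℕ):ℤ) ∨ vf w i = -((1:ℕ):ℤ)), vf_spec hgw.1 (by omega)
            (?_ : vf w j = ((2:ℕ):ℤ) ∨ vf w j = -((2:ℕ):ℤ))⟩ <;> push_cast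
        · exact hx
        · exact hy
      · rintro ⟨hx, hy⟩
        refine hba ⟨vf_spec hgw.1 (by omega)
            (?_ : vf w i = ((2:ℕ):ℤ) ∨ vf w i = -((2:ℕ):ℤ)), vf_spec hgw.1 le_rfl
            (?_ : vf w j = ((1:ℕ):ℤ) ∨ vf w j = -((1:ℕ):ℤ))⟩ <;> push_cast
        · exact hx
        · exact hy
      · rintro ⟨hx, hy⟩
        refine hij ?_
        have e1 := vf_spec hgw.1 le_rfl
          (show vf w i = ((1:ℕ):ℤ) ∨ vf w i = -((1:ℕ):ℤ) by push_cast; exact hx)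
        have e2 := vf_spec hgw.1 le_rfl
          (show vf w j = ((1:ℕ):ℤ) ∨ vf w j = -((1:ℕ):ℤ) by push_cast; exact hy)
        rw [e1, e2]
      · rintro ⟨hx, hy⟩
        refine hij ?_
        have e1 := vf_spec hgw.1 (by omega)
          (show vf w i = ((2:ℕ):ℤ) ∨ vf w i = -((2:ℕ):ℤ) by push_cast; exact hx)
        have e2 := vf_spec hgw.1 (by omega)
          (show vf w j = ((2:ℕ):ℤ) ∨ vf w j = -((2:ℕ):ℤ) by push_cast; exact hy)
        rw [e1, e2]
    · intro i j hi hj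
      rw [vf_sm1_mul w i, vf_sm1_mul w j]
      exact gD_bound _ _ (vf_ne_zero hgw.2 hi) (vf_ne_zero hgw.2 hj)
  · have hg' : ¬ (commSig (sm1 * w) ∧ fix0 (sm1 * w)) := by
      rintro ⟨h1, h2⟩
      exact hgw ⟨commSig_sm1.of_mul h1, fix0_sm1.of_mul h2⟩
    rw [Nv, if_neg hg']
    exact Nat.zero_le _

lemma Nv_one (l : ℕ) : Nv l 1 = 0 := by
  have hg : commSig (1 : Equiv.Perm (ℕ × Bool)) ∧ fix0 (1 : Equiv.Perm (ℕ × Bool)) :=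
    ⟨fun p => rfl, fun c => rfl⟩
  rw [Nv, if_pos hg]
  refine Finset.sum_eq_zero fun i _ => Finset.sum_eq_zero fun j _ => ?_
  have hvi : vf 1 i = (i:ℤ) := rfl
  have hvj : vf 1 j = (j:ℤ) := rfl
  rw [hvi, hvj]
  split_ifs <;> omega

lemma Nv_word (l : ℕ) : ∀ word : List (Equiv.Perm (ℕ × Bool)),
    (∀ x ∈ word, x ∈ SD l) → Nv l word.prod ≤ word.length := by
  intro word
  induction word with
  | nil =>
    intro _
    rw [List.prod_nil, Nv_one]
    exact Nat.zero_le _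
  | cons s tail ih =>
    intro hmem
    rw [List.prod_cons, List.length_cons]
    have htail := ih (fun x hx => hmem x (List.mem_cons_of_mem s hx))
    have hs := hmem s (List.mem_cons_self)
    simp only [SD, Set.mem_insert_iff, SOp, Set.mem_setOf_eq] at hs
    rcases hs with rfl | ⟨i, hi1, _, rfl⟩
    · have := Nv_step_sm1 l tail.prod
      omega
    · have := Nv_step_sgen l i hi1 tail.prod
      omega


lemma vf_repn (n : ℕ) (i : ℕ) (hi : 1 ≤ i) : vf (repn n) i =
    if i ≤ n then (if i = n ∧ n % 2 = 1 then 1 else -((n:ℤ)+1-(i:ℤ))) else (i:ℤ) := by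
  rw [vf, repn_apply]
  split_ifs <;>
    simp only [Bool.not_true, toInt_mk_true, toInt_mk_false] <;>
    first
      | omega
      | (push_cast; omega)

lemma count_pairs (l : ℕ) : ∀ n, n ≤ l →
    (∑ i ∈ Finset.Ico 1 (l+1), ∑ j ∈ Finset.Ico 1 (l+1),
      if i < j ∧ j ≤ n then (1:ℕ) else 0) = n.choose 2 := by
  intro n
  induction n with
  | zero =>
    intro _
    rw [Nat.choose_zero_succ]
    refine Finset.sum_eq_zero fun i _ => Finset.sum_eq_zero fun j _ => ?_
    rw [if_neg (by omega)]
  | succ n ih =>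
    intro hn1
    have key : ∀ i j : ℕ, (if i < j ∧ j ≤ n+1 then (1:ℕ) else 0) =
        (if i < j ∧ j ≤ n then 1 else 0) + (if i < n+1 ∧ j = n+1 then 1 else 0) := by
      intro i j
      split_ifs <;> omega
    simp_rw [key, Finset.sum_add_distrib]
    rw [ih (by omega)]
    have inner : ∀ i : ℕ, (∑ j ∈ Finset.Ico 1 (l+1),
        if i < n+1 ∧ j = n+1 then (1:ℕ) else 0) = if i < n+1 then 1 else 0 := by
      intro i
      have e : ∀ j : ℕ, (if i < n+1 ∧ j = n+1 then (1:ℕ) else 0) =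
          if j = n+1 then (if i < n+1 then 1 else 0) else 0 := by
        intro j
        split_ifs <;> omega
      simp_rw [e]
      rw [Finset.sum_ite_eq' (Finset.Ico 1 (l+1)) (n+1) (fun _ => if i < n+1 then (1:ℕ) else 0)]
      rw [if_pos (Finset.mem_Ico.mpr ⟨by omega, by omega⟩)]
    simp_rw [inner]
    have outer : (∑ i ∈ Finset.Ico 1 (l+1), if i < n+1 then (1:ℕ) else 0) = n := by
      have e2 : ∀ i ∈ Finset.Ico 1 (l+1), (if i < n+1 then (1:ℕ) else 0) =
          if i ∈ Finset.Ico 1 (n+1) then 1 else 0 := by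
        intro i hi
        rw [Finset.mem_Ico] at hi
        by_cases h : i < n+1
        · rw [if_pos h, if_pos (Finset.mem_Ico.mpr ⟨hi.1, h⟩)]
        · rw [if_neg h, if_neg (by rw [Finset.mem_Ico]; omega)]
      rw [Finset.sum_congr rfl e2, Finset.sum_ite_mem]
      have : Finset.Ico 1 (l+1) ∩ Finset.Ico 1 (n+1) = Finset.Ico 1 (n+1) := by
        rw [Finset.Ico_inter_Ico]
        congr 1 <;> omega
      rw [this]
      simp [Nat.card_Ico]
    rw [outer, Nat.choose_succ_succ, Nat.choose_one_right,
      show Nat.succ 1 = 2 from rfl]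
    omega

lemma Dv_repn (l n : ℕ) (hn : n ≤ l) : Dv l (vf (repn n)) = n.choose 2 := by
  rw [Dv]
  rw [show (∑ i ∈ Finset.Ico 1 (l+1), ∑ j ∈ Finset.Ico 1 (l+1),
      if i < j then (if vf (repn n) i > vf (repn n) j then 1 else 0)
        + (if vf (repn n) i + vf (repn n) j < 0 then 1 else 0) else 0)
      = ∑ i ∈ Finset.Ico 1 (l+1), ∑ j ∈ Finset.Ico 1 (l+1),
        if i < j ∧ j ≤ n then (1:ℕ) else 0 from ?_]
  · exact count_pairs l n hn
  refine Finset.sum_congr rfl fun i hi => Finset.sum_congr rfl fun j hj => ?_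
  rw [Finset.mem_Ico] at hi hj
  rw [vf_repn n i (by omega), vf_repn n j (by omega)]
  split_ifs <;> omega

lemma Nv_repn (l n : ℕ) (hn : n ≤ l) : Nv l (repn n) = n.choose 2 := by
  rw [Nv, if_pos ⟨commSig_repn n, fix0_repn n⟩, Dv_repn l n hn]


/-- The minimal length element `s₀ⁿ dₙ` of the double coset
`W_O (s₀ⁿ dₙ) W_{O+}` in the type `D_l` Weyl group (extended by `s₀` when `n` is odd)
has length `binom(n,2)`. -/
theorem stmt14 (l : ℕ) (hl : 2 ≤ l) :
    ∀ n ≤ l, dlen l (repn n) = n.choose 2 := by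
  intro n hn
  have hmem : n.choose 2 ∈ {m | ∃ word : List (Equiv.Perm (ℕ × Bool)),
      word.length = m ∧ (∀ x ∈ word, x ∈ SD l) ∧ word.prod = repn n} :=
    ⟨uword n, uword_length n, uword_mem hn, uword_prod n⟩
  refine le_antisymm (Nat.sInf_le hmem) (le_csInf ⟨_, hmem⟩ ?_)
  rintro m ⟨word, hlen, hm, hprod⟩
  calc n.choose 2 = Nv l (repn n) := (Nv_repn l n hn).symm
    _ = Nv l word.prod := by rw [hprod]
    _ ≤ word.length := Nv_word l word hm
    _ = m := hlen
end
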